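/- arXiv:1410.5253 — 16 statements merged into one kernel-verified Lean document; each statement's English description precedes it below -/
import Mathlib

section
/- Let S be a semigroup and a ∈ S, and set P₁ = {x ∈ S : xa ℛ x} and P₂ = {x ∈ S : ax ℒ x}, P = P₁ ∩ P₂. Then: (i) for y ∈ S, y ∈ P₁ if and only if the entire ℒ-class L_y is contained in P₁; (ii) y ∈ P₂ if and only if the entire ℛ-class R_y is contained in P₂; and (iii) every regular element of the variant S^a belongs to P (i.e. if x = x⋆y⋆x for some y ∈ S, then x ∈ P). -/
/-- `x` lies below `y` in the ℛ-preorder of the semigroup `S`: `x ∈ yS¹`. -/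
def rPre {S : Type*} [Semigroup S] (x y : S) : Prop := x = y ∨ ∃ u, y * u = x

/-- `x` lies below `y` in the ℒ-preorder of the semigroup `S`: `x ∈ S¹y`. -/
def lPre {S : Type*} [Semigroup S] (x y : S) : Prop := x = y ∨ ∃ u, u * y = x

/-- Green's ℛ relation. -/
def rRel {S : Type*} [Semigroup S] (x y : S) : Prop := rPre x y ∧ rPre y x

/-- Green's ℒ relation. -/
def lRel {S : Type*} [Semigroup S] (x y : S) : Prop := lPre x y ∧ lPre y x

theorem stmt_0 {S : Type*} [Semigroup S] (a : S)
    (P₁ P₂ P : Set S)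
    (hP₁ : P₁ = {x : S | rRel (x * a) x})
    (hP₂ : P₂ = {x : S | lRel (a * x) x})
    (hP : P = P₁ ∩ P₂) :
    (∀ y : S, y ∈ P₁ ↔ ∀ z : S, lRel z y → z ∈ P₁) ∧
    (∀ y : S, y ∈ P₂ ↔ ∀ z : S, rRel z y → z ∈ P₂) ∧
    (∀ x : S, (∃ y : S, x * a * y * a * x = x) → x ∈ P) := by
  subst hP₁ hP₂ hP
  refine ⟨?_, ?_, ?_⟩
  · intro y
    constructor
    · rintro ⟨-, hy2⟩ z ⟨hz1, -⟩
      refine ⟨Or.inr ⟨a, rfl⟩, ?_⟩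
      rcases hy2 with hy | ⟨u, hu⟩ <;> rcases hz1 with hz | ⟨w, hw⟩
      · exact Or.inl (by rw [hz, ← hy])
      · exact Or.inl (by rw [← hw, mul_assoc, ← hy])
      · exact Or.inr ⟨u, by rw [hz, hu]⟩
      · exact Or.inr ⟨u, by rw [← hw, mul_assoc, mul_assoc, ← mul_assoc y a u, hu]⟩
    · intro h
      exact h y ⟨Or.inl rfl, Or.inl rfl⟩
  · intro y
    constructor
    · rintro ⟨-, hy2⟩ z ⟨hz1, -⟩
      refine ⟨Or.inr ⟨a, rfl⟩, ?_⟩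
      rcases hy2 with hy | ⟨u, hu⟩ <;> rcases hz1 with hz | ⟨w, hw⟩
      · exact Or.inl (by rw [hz, ← hy])
      · exact Or.inl (by rw [← hw, ← mul_assoc, ← hy])
      · exact Or.inr ⟨u, by rw [hz, hu]⟩
      · exact Or.inr ⟨u, by rw [← hw, ← mul_assoc, ← mul_assoc, mul_assoc u a y, hu]⟩
    · intro h
      exact h y ⟨Or.inl rfl, Or.inl rfl⟩
  · rintro x ⟨y, hy⟩
    refine ⟨⟨Or.inr ⟨a, rfl⟩, Or.inr ⟨y * a * x, ?_⟩⟩,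
            ⟨Or.inr ⟨a, rfl⟩, Or.inr ⟨x * a * y, ?_⟩⟩⟩
    · simpa [mul_assoc] using hy
    · simpa [mul_assoc] using hy
end

section
/- Let S be a semigroup, a ∈ S, and set P₁ = {x ∈ S : xa ℛ x}, P₂ = {x ∈ S : ax ℒ x}, where ℛ, ℒ are Green's relations of S. For x ∈ S, the ℛ-class of x in the variant S^a equals R_x ∩ P₁ if x ∈ P₁, and equals {x} if x ∉ P₁; dually, the ℒ-class of x in S^a equals L_x ∩ P₂ if x ∈ P₂, and equals {x} if x ∉ P₂. -/
/-- `x ∈ yS¹` (ℛ-preorder) for the semigroup operation `op`. -/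
def rPreOp {S : Type*} (op : S → S → S) (x y : S) : Prop := x = y ∨ ∃ u, op y u = x

/-- `x ∈ S¹y` (ℒ-preorder) for the semigroup operation `op`. -/
def lPreOp {S : Type*} (op : S → S → S) (x y : S) : Prop := x = y ∨ ∃ u, op u y = x

/-- Green's ℛ relation for the operation `op`. -/
def rRelOp {S : Type*} (op : S → S → S) (x y : S) : Prop := rPreOp op x y ∧ rPreOp op y x

/-- Green's ℒ relation for the operation `op`. -/
def lRelOp {S : Type*} (op : S → S → S) (x y : S) : Prop := lPreOp op x y ∧ lPreOp op y x

/-- If `x ∈ P₁` and `y ≤ℛ x` in `S`, then `y ≤ℛ x` in the variant. -/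
lemma helper1 {S : Type*} [Semigroup S] {a x y : S}
    (hx : x = x * a ∨ ∃ v, x * a * v = x) (hxy : y = x ∨ ∃ u, x * u = y) :
    y = x ∨ ∃ u, x * a * u = y := by
  rcases hxy with h | ⟨u, hu⟩
  · exact Or.inl h
  rcases hx with h | ⟨v, hv⟩
  · exact Or.inr ⟨u, by rw [← h, hu]⟩
  · refine Or.inr ⟨v * u, ?_⟩
    rw [← mul_assoc, hv, hu]

/-- Dual of helper1. -/
lemma helper2 {S : Type*} [Semigroup S] {a x y : S}
    (hx : x = a * x ∨ ∃ v, v * (a * x) = x) (hxy : y = x ∨ ∃ u, u * x = y) :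
    y = x ∨ ∃ u, u * a * x = y := by
  rcases hxy with h | ⟨u, hu⟩
  · exact Or.inl h
  rcases hx with h | ⟨v, hv⟩
  · exact Or.inr ⟨u, by rw [mul_assoc, ← h, hu]⟩
  · refine Or.inr ⟨u * v, ?_⟩
    rw [mul_assoc, mul_assoc, hv, hu]

theorem stmt_1 {S : Type*} [Semigroup S] (a : S)
    (star : S → S → S) (hstar : ∀ x y : S, star x y = x * a * y)
    (P₁ P₂ : Set S)
    (hP₁ : P₁ = {x : S | rRelOp (· * ·) (x * a) x})
    (hP₂ : P₂ = {x : S | lRelOp (· * ·) (a * x) x}) :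
    ∀ x : S,
      ((x ∈ P₁ → {y : S | rRelOp star y x} = {y : S | rRelOp (· * ·) y x} ∩ P₁) ∧
       (x ∉ P₁ → {y : S | rRelOp star y x} = {x})) ∧
      ((x ∈ P₂ → {y : S | lRelOp star y x} = {y : S | lRelOp (· * ·) y x} ∩ P₂) ∧
       (x ∉ P₂ → {y : S | lRelOp star y x} = {x})) := by
  subst hP₁ hP₂
  intro x
  constructor
  · constructor
    · intro hx
      have hx' : x = x * a ∨ ∃ v, x * a * v = x := hx.2
      ext y
      simp only [Set.mem_setOf_eq, Set.mem_inter_iff, rRelOp, rPreOp, hstar]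
      constructor
      · rintro ⟨hyx, hxy⟩
        have hyP : (x * a = x ∨ ∃ u, x * u = x * a) ∧ (x = x * a ∨ ∃ u, x * a * u = x) →
            True := fun _ => trivial
        refine ⟨⟨?_, ?_⟩, ?_, ?_⟩
        · rcases hyx with h | ⟨u, hu⟩
          · exact Or.inl h
          · exact Or.inr ⟨a * u, by rw [← mul_assoc, hu]⟩
        · rcases hxy with h | ⟨u, hu⟩
          · exact Or.inl h
          · exact Or.inr ⟨a * u, by rw [← mul_assoc, hu]⟩
        · exact Or.inr ⟨a, rfl⟩
        · -- y ∈ P₁: show y = y*a ∨ ∃ u, y*a*u = y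
          rcases hyx with h | ⟨u, hu⟩
          · subst h; exact hx'
          rcases hxy with h | ⟨v, hv⟩
          · subst h; exact hx'
          · refine Or.inr ⟨v * (a * u), ?_⟩
            have : y * a * (v * (a * u)) = ((y * a * v) * a) * u := by
              simp [mul_assoc]
            rw [this, hv, hu]
      · rintro ⟨hyx, hy⟩
        have hy' : y = y * a ∨ ∃ v, y * a * v = y := hy.2
        exact ⟨helper1 hx' hyx.1, helper1 hy' hyx.2⟩
    · intro hx
      ext y
      simp only [Set.mem_setOf_eq, Set.mem_singleton_iff, rRelOp, rPreOp, hstar]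
      constructor
      · rintro ⟨hyx, hxy⟩
        rcases hyx with h | ⟨u, hu⟩
        · exact h
        rcases hxy with h | ⟨v, hv⟩
        · exact h.symm
        exfalso
        refine hx ⟨Or.inr ⟨a, rfl⟩, Or.inr ⟨u * (a * v), ?_⟩⟩
        show x * a * (u * (a * v)) = x
        have : x * a * (u * (a * v)) = ((x * a * u) * a) * v := by
          simp [mul_assoc]
        rw [this, hu, hv]
      · rintro rfl
        exact ⟨Or.inl rfl, Or.inl rfl⟩
  · constructor
    · intro hx
      have hx' : x = a * x ∨ ∃ v, v * (a * x) = x := hx.2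
      ext y
      simp only [Set.mem_setOf_eq, Set.mem_inter_iff, lRelOp, lPreOp, hstar]
      constructor
      · rintro ⟨hyx, hxy⟩
        refine ⟨⟨?_, ?_⟩, ?_, ?_⟩
        · rcases hyx with h | ⟨u, hu⟩
          · exact Or.inl h
          · exact Or.inr ⟨u * a, hu⟩
        · rcases hxy with h | ⟨u, hu⟩
          · exact Or.inl h
          · exact Or.inr ⟨u * a, hu⟩
        · exact Or.inr ⟨a, rfl⟩
        · rcases hyx with h | ⟨u, hu⟩
          · subst h; exact hx'
          rcases hxy with h | ⟨v, hv⟩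
          · subst h; exact hx'
          · refine Or.inr ⟨u * a * v, ?_⟩
            have : (u * a * v) * (a * y) = u * a * (v * a * y) := by
              simp [mul_assoc]
            rw [this, hv, hu]
      · rintro ⟨hyx, hy⟩
        have hy' : y = a * y ∨ ∃ v, v * (a * y) = y := hy.2
        exact ⟨helper2 hx' hyx.1, helper2 hy' hyx.2⟩
    · intro hx
      ext y
      simp only [Set.mem_setOf_eq, Set.mem_singleton_iff, lRelOp, lPreOp, hstar]
      constructor
      · rintro ⟨hyx, hxy⟩
        rcases hyx with h | ⟨u, hu⟩
        · exact h
        rcases hxy with h | ⟨v, hv⟩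
        · exact h.symm
        exfalso
        refine hx ⟨Or.inr ⟨a, rfl⟩, Or.inr ⟨(v * a) * u, ?_⟩⟩
        show ((v * a) * u) * (a * x) = x
        have : ((v * a) * u) * (a * x) = v * a * (u * a * x) := by
          simp [mul_assoc]
        rw [this, hu, hv]
      · rintro rfl
        exact ⟨Or.inl rfl, Or.inl rfl⟩
end

section
/- Let S be a semigroup, a ∈ S, and set P₁ = {x ∈ S : xa ℛ x}, P₂ = {x ∈ S : ax ℒ x}, P = P₁ ∩ P₂. For x ∈ S: the ℋ-class of x in the variant S^a equals the ℋ-class H_x of x in S if x ∈ P, and equals {x} if x ∉ P; moreover if x ∉ P then {x} is a non-group ℋ-class of S^a (i.e. x⋆x ≠ x). The 𝒟-class of x in S^a equals D_x ∩ P if x ∈ P, equals the ℒ^a-class of x if x ∈ P₂∖P₁, equals the ℛ^a-class of x if x ∈ P₁∖P₂, and equals {x} if x ∉ P₁ ∪ P₂. -/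
/-- Green's ℋ relation for the operation `op`. -/
def hRelOp {S : Type*} (op : S → S → S) (x y : S) : Prop := rRelOp op x y ∧ lRelOp op x y

/-- Green's 𝒟 relation for the operation `op`: 𝒟 = ℛ ∘ ℒ. -/
def dRelOp {S : Type*} (op : S → S → S) (x y : S) : Prop :=
  ∃ z, rRelOp op x z ∧ lRelOp op z y

section Aux

variable {S : Type*} [Semigroup S]

/-- `x ℛ xa`, i.e. membership in `P₁`, in convenient form. -/
def Q1 (a x : S) : Prop := x = x * a ∨ ∃ u, x * a * u = x

/-- `x ℒ ax`, i.e. membership in `P₂`, in convenient form. -/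
def Q2 (a x : S) : Prop := x = a * x ∨ ∃ u, u * (a * x) = x

omit [Semigroup S] in
lemma rRel_refl (op : S → S → S) (x : S) : rRelOp op x x := ⟨Or.inl rfl, Or.inl rfl⟩
omit [Semigroup S] in
lemma lRel_refl (op : S → S → S) (x : S) : lRelOp op x x := ⟨Or.inl rfl, Or.inl rfl⟩

lemma rPre_star (a x y : S) :
    rPreOp (fun p q : S => p * a * q) y x ↔ y = x ∨ ∃ u, x * a * u = y := Iff.rfl

lemma lPre_star (a x y : S) :
    lPreOp (fun p q : S => p * a * q) y x ↔ y = x ∨ ∃ u, u * a * x = y := Iff.rfl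

lemma memP1 (a x : S) : rRelOp (· * ·) (x * a) x ↔ Q1 a x :=
  ⟨fun h => h.2, fun h => ⟨Or.inr ⟨a, rfl⟩, h⟩⟩

lemma memP2 (a x : S) : lRelOp (· * ·) (a * x) x ↔ Q2 a x :=
  ⟨fun h => h.2, fun h => ⟨Or.inr ⟨a, rfl⟩, h⟩⟩

lemma Q1_of_lPre {a x y : S} (h : lPreOp (· * ·) y x) (q1 : Q1 a x) : Q1 a y := by
  rcases h with rfl | ⟨p, hp⟩
  · exact q1
  rcases q1 with hx | ⟨u, hu⟩
  · left; rw [← hp, mul_assoc, ← hx]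
  · right
    refine ⟨u, ?_⟩
    rw [← hp]
    simp only [mul_assoc] at hu ⊢
    rw [hu]

lemma Q2_of_rPre {a x y : S} (h : rPreOp (· * ·) y x) (q2 : Q2 a x) : Q2 a y := by
  rcases h with rfl | ⟨q, hq⟩
  · exact q2
  rcases q2 with hx | ⟨u, hu⟩
  · left; rw [← hq, ← mul_assoc, ← hx]
  · right
    refine ⟨u, ?_⟩
    rw [← hq]
    simp only [← mul_assoc] at hu ⊢
    rw [hu]

lemma star_rPre_of {a x y : S} (q1 : Q1 a x) (h : rPreOp (· * ·) y x) :
    rPreOp (fun p q : S => p * a * q) y x := by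
  rw [rPre_star]
  rcases h with rfl | ⟨u, hu⟩
  · exact Or.inl rfl
  replace hu : x * u = y := hu
  right
  rcases q1 with hx | ⟨v, hv⟩
  · exact ⟨u, by rw [← hx, hu]⟩
  · exact ⟨v * u, by simp only [← mul_assoc]; rw [hv, hu]⟩

lemma star_lPre_of {a x y : S} (q2 : Q2 a x) (h : lPreOp (· * ·) y x) :
    lPreOp (fun p q : S => p * a * q) y x := by
  rw [lPre_star]
  rcases h with rfl | ⟨u, hu⟩
  · exact Or.inl rfl
  replace hu : u * x = y := hu
  right
  rcases q2 with hx | ⟨v, hv⟩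
  · exact ⟨u, by rw [mul_assoc, ← hx, hu]⟩
  · exact ⟨u * v, by simp only [mul_assoc]; rw [hv, hu]⟩

lemma rRel_star_iff (a x y : S) :
    rRelOp (fun p q : S => p * a * q) y x ↔
      y = x ∨ (Q1 a y ∧ Q1 a x ∧ rRelOp (· * ·) y x) := by
  constructor
  · rintro ⟨h1, h2⟩
    rw [rPre_star] at h1 h2
    rcases h1 with rfl | ⟨u, hu⟩
    · exact Or.inl rfl
    rcases h2 with h2 | ⟨v, hv⟩
    · exact Or.inl h2.symm
    right
    refine ⟨Or.inr ⟨v * (a * u), ?_⟩, Or.inr ⟨u * (a * v), ?_⟩,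
      Or.inr ⟨a * u, ?_⟩, Or.inr ⟨a * v, ?_⟩⟩
    · simp only [← mul_assoc]; rw [hv, hu]
    · simp only [← mul_assoc]; rw [hu, hv]
    · show x * (a * u) = y
      rw [← mul_assoc]; exact hu
    · show y * (a * v) = x
      rw [← mul_assoc]; exact hv
  · rintro (rfl | ⟨q1y, q1x, hr1, hr2⟩)
    · exact rRel_refl _ y
    · exact ⟨star_rPre_of q1x hr1, star_rPre_of q1y hr2⟩

lemma lRel_star_iff (a x y : S) :
    lRelOp (fun p q : S => p * a * q) y x ↔
      y = x ∨ (Q2 a y ∧ Q2 a x ∧ lRelOp (· * ·) y x) := by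
  constructor
  · rintro ⟨h1, h2⟩
    rw [lPre_star] at h1 h2
    rcases h1 with rfl | ⟨u, hu⟩
    · exact Or.inl rfl
    rcases h2 with h2 | ⟨v, hv⟩
    · exact Or.inl h2.symm
    right
    simp only [mul_assoc] at hu hv
    refine ⟨Or.inr ⟨u * (a * v), ?_⟩, Or.inr ⟨v * (a * u), ?_⟩,
      Or.inr ⟨u * a, ?_⟩, Or.inr ⟨v * a, ?_⟩⟩
    · simp only [mul_assoc]; rw [hv, hu]
    · simp only [mul_assoc]; rw [hu, hv]
    · show u * a * x = y
      rw [mul_assoc]; exact hu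
    · show v * a * y = x
      rw [mul_assoc]; exact hv
  · rintro (rfl | ⟨q2y, q2x, hl1, hl2⟩)
    · exact lRel_refl _ y
    · exact ⟨star_lPre_of q2x hl1, star_lPre_of q2y hl2⟩

end Aux

theorem stmt_2 {S : Type*} [Semigroup S] (a : S)
    (star : S → S → S) (hstar : ∀ x y : S, star x y = x * a * y)
    (P₁ P₂ P : Set S)
    (hP₁ : P₁ = {x : S | rRelOp (· * ·) (x * a) x})
    (hP₂ : P₂ = {x : S | lRelOp (· * ·) (a * x) x})
    (hP : P = P₁ ∩ P₂) :
    ∀ x : S,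
      (x ∈ P → {y : S | hRelOp star y x} = {y : S | hRelOp (· * ·) y x}) ∧
      (x ∉ P → {y : S | hRelOp star y x} = {x} ∧ star x x ≠ x) ∧
      (x ∈ P → {y : S | dRelOp star y x} = {y : S | dRelOp (· * ·) y x} ∩ P) ∧
      (x ∈ P₂ \ P₁ → {y : S | dRelOp star y x} = {y : S | lRelOp star y x}) ∧
      (x ∈ P₁ \ P₂ → {y : S | dRelOp star y x} = {y : S | rRelOp star y x}) ∧
      (x ∉ P₁ ∪ P₂ → {y : S | dRelOp star y x} = {x}) := by
  have hstar' : star = fun p q : S => p * a * q :=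
    funext fun p => funext fun q => hstar p q
  subst hstar' hP hP₁ hP₂
  have hmem : ∀ w : S,
      w ∈ ({x : S | rRelOp (· * ·) (x * a) x} ∩ {x : S | lRelOp (· * ·) (a * x) x}) ↔
        Q1 a w ∧ Q2 a w := fun w => and_congr (memP1 a w) (memP2 a w)
  intro x
  refine ⟨?_, ?_, ?_, ?_, ?_, ?_⟩
  · -- x ∈ P : H-classes coincide
    intro hx
    obtain ⟨q1x, q2x⟩ := (hmem x).1 hx
    ext y
    simp only [Set.mem_setOf_eq]
    constructor
    · rintro ⟨hr, hl⟩
      rcases (rRel_star_iff a x y).1 hr with rfl | ⟨_, _, hr'⟩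
      · exact ⟨rRel_refl _ _, lRel_refl _ _⟩
      rcases (lRel_star_iff a x y).1 hl with rfl | ⟨_, _, hl'⟩
      · exact ⟨rRel_refl _ _, lRel_refl _ _⟩
      exact ⟨hr', hl'⟩
    · rintro ⟨hr, hl⟩
      have q1y : Q1 a y := Q1_of_lPre hl.1 q1x
      have q2y : Q2 a y := Q2_of_rPre hr.1 q2x
      exact ⟨(rRel_star_iff a x y).2 (Or.inr ⟨q1y, q1x, hr⟩),
             (lRel_star_iff a x y).2 (Or.inr ⟨q2y, q2x, hl⟩)⟩
  · -- x ∉ P : singleton non-group H-class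
    intro hx
    have hx' : ¬ (Q1 a x ∧ Q2 a x) := fun h => hx ((hmem x).2 h)
    constructor
    · ext y
      simp only [Set.mem_setOf_eq, Set.mem_singleton_iff]
      constructor
      · rintro ⟨hr, hl⟩
        rcases (rRel_star_iff a x y).1 hr with rfl | ⟨_, q1x', _⟩
        · rfl
        rcases (lRel_star_iff a x y).1 hl with rfl | ⟨_, q2x', _⟩
        · rfl
        exact absurd ⟨q1x', q2x'⟩ hx'
      · rintro rfl
        exact ⟨rRel_refl _ _, lRel_refl _ _⟩
    · intro hc
      have hc' : x * a * x = x := hc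
      exact hx' ⟨Or.inr ⟨x, hc'⟩, Or.inr ⟨x, by rw [← mul_assoc]; exact hc'⟩⟩
  · -- x ∈ P : D-class
    intro hx
    obtain ⟨q1x, q2x⟩ := (hmem x).1 hx
    ext y
    simp only [Set.mem_inter_iff, Set.mem_setOf_eq, memP1, memP2]
    constructor
    · rintro ⟨z, hrz, hlz⟩
      rcases (lRel_star_iff a x z).1 hlz with rfl | ⟨q2z, _, hlz'⟩
      · rcases (rRel_star_iff a z y).1 hrz with rfl | ⟨q1y, _, hr'⟩
        · exact ⟨⟨y, rRel_refl _ _, lRel_refl _ _⟩, q1x, q2x⟩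
        · exact ⟨⟨z, hr', lRel_refl _ _⟩, q1y, Q2_of_rPre hr'.1 q2x⟩
      · have q1z : Q1 a z := Q1_of_lPre hlz'.1 q1x
        rcases (rRel_star_iff a z y).1 hrz with rfl | ⟨q1y, _, hr'⟩
        · exact ⟨⟨y, rRel_refl _ _, hlz'⟩, q1z, q2z⟩
        · exact ⟨⟨z, hr', hlz'⟩, q1y, Q2_of_rPre hr'.1 q2z⟩
    · rintro ⟨⟨z, hrz, hlz⟩, q1y, q2y⟩
      have q1z : Q1 a z := Q1_of_lPre hlz.1 q1x
      have q2z : Q2 a z := Q2_of_rPre hrz.2 q2y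
      exact ⟨z, (rRel_star_iff a z y).2 (Or.inr ⟨q1y, q1z, hrz⟩),
             (lRel_star_iff a x z).2 (Or.inr ⟨q2z, q2x, hlz⟩)⟩
  · -- x ∈ P₂ \ P₁ : D-class = L-class
    intro hx
    have nq1x : ¬ Q1 a x := fun h => hx.2 ((memP1 a x).2 h)
    ext y
    simp only [Set.mem_setOf_eq]
    constructor
    · rintro ⟨z, hrz, hlz⟩
      rcases (rRel_star_iff a z y).1 hrz with rfl | ⟨_, q1z, _⟩
      · exact hlz
      rcases (lRel_star_iff a x z).1 hlz with rfl | ⟨_, _, hl'⟩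
      · exact absurd q1z nq1x
      · exact absurd (Q1_of_lPre hl'.2 q1z) nq1x
    · intro h
      exact ⟨y, rRel_refl _ _, h⟩
  · -- x ∈ P₁ \ P₂ : D-class = R-class
    intro hx
    have nq2x : ¬ Q2 a x := fun h => hx.2 ((memP2 a x).2 h)
    ext y
    simp only [Set.mem_setOf_eq]
    constructor
    · rintro ⟨z, hrz, hlz⟩
      rcases (lRel_star_iff a x z).1 hlz with rfl | ⟨_, q2x', _⟩
      · exact hrz
      · exact absurd q2x' nq2x
    · intro h
      exact ⟨x, h, lRel_refl _ _⟩
  · -- x ∉ P₁ ∪ P₂ : singleton D-class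
    intro hx
    have nq1x : ¬ Q1 a x := fun h => hx (Set.mem_union_left _ ((memP1 a x).2 h))
    have nq2x : ¬ Q2 a x := fun h => hx (Set.mem_union_right _ ((memP2 a x).2 h))
    ext y
    simp only [Set.mem_setOf_eq, Set.mem_singleton_iff]
    constructor
    · rintro ⟨z, hrz, hlz⟩
      rcases (lRel_star_iff a x z).1 hlz with rfl | ⟨_, q2x', _⟩
      · rcases (rRel_star_iff a z y).1 hrz with rfl | ⟨_, q1x', _⟩
        · rfl
        · exact absurd q1x' nq1x
      · exact absurd q2x' nq2x
    · rintro rfl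
      exact ⟨y, rRel_refl _ _, lRel_refl _ _⟩
end

section
/- Let S be a semigroup and a ∈ S. The variant S^a is a monoid if and only if S is a monoid and a is a unit of S (i.e. a has a two-sided inverse in S), in which case S^a is isomorphic to S as a semigroup. -/
theorem stmt_3 {S : Type*} [Semigroup S] (a : S)
    (star : S → S → S) (hstar : ∀ x y : S, star x y = x * a * y) :
    ((∃ e : S, ∀ x : S, star e x = x ∧ star x e = x) ↔
      (∃ one : S, (∀ x : S, one * x = x ∧ x * one = x) ∧ ∃ b : S, a * b = one ∧ b * a = one)) ∧
    ((∃ e : S, ∀ x : S, star e x = x ∧ star x e = x) →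
      ∃ φ : S ≃ S, ∀ x y : S, φ (star x y) = φ x * φ y) := by
  simp only [hstar]
  have key : (∃ e : S, ∀ x : S, e * a * x = x ∧ x * a * e = x) →
      ∃ e : S, (∀ x : S, e * a * x = x ∧ x * a * e = x) ∧ e * a = a * e ∧
        (∀ x : S, (e * a) * x = x ∧ x * (e * a) = x) := by
    rintro ⟨e, he⟩
    have hL : ∀ x : S, (e * a) * x = x := fun x => (he x).1
    have hR : ∀ x : S, x * (a * e) = x := fun x => by
      have := (he x).2; rwa [mul_assoc] at this
    have heq : e * a = a * e := by
      have h1 : (e * a) * (a * e) = a * e := hL _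
      have h2 : (e * a) * (a * e) = e * a := hR _
      rw [← h1, h2]
    exact ⟨e, he, heq, fun x => ⟨hL x, by rw [heq]; exact hR x⟩⟩
  constructor
  · constructor
    · intro h
      obtain ⟨e, he, heq, hone⟩ := key h
      refine ⟨e * a, hone, e, ?_, rfl⟩
      rw [← heq]
    · rintro ⟨one, hone, b, hab, hba⟩
      refine ⟨b, fun x => ⟨?_, ?_⟩⟩
      · rw [hba, (hone x).1]
      · rw [mul_assoc, hab, (hone x).2]
  · intro h
    obtain ⟨e, he, heq, hone⟩ := key h
    refine ⟨⟨fun x => x * a, fun x => x * e, fun x => ?_, fun x => ?_⟩,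
      fun x y => by simp [mul_assoc]⟩
    · exact (he x).2
    · show x * e * a = x
      rw [mul_assoc]
      exact (hone x).2
end

section
/- Let X be a finite set and a ∈ T_X an idempotent with image A and kernel α. Then: (i) P₁ = {f ∈ T_X : fa ℛ f} = {f ∈ T_X : rank(fa) = rank(f)} = {f ∈ T_X : α separates im(f)}; and (ii) P₂ = {f ∈ T_X : af ℒ f} = {f ∈ T_X : rank(af) = rank(f)} = {f ∈ T_X : A saturates ker(f)}. -/
/-- Left-to-right composition of transformations: `x (f * g) = (x f) g`. -/
def tmul {X : Type*} (f g : X → X) : X → X := fun x => g (f x)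

/-- The rank of a transformation: the size of its image. -/
def rnk {X : Type*} [Fintype X] [DecidableEq X] (f : X → X) : ℕ :=
  (Finset.univ.image f).card

/-- Green's ℛ relation on the full transformation semigroup. -/
def grR {X : Type*} (f g : X → X) : Prop :=
  (f = g ∨ ∃ u, tmul g u = f) ∧ (g = f ∨ ∃ u, tmul f u = g)

/-- Green's ℒ relation on the full transformation semigroup. -/
def grL {X : Type*} (f g : X → X) : Prop :=
  (f = g ∨ ∃ u, tmul u g = f) ∧ (g = f ∨ ∃ u, tmul u f = g)

theorem stmt_4 {X : Type*} [Fintype X] [DecidableEq X]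
    (a : X → X) (ha : tmul a a = a) :
    -- (i)  P₁ = {f : fa ℛ f} = {f : rank (fa) = rank f} = {f : ker a separates im f}
    ({f : X → X | grR (tmul f a) f} = {f : X → X | rnk (tmul f a) = rnk f} ∧
     {f : X → X | grR (tmul f a) f} =
       {f : X → X | ∀ x ∈ Set.range f, ∀ y ∈ Set.range f, a x = a y → x = y}) ∧
    -- (ii) P₂ = {f : af ℒ f} = {f : rank (af) = rank f} = {f : im a saturates ker f}
    ({f : X → X | grL (tmul a f) f} = {f : X → X | rnk (tmul a f) = rnk f} ∧
     {f : X → X | grL (tmul a f) f} =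
       {f : X → X | ∀ x : X, ∃ y ∈ Set.range a, f y = f x}) := by
  classical
  have haa : ∀ x, a (a x) = a x := fun x => congrFun ha x
  -- (i) : separation characterizations
  have sep_iff_rnk : ∀ f : X → X,
      (rnk (tmul f a) = rnk f) ↔
      (∀ x ∈ Set.range f, ∀ y ∈ Set.range f, a x = a y → x = y) := by
    intro f
    have himg : (Finset.univ.image f).image a = Finset.univ.image (tmul f a) := by
      rw [Finset.image_image]; rfl
    have : rnk (tmul f a) = ((Finset.univ.image f).image a).card := by
      rw [himg]; rfl
    rw [this, rnk, Finset.card_image_iff]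
    constructor
    · intro h x hx y hy hxy
      rcases hx with ⟨p, rfl⟩
      rcases hy with ⟨q, rfl⟩
      exact h (by simp) (by simp) hxy
    · intro h x hx y hy hxy
      simp only [Finset.coe_image, Finset.coe_univ, Set.image_univ] at hx hy
      exact h x hx y hy hxy
  have sep_iff_grR : ∀ f : X → X,
      grR (tmul f a) f ↔
      (∀ x ∈ Set.range f, ∀ y ∈ Set.range f, a x = a y → x = y) := by
    intro f
    constructor
    · rintro ⟨-, h⟩ x ⟨p, rfl⟩ y ⟨q, rfl⟩ hxy
      rcases h with h | ⟨u, hu⟩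
      · have h1 : f p = a (f p) := congrFun h p
        have h2 : f q = a (f q) := congrFun h q
        rw [h1, h2, hxy]
      · have h1 : u (a (f p)) = f p := congrFun hu p
        have h2 : u (a (f q)) = f q := congrFun hu q
        rw [← h1, ← h2, hxy]
    · intro hsep
      refine ⟨Or.inr ⟨a, rfl⟩, Or.inr ⟨fun z => if h : ∃ p, a (f p) = z then f h.choose else z, ?_⟩⟩
      funext x
      have hx : ∃ p, a (f p) = a (f x) := ⟨x, rfl⟩
      show (if h : ∃ p, a (f p) = a (f x) then f h.choose else a (f x)) = f x
      rw [dif_pos hx]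
      exact hsep _ ⟨hx.choose, rfl⟩ _ ⟨x, rfl⟩ hx.choose_spec
  -- (ii) : saturation characterizations
  have sat_iff_rnk : ∀ f : X → X,
      (rnk (tmul a f) = rnk f) ↔ (∀ x : X, ∃ y ∈ Set.range a, f y = f x) := by
    intro f
    have himg : (Finset.univ.image a).image f = Finset.univ.image (tmul a f) := by
      rw [Finset.image_image]; rfl
    have hsub : (Finset.univ.image a).image f ⊆ Finset.univ.image f := by
      intro z hz
      simp only [Finset.mem_image] at hz ⊢
      rcases hz with ⟨y, -, rfl⟩
      exact ⟨y, Finset.mem_univ y, rfl⟩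
    constructor
    · intro h x
      have hr : rnk (tmul a f) = ((Finset.univ.image a).image f).card := by rw [himg]; rfl
      rw [hr, rnk] at h
      have heq : (Finset.univ.image a).image f = Finset.univ.image f :=
        Finset.eq_of_subset_of_card_le hsub (le_of_eq h.symm)
      have hx : f x ∈ (Finset.univ.image a).image f := by
        rw [heq]; exact Finset.mem_image_of_mem f (Finset.mem_univ x)
      simp only [Finset.mem_image] at hx
      rcases hx with ⟨y, hy, hfy⟩
      rcases hy with ⟨w, -, rfl⟩
      exact ⟨a w, ⟨w, rfl⟩, hfy⟩
    · intro h
      have heq : (Finset.univ.image a).image f = Finset.univ.image f := by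
        apply Finset.Subset.antisymm hsub
        intro z hz
        rcases Finset.mem_image.mp hz with ⟨x, -, rfl⟩
        rcases h x with ⟨y, ⟨w, rfl⟩, hfy⟩
        exact Finset.mem_image.mpr ⟨a w, Finset.mem_image_of_mem a (Finset.mem_univ w), hfy⟩
      have hr : rnk (tmul a f) = ((Finset.univ.image a).image f).card := by rw [himg]; rfl
      rw [hr, heq]; rfl
  have sat_iff_grL : ∀ f : X → X,
      grL (tmul a f) f ↔ (∀ x : X, ∃ y ∈ Set.range a, f y = f x) := by
    intro f
    constructor
    · rintro ⟨-, h⟩ x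
      rcases h with h | ⟨u, hu⟩
      · exact ⟨a x, ⟨x, rfl⟩, (congrFun h x).symm⟩
      · exact ⟨a (u x), ⟨u x, rfl⟩, congrFun hu x⟩
    · intro hsat
      refine ⟨Or.inr ⟨a, rfl⟩, Or.inr ⟨fun x => (hsat x).choose, ?_⟩⟩
      funext x
      obtain ⟨⟨w, hw⟩, hfy⟩ := (hsat x).choose_spec
      show f (a ((hsat x).choose)) = f x
      rw [← hw, haa, hw, hfy]
  refine ⟨⟨?_, ?_⟩, ?_, ?_⟩ <;> ext f <;> simp only [Set.mem_setOf_eq]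
  · rw [sep_iff_grR, sep_iff_rnk]
  · exact sep_iff_grR f
  · rw [sat_iff_grL, sat_iff_rnk]
  · exact sat_iff_grL f
end

section
/- Let X be a finite set and a ∈ T_X an idempotent. Set P₁ = {f ∈ T_X : rank(fa) = rank(f)}, P₂ = {f ∈ T_X : rank(af) = rank(f)}, and P = P₁ ∩ P₂. Then P = {f ∈ T_X : rank(afa) = rank(f)}, P is exactly the set Reg(T_X^a) of regular elements of the variant T_X^a (f is regular in T_X^a iff f = f⋆g⋆f = f·a·g·a·f for some g ∈ T_X), and P is closed under the operation ⋆ of T_X^a. -/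
/-- The variant product: `f ⋆ g = f · a · g` (left-to-right). -/
def vmul {X : Type*} (a f g : X → X) : X → X := fun x => g (a (f x))

lemma img_tmul {X : Type*} [DecidableEq X] (s : Finset X) (f g : X → X) :
    s.image (tmul f g) = (s.image f).image g := by
  rw [Finset.image_image]; rfl

lemma rnk_le_left {X : Type*} [Fintype X] [DecidableEq X] (f g : X → X) :
    rnk (tmul f g) ≤ rnk f := by
  rw [rnk, img_tmul]; exact Finset.card_image_le

lemma rnk_le_right {X : Type*} [Fintype X] [DecidableEq X] (f g : X → X) :
    rnk (tmul f g) ≤ rnk g := by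
  apply Finset.card_le_card
  intro y hy
  simp only [Finset.mem_image, Finset.mem_univ, true_and] at *
  obtain ⟨x, rfl⟩ := hy
  exact ⟨f x, rfl⟩

/-- From `rnk (af) = rnk f` we get `f(aX) = f(X)`. -/
lemma img_eq_of_rnk_af {X : Type*} [Fintype X] [DecidableEq X] {a f : X → X}
    (haf : rnk (tmul a f) = rnk f) :
    (Finset.univ.image a).image f = Finset.univ.image f := by
  apply Finset.eq_of_subset_of_card_le
  · exact Finset.image_subset_image (Finset.subset_univ _)
  · rw [← img_tmul]
    exact haf.symm.le

/-- From `rnk (fa) = rnk f` we get injectivity of `a` on the image of `f`. -/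
lemma injOn_of_rnk_fa {X : Type*} [Fintype X] [DecidableEq X] {a f : X → X}
    (hfa : rnk (tmul f a) = rnk f) :
    Set.InjOn a ↑(Finset.univ.image f) := by
  apply Finset.card_image_iff.mp
  rw [← img_tmul]
  exact hfa

theorem stmt_5 {X : Type*} [Fintype X] [DecidableEq X]
    (a : X → X) (ha : tmul a a = a)
    (P₁ P₂ P : Set (X → X))
    (hP₁ : P₁ = {f : X → X | rnk (tmul f a) = rnk f})
    (hP₂ : P₂ = {f : X → X | rnk (tmul a f) = rnk f})
    (hP : P = P₁ ∩ P₂) :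
    -- P = {f : rank (afa) = rank f}
    P = {f : X → X | rnk (tmul (tmul a f) a) = rnk f} ∧
    -- P is exactly the set of regular elements of the variant T_X^a
    P = {f : X → X | ∃ g : X → X, vmul a (vmul a f g) f = f} ∧
    -- P is closed under ⋆
    (∀ f ∈ P, ∀ g ∈ P, vmul a f g ∈ P) := by
  classical
  subst hP₁ hP₂ hP
  refine ⟨?_, ?_, ?_⟩
  · ext f
    simp only [Set.mem_inter_iff, Set.mem_setOf_eq]
    constructor
    · rintro ⟨hfa, haf⟩
      have : rnk (tmul (tmul a f) a) = rnk (tmul f a) := by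
        unfold rnk
        rw [img_tmul, img_tmul, img_tmul, img_eq_of_rnk_af haf]
      rw [this, hfa]
    · intro h
      constructor
      · refine le_antisymm (rnk_le_left f a) ?_
        rw [← h]
        have : tmul (tmul a f) a = tmul a (tmul f a) := rfl
        rw [this]
        exact rnk_le_right a (tmul f a)
      · refine le_antisymm (rnk_le_right a f) ?_
        rw [← h]
        exact rnk_le_left (tmul a f) a
  · ext f
    simp only [Set.mem_inter_iff, Set.mem_setOf_eq]
    constructor
    · rintro ⟨hfa, haf⟩
      have inj := injOn_of_rnk_fa hfa
      have heq := img_eq_of_rnk_af haf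
      refine ⟨fun z => if h : ∃ w, a (f (a w)) = z then h.choose else z, ?_⟩
      funext x
      show f (a (dite _ _ _)) = f x
      have hex : ∃ w, a (f (a w)) = a (f x) := by
        have hmem : f x ∈ (Finset.univ.image a).image f := by
          rw [heq]
          exact Finset.mem_image_of_mem f (Finset.mem_univ x)
        simp only [Finset.mem_image, Finset.mem_univ, true_and] at hmem
        obtain ⟨u, ⟨w, rfl⟩, hu⟩ := hmem
        exact ⟨w, by rw [hu]⟩
      rw [dif_pos hex]
      have hw := hex.choose_spec
      have h1 : f (a hex.choose) ∈ ↑(Finset.univ.image f) := by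
        simp [Finset.mem_image]
      have h2 : f x ∈ ↑(Finset.univ.image f) := by
        simp [Finset.mem_image]
      exact inj h1 h2 hw
    · rintro ⟨g, hg⟩
      constructor
      · refine le_antisymm (rnk_le_left f a) ?_
        have : f = tmul (tmul f a) (tmul g (tmul a f)) := hg.symm
        conv_lhs => rw [this]
        exact rnk_le_left _ _
      · refine le_antisymm (rnk_le_right a f) ?_
        have : f = tmul (tmul f (tmul a g)) (tmul a f) := hg.symm
        conv_lhs => rw [this]
        exact rnk_le_right _ _
  · rintro f ⟨hfa, haf⟩ g ⟨hga, hag⟩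
    have hfg : vmul a f g = tmul (tmul f a) g := rfl
    constructor
    · show rnk (tmul (vmul a f g) a) = rnk (vmul a f g)
      rw [hfg]
      unfold rnk
      rw [img_tmul]
      apply Finset.card_image_iff.mpr
      apply (injOn_of_rnk_fa hga).mono
      intro y hy
      simp only [Finset.coe_image, Finset.coe_univ, Set.image_univ, Set.mem_range] at *
      obtain ⟨x, rfl⟩ := hy
      exact ⟨a (f x), rfl⟩
    · show rnk (tmul a (vmul a f g)) = rnk (vmul a f g)
      rw [hfg]
      unfold rnk
      congr 1
      simp only [img_tmul, img_eq_of_rnk_af haf]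
end

section
/- Let X be a finite set with |X| = n, let a ∈ T_X be an idempotent with rank(a) = r < n, and set M = {f ∈ T_X : rank(f) > r}. Then M generates the variant T_X^a under the operation ⋆; every generating set of T_X^a contains M; consequently M is the unique minimal generating set of T_X^a (with respect to both containment and size), and rank(T_X^a) = |M|, the number of transformations of X of rank exceeding r. -/
/-- The subsemigroup generated by `M` with respect to the binary operation `op`:
the least subset containing `M` and closed under `op`. -/
def genBy {T : Type*} (op : T → T → T) (M : Set T) : Set T :=
  ⋂₀ {N : Set T | M ⊆ N ∧ ∀ x ∈ N, ∀ y ∈ N, op x y ∈ N}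

section Aux

lemma subset_genBy {T : Type*} (op : T → T → T) (M : Set T) : M ⊆ genBy op M := by
  intro x hx
  exact Set.mem_sInter.2 fun N hN => hN.1 hx

lemma genBy_closed {T : Type*} (op : T → T → T) (M : Set T) :
    ∀ x ∈ genBy op M, ∀ y ∈ genBy op M, op x y ∈ genBy op M := by
  intro x hx y hy
  exact Set.mem_sInter.2 fun N hN => hN.2 x (Set.mem_sInter.1 hx N hN) y (Set.mem_sInter.1 hy N hN)

lemma genBy_subset {T : Type*} (op : T → T → T) (M N : Set T)
    (h1 : M ⊆ N) (h2 : ∀ x ∈ N, ∀ y ∈ N, op x y ∈ N) : genBy op M ⊆ N :=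
  Set.sInter_subset_of_mem ⟨h1, h2⟩

variable {X : Type*} [Fintype X] [DecidableEq X]

lemma rnk_vmul_le (a f g : X → X) : rnk (vmul a f g) ≤ rnk a := by
  have hsub : Finset.univ.image (vmul a f g) ⊆ (Finset.univ.image a).image g := by
    intro z hz
    simp only [Finset.mem_image, Finset.mem_univ, true_and] at hz ⊢
    obtain ⟨x, rfl⟩ := hz
    exact ⟨a (f x), ⟨f x, rfl⟩, rfl⟩
  calc (Finset.univ.image (vmul a f g)).card ≤ ((Finset.univ.image a).image g).card :=
        Finset.card_le_card hsub
    _ ≤ (Finset.univ.image a).card := Finset.card_image_le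

lemma rnk_bij {h : X → X} (hb : Function.Bijective h) : rnk h = Fintype.card X := by
  rw [rnk, Finset.card_image_of_injective _ hb.1, Finset.card_univ]

/-- Any injection on a finset extends to a bijection of the whole (finite) type. -/
lemma exists_bij_extend (s : Finset X) (φ : X → X) (hinj : Set.InjOn φ ↑s) :
    ∃ h : X → X, Function.Bijective h ∧ ∀ x ∈ s, h x = φ x := by
  have hcard : (s.image φ).card = s.card := Finset.card_image_of_injOn hinj
  have hc2 : Fintype.card ↑(sᶜ) = Fintype.card ↑((s.image φ)ᶜ) := by
    simp only [Fintype.card_coe, Finset.card_compl, hcard]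
  let e : ↑(sᶜ) ≃ ↑((s.image φ)ᶜ) := Fintype.equivOfCardEq hc2
  refine ⟨fun x => if hx : x ∈ s then φ x else
    (e ⟨x, Finset.mem_compl.2 hx⟩ : X), ?_, ?_⟩
  · have hinj' : Function.Injective (fun x => if hx : x ∈ s then φ x else
        (e ⟨x, Finset.mem_compl.2 hx⟩ : X)) := by
      intro x y hxy
      by_cases hx : x ∈ s <;> by_cases hy : y ∈ s <;>
        simp only [hx, hy, dif_pos, dif_neg, not_false_iff] at hxy
      · exact hinj hx hy hxy
      · exfalso
        have h1 : φ x ∈ s.image φ := Finset.mem_image_of_mem φ hx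
        have h2 : (e ⟨y, Finset.mem_compl.2 hy⟩ : X) ∈ (s.image φ)ᶜ :=
          (e ⟨y, Finset.mem_compl.2 hy⟩).2
        rw [hxy] at h1
        exact Finset.mem_compl.1 h2 h1
      · exfalso
        have h1 : φ y ∈ s.image φ := Finset.mem_image_of_mem φ hy
        have h2 : (e ⟨x, Finset.mem_compl.2 hx⟩ : X) ∈ (s.image φ)ᶜ :=
          (e ⟨x, Finset.mem_compl.2 hx⟩).2
        rw [← hxy] at h1
        exact Finset.mem_compl.1 h2 h1
      · have := e.injective (Subtype.coe_injective hxy)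
        exact congrArg Subtype.val this
    exact (Finite.injective_iff_bijective).1 hinj'
  · intro x hx
    simp [hx]

/-- An injective map between finsets of suitable sizes. -/
lemma exists_injOn_maps (s t : Finset X) (hle : s.card ≤ t.card) :
    ∃ ψ : X → X, Set.InjOn ψ ↑s ∧ ∀ x ∈ s, ψ x ∈ t := by
  have hne : Nonempty (↑s ↪ ↑t) :=
    Function.Embedding.nonempty_of_card_le (by simpa [Fintype.card_coe] using hle)
  obtain ⟨e⟩ := hne
  refine ⟨fun x => if hx : x ∈ s then (e ⟨x, hx⟩ : X) else x, ?_, ?_⟩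
  · intro x hx y hy hxy
    simp only [Finset.mem_coe] at hx hy
    simp only [hx, hy, dif_pos] at hxy
    have := e.injective (Subtype.coe_injective hxy)
    exact congrArg Subtype.val this
  · intro x hx
    simp only [hx, dif_pos]
    exact (e ⟨x, hx⟩).2

lemma fixes_image (a : X → X) (ha : ∀ z, a (a z) = a z) {z : X}
    (hz : z ∈ Finset.univ.image a) : a z = z := by
  obtain ⟨y, -, rfl⟩ := Finset.mem_image.1 hz
  exact ha y

/-- Key decomposition: a map of rank ≤ rank a factors as `h ∘ a ∘ g` with `h` a bijection
and `g` of rank one bigger. -/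
lemma key_decomp (a : X → X) (ha : ∀ z, a (a z) = a z) (f : X → X)
    (hle : rnk f ≤ rnk a) (hlt : rnk a < Fintype.card X) :
    ∃ g h : X → X, Function.Bijective h ∧ rnk g = rnk f + 1 ∧ vmul a g h = f := by
  classical
  set A : Finset X := Finset.univ.image a with hA
  set F : Finset X := Finset.univ.image f with hF
  -- f is not injective
  have hnoninj : ∃ x1 x2 : X, x1 ≠ x2 ∧ f x1 = f x2 := by
    by_contra hcon
    push_neg at hcon
    have hinj : Function.Injective f := by
      intro x y hxy
      by_contra hne
      exact hcon x y hne hxy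
    have : rnk f = Fintype.card X := rnk_bij ((Finite.injective_iff_bijective).1 hinj)
    omega
  obtain ⟨x1, x2, hx12, hfx12⟩ := hnoninj
  -- a point outside the image of a
  have hwex : ∃ w : X, w ∉ A := by
    by_contra hcon
    push_neg at hcon
    have : Finset.univ ⊆ A := fun x _ => hcon x
    have : Fintype.card X ≤ A.card := by
      simpa [Finset.card_univ] using Finset.card_le_card this
    have : A.card = rnk a := rfl
    omega
  obtain ⟨w, hw⟩ := hwex
  have hawA : a w ∈ A := Finset.mem_image_of_mem a (Finset.mem_univ w)
  have hfx1F : f x1 ∈ F := Finset.mem_image_of_mem f (Finset.mem_univ x1)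
  -- injection from F.erase (f x1) into A.erase (a w)
  have hcards : (F.erase (f x1)).card ≤ (A.erase (a w)).card := by
    rw [Finset.card_erase_of_mem hfx1F, Finset.card_erase_of_mem hawA]
    have h1 : F.card = rnk f := rfl
    have h2 : A.card = rnk a := rfl
    omega
  obtain ⟨ψ, hψinj, hψmem⟩ := exists_injOn_maps (F.erase (f x1)) (A.erase (a w)) hcards
  -- the injection φ : F → A with φ (f x1) = a w
  set φ : X → X := fun y => if y = f x1 then a w else ψ y with hφ
  have hφval : φ (f x1) = a w := by simp [hφ]
  have hφmem : ∀ y ∈ F, φ y ∈ A := by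
    intro y hy
    by_cases h : y = f x1
    · simp [hφ, h, hawA]
    · have : ψ y ∈ A.erase (a w) := hψmem y (Finset.mem_erase.2 ⟨h, hy⟩)
      simp only [hφ, h, if_false]
      exact Finset.mem_of_mem_erase this
  have hφinj : Set.InjOn φ ↑F := by
    intro y1 hy1 y2 hy2 heq
    simp only [Finset.mem_coe] at hy1 hy2
    by_cases h1 : y1 = f x1 <;> by_cases h2 : y2 = f x1
    · rw [h1, h2]
    · exfalso
      have : ψ y2 ∈ A.erase (a w) := hψmem y2 (Finset.mem_erase.2 ⟨h2, hy2⟩)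
      have hne : ψ y2 ≠ a w := (Finset.mem_erase.1 this).1
      simp only [hφ, h1, h2, if_true, if_false] at heq
      exact hne heq.symm
    · exfalso
      have : ψ y1 ∈ A.erase (a w) := hψmem y1 (Finset.mem_erase.2 ⟨h1, hy1⟩)
      have hne : ψ y1 ≠ a w := (Finset.mem_erase.1 this).1
      simp only [hφ, h1, h2, if_true, if_false] at heq
      exact hne heq
    · simp only [hφ, h1, h2, if_false] at heq
      exact hψinj (Finset.mem_coe.2 (Finset.mem_erase.2 ⟨h1, hy1⟩))
        (Finset.mem_coe.2 (Finset.mem_erase.2 ⟨h2, hy2⟩)) heq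
  -- define g
  set g : X → X := fun x => if x = x1 then w else φ (f x) with hg
  have hag : ∀ x, a (g x) = φ (f x) := by
    intro x
    by_cases h : x = x1
    · subst h
      simp only [hg, if_pos rfl]
      rw [hφval]
    · simp only [hg, h, if_false]
      exact fixes_image a ha (hφmem (f x) (Finset.mem_image_of_mem f (Finset.mem_univ x)))
  -- every value of F is attained by f away from x1
  have hattain : ∀ y ∈ F, ∃ x, x ≠ x1 ∧ f x = y := by
    intro y hy
    obtain ⟨x0, -, rfl⟩ := Finset.mem_image.1 hy
    by_cases h : x0 = x1
    · exact ⟨x2, fun hc => hx12 hc.symm, by rw [h, ← hfx12]⟩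
    · exact ⟨x0, h, rfl⟩
  -- the image of g
  have himg : Finset.univ.image g = insert w (F.image φ) := by
    ext z
    simp only [Finset.mem_image, Finset.mem_univ, true_and, Finset.mem_insert]
    constructor
    · rintro ⟨x, rfl⟩
      by_cases h : x = x1
      · left; simp [hg, h]
      · right
        exact ⟨f x, Finset.mem_image_of_mem f (Finset.mem_univ x), by simp [hg, h]⟩
    · rintro (rfl | ⟨y, hy, rfl⟩)
      · exact ⟨x1, by simp [hg]⟩
      · obtain ⟨x, hx, rfl⟩ := hattain y hy
        exact ⟨x, by simp [hg, hx]⟩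
  have hwnot : w ∉ F.image φ := by
    intro hc
    obtain ⟨y, hy, heq⟩ := Finset.mem_image.1 hc
    exact hw (heq ▸ hφmem y hy)
  have hrnkg : rnk g = rnk f + 1 := by
    rw [rnk, himg, Finset.card_insert_of_notMem hwnot, Finset.card_image_of_injOn hφinj]
    rfl
  -- the inverse map on the image of φ
  set φinv : X → X := fun z => if hz : ∃ y ∈ F, φ y = z then hz.choose else z with hφinv
  have hφinvspec : ∀ y ∈ F, φinv (φ y) = y := by
    intro y hy
    have hz : ∃ y' ∈ F, φ y' = φ y := ⟨y, hy, rfl⟩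
    simp only [hφinv, dif_pos hz]
    obtain ⟨hy', heq⟩ := hz.choose_spec
    exact hφinj (Finset.mem_coe.2 hy') (Finset.mem_coe.2 hy) heq
  have hφinvinj : Set.InjOn φinv ↑(F.image φ) := by
    intro z1 hz1 z2 hz2 heq
    simp only [Finset.mem_coe] at hz1 hz2
    obtain ⟨y1, hy1, rfl⟩ := Finset.mem_image.1 hz1
    obtain ⟨y2, hy2, rfl⟩ := Finset.mem_image.1 hz2
    rw [hφinvspec y1 hy1, hφinvspec y2 hy2] at heq
    rw [heq]
  obtain ⟨h, hbij, hext⟩ := exists_bij_extend (F.image φ) φinv hφinvinj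
  refine ⟨g, h, hbij, hrnkg, ?_⟩
  funext x
  have hfxF : f x ∈ F := Finset.mem_image_of_mem f (Finset.mem_univ x)
  have hφfx : φ (f x) ∈ F.image φ := Finset.mem_image_of_mem φ hfxF
  calc h (a (g x)) = h (φ (f x)) := by rw [hag x]
    _ = φinv (φ (f x)) := hext _ hφfx
    _ = f x := hφinvspec _ hfxF

/-- Everything is generated by the maps of rank exceeding `rnk a`. -/
lemma gen_univ (a : X → X) (ha : ∀ z, a (a z) = a z) (hlt : rnk a < Fintype.card X)
    (f : X → X) : f ∈ genBy (vmul a) {f : X → X | rnk a < rnk f} := by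
  set M : Set (X → X) := {f : X → X | rnk a < rnk f} with hM
  suffices H : ∀ m : ℕ, ∀ f : X → X, Fintype.card X ≤ rnk f + m → f ∈ genBy (vmul a) M by
    exact H (Fintype.card X) f (Nat.le_add_left _ _)
  intro m
  induction m with
  | zero =>
    intro f hf
    apply subset_genBy (vmul a) M
    show rnk a < rnk f
    omega
  | succ m ih =>
    intro f hf
    by_cases hc : rnk a < rnk f
    · exact subset_genBy (vmul a) M hc
    · push_neg at hc
      obtain ⟨g, h, hbij, hrg, hvm⟩ := key_decomp a ha f hc hlt
      have hgmem : g ∈ genBy (vmul a) M := ih g (by omega)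
      have hhmem : h ∈ genBy (vmul a) M := by
        apply subset_genBy (vmul a) M
        show rnk a < rnk h
        rw [rnk_bij hbij]
        exact hlt
      rw [← hvm]
      exact genBy_closed (vmul a) M g hgmem h hhmem

end Aux

theorem stmt_7 {X : Type*} [Fintype X] [DecidableEq X]
    (n : ℕ) (hn : n = Fintype.card X)
    (a : X → X) (ha : tmul a a = a) (r : ℕ) (hr : rnk a = r) (hrn : r < n)
    (M : Set (X → X)) (hM : M = {f : X → X | r < rnk f}) :
    -- M generates the variant T_X^a
    genBy (vmul a) M = Set.univ ∧
    -- every generating set contains M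
    (∀ U : Set (X → X), genBy (vmul a) U = Set.univ → M ⊆ U) ∧
    -- M is the unique generating set of minimal size
    (∀ U : Set (X → X), genBy (vmul a) U = Set.univ → U.ncard = M.ncard → U = M) ∧
    -- rank(T_X^a) = |M|
    sInf {k : ℕ | ∃ U : Set (X → X), genBy (vmul a) U = Set.univ ∧ U.ncard = k} =
      M.ncard := by
  have ha' : ∀ z, a (a z) = a z := fun z => congrFun ha z
  have hlt : rnk a < Fintype.card X := by omega
  have hMeq : M = {f : X → X | rnk a < rnk f} := by rw [hM, hr]
  have part1 : genBy (vmul a) M = Set.univ := by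
    apply Set.eq_univ_of_forall
    intro f
    rw [hMeq]
    exact gen_univ a ha' hlt f
  have part2 : ∀ U : Set (X → X), genBy (vmul a) U = Set.univ → M ⊆ U := by
    intro U hU f hf
    have hfM : r < rnk f := by rw [hM] at hf; exact hf
    have hclosed : ∀ x ∈ U ∪ {g : X → X | rnk g ≤ r}, ∀ y ∈ U ∪ {g : X → X | rnk g ≤ r},
        vmul a x y ∈ U ∪ {g : X → X | rnk g ≤ r} := by
      intro x _ y _
      right
      show rnk (vmul a x y) ≤ r
      rw [← hr]
      exact rnk_vmul_le a x y
    have hsub : genBy (vmul a) U ⊆ U ∪ {g : X → X | rnk g ≤ r} :=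
      genBy_subset (vmul a) U _ Set.subset_union_left hclosed
    have hfmem : f ∈ U ∪ {g : X → X | rnk g ≤ r} := hsub (hU ▸ Set.mem_univ f)
    rcases hfmem with h | h
    · exact h
    · exact absurd h (by simp only [Set.mem_setOf_eq]; omega)
  have part3 : ∀ U : Set (X → X), genBy (vmul a) U = Set.univ → U.ncard = M.ncard → U = M := by
    intro U hU hcard
    exact (Set.eq_of_subset_of_ncard_le (part2 U hU) (le_of_eq hcard) (Set.toFinite U)).symm
  refine ⟨part1, part2, part3, ?_⟩
  apply le_antisymm
  · exact Nat.sInf_le (show M.ncard ∈ {k : ℕ | ∃ U : Set (X → X),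
      genBy (vmul a) U = Set.univ ∧ U.ncard = k} from ⟨M, part1, rfl⟩)
  · apply le_csInf ⟨M.ncard, show M.ncard ∈ {k : ℕ | ∃ U : Set (X → X),
      genBy (vmul a) U = Set.univ ∧ U.ncard = k} from ⟨M, part1, rfl⟩⟩
    rintro b ⟨U, hU, rfl⟩
    exact Set.ncard_le_ncard (part2 U hU) (Set.toFinite U)
end

section
/- Let X be a finite set with |X| = n, let a ∈ T_X be an idempotent with rank(a) = r, and let P = {f ∈ T_X : rank(afa) = rank(f)} be the set of regular elements of T_X^a. For f, g ∈ T_X: (i) if f ∈ P, then the 𝒟^a-class of f lies below that of g if and only if rank(f) ≤ rank(aga); (ii) if g ∈ P, then the 𝒟^a-class of f lies below that of g if and only if rank(f) ≤ rank(g). Consequently the regular 𝒟^a-classes of T_X^a form a chain D_1^a < ⋯ < D_r^a, where D_m^a = {f ∈ P : rank(f) = m} for 1 ≤ m ≤ r. -/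
/-- `f` lies in the principal two-sided ideal of the variant `T_X^a` generated by `g`;
this is the order on 𝒟^a(= 𝒥^a)-classes: `D_f^a ≤ D_g^a`. -/
def dLe {X : Type*} (a f g : X → X) : Prop :=
  f = g ∨ (∃ u, vmul a u g = f) ∨ (∃ v, vmul a g v = f) ∨
    (∃ u v, vmul a (vmul a u g) v = f)

/-! Every element `f` of the principal ideal of `g` in `T_X^a` has the form `p · g · q`, and
then `a f a` has the form `p' · (a g a) · q'`. Composition never raises rank, so
`rank f ≤ rank g`, and for regular `f` (where `rank (a f a) = rank f`) even
`rank f ≤ rank (a g a)`. Conversely, a map `f` with `rank f ≤ rank h` factors as `f = u · h · v`,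
and for `h = a g a` this reads `f = u ⋆ g ⋆ v`. For regular `g`, `rank (a g a) = rank g`, so
both descriptions of the order become comparisons of ranks. -/

section VariantOrder

variable {X : Type*} [Fintype X] [DecidableEq X]

lemma rnk_sandwich_le (p m q : X → X) : rnk (fun x => q (m (p x))) ≤ rnk m :=
  calc (Finset.univ.image fun x => q (m (p x))).card
      ≤ ((Finset.univ.image m).image q).card :=
        Finset.card_le_card fun y hy => by
          obtain ⟨x, -, rfl⟩ := Finset.mem_image.mp hy
          exact Finset.mem_image_of_mem q (Finset.mem_image_of_mem m (Finset.mem_univ _))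
    _ ≤ (Finset.univ.image m).card := Finset.card_image_le

lemma exists_sandwich_eq_of_rnk_le {f h : X → X} (hle : rnk f ≤ rnk h) :
    ∃ u v : X → X, (fun x => v (h (u x))) = f := by
  obtain ⟨φ⟩ : Nonempty (Finset.univ.image f ↪ Finset.univ.image h) :=
    Function.Embedding.nonempty_of_card_le (by rwa [Fintype.card_coe, Fintype.card_coe])
  have hφ : Function.Injective fun s => (φ s : X) := Subtype.val_injective.comp φ.injective
  choose w hw using fun t : Finset.univ.image h =>
    (Finset.mem_image.mp t.2).imp fun _ => And.right
  refine ⟨fun x => w (φ ⟨f x, Finset.mem_image_of_mem f (Finset.mem_univ x)⟩),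
    Function.extend (fun s => (φ s : X)) Subtype.val id, funext fun x => ?_⟩
  simp only [hw, hφ.extend_apply]

lemma rnk_le_of_dLe {a f g : X → X} (hfg : dLe a f g) : rnk f ≤ rnk g := by
  rcases hfg with rfl | ⟨u, rfl⟩ | ⟨v, rfl⟩ | ⟨u, v, rfl⟩
  · exact le_rfl
  · exact rnk_sandwich_le (fun x => a (u x)) g id
  · exact rnk_sandwich_le id g (fun y => v (a y))
  · exact rnk_sandwich_le (fun x => a (u x)) g (fun y => v (a y))

lemma rnk_le_rnk_sandwich_of_dLe {a f g : X → X} (hf : rnk (tmul (tmul a f) a) = rnk f)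
    (hfg : dLe a f g) : rnk f ≤ rnk (tmul (tmul a g) a) := by
  rw [← hf]
  rcases hfg with rfl | ⟨u, rfl⟩ | ⟨v, rfl⟩ | ⟨u, v, rfl⟩
  · exact le_rfl
  · exact rnk_sandwich_le (fun x => u (a x)) (fun y => a (g (a y))) id
  · exact rnk_sandwich_le id (fun y => a (g (a y))) (fun y => a (v y))
  · exact rnk_sandwich_le (fun x => u (a x)) (fun y => a (g (a y))) (fun y => a (v y))

lemma dLe_of_rnk_le_rnk_sandwich {a f g : X → X} (hle : rnk f ≤ rnk (tmul (tmul a g) a)) :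
    dLe a f g := by
  obtain ⟨u, v, rfl⟩ := exists_sandwich_eq_of_rnk_le hle
  exact Or.inr <| Or.inr <| Or.inr ⟨u, v, rfl⟩

lemma dLe_iff_rnk_le_rnk_sandwich {a f : X → X} (hf : rnk (tmul (tmul a f) a) = rnk f)
    (g : X → X) : dLe a f g ↔ rnk f ≤ rnk (tmul (tmul a g) a) :=
  ⟨rnk_le_rnk_sandwich_of_dLe hf, dLe_of_rnk_le_rnk_sandwich⟩

lemma dLe_iff_rnk_le {a g : X → X} (hg : rnk (tmul (tmul a g) a) = rnk g) (f : X → X) :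
    dLe a f g ↔ rnk f ≤ rnk g :=
  ⟨rnk_le_of_dLe, fun hle => dLe_of_rnk_le_rnk_sandwich (hg ▸ hle)⟩

end VariantOrder

theorem stmt_8_general {X : Type*} [Fintype X] [DecidableEq X]
    (a : X → X) (r : ℕ) (hr : rnk a = r)
    (P : Set (X → X)) (hP : P = {f : X → X | rnk (tmul (tmul a f) a) = rnk f}) :
    -- (i)
    (∀ f ∈ P, ∀ g : X → X, dLe a f g ↔ rnk f ≤ rnk (tmul (tmul a g) a)) ∧
    -- (ii)
    (∀ f : X → X, ∀ g ∈ P, dLe a f g ↔ rnk f ≤ rnk g) ∧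
    -- the regular 𝒟^a-classes form a chain D_1^a < ⋯ < D_r^a,
    -- where D_m^a = {f ∈ P : rank f = m}: the 𝒟^a-class of f ∈ P is
    -- {g ∈ P : rank g = rank f}, and the order on these classes is by rank
    (∀ f ∈ P, {g : X → X | dLe a g f ∧ dLe a f g} = {g : X → X | g ∈ P ∧ rnk g = rnk f}) ∧
    (∀ f ∈ P, ∀ g ∈ P, dLe a f g ↔ rnk f ≤ rnk g) ∧
    (∀ f ∈ P, rnk f ≤ r) := by
  subst hP hr
  refine ⟨fun f hf g => dLe_iff_rnk_le_rnk_sandwich hf g, fun f g hg => dLe_iff_rnk_le hg f,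
    fun f hf => ?_, fun f _ g hg => dLe_iff_rnk_le hg f,
    fun f hf => hf ▸ rnk_sandwich_le (fun x => f (a x)) a id⟩
  ext g
  constructor
  · rintro ⟨hgf, hfg⟩
    have hgf_rnk : rnk g ≤ rnk f := rnk_le_of_dLe hgf
    have hf_sandwich : rnk f ≤ rnk (tmul (tmul a g) a) := rnk_le_rnk_sandwich_of_dLe hf hfg
    exact ⟨le_antisymm (rnk_sandwich_le a g a) (hgf_rnk.trans hf_sandwich),
      le_antisymm hgf_rnk (rnk_le_of_dLe hfg)⟩
  · rintro ⟨hg, heq⟩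
    exact ⟨(dLe_iff_rnk_le hf g).2 heq.le, (dLe_iff_rnk_le hg f).2 heq.ge⟩

theorem stmt_8 {X : Type*} [Fintype X] [DecidableEq X]
    (n : ℕ) (hn : n = Fintype.card X)
    (a : X → X) (ha : tmul a a = a) (r : ℕ) (hr : rnk a = r)
    (P : Set (X → X)) (hP : P = {f : X → X | rnk (tmul (tmul a f) a) = rnk f}) :
    -- (i)
    (∀ f ∈ P, ∀ g : X → X, dLe a f g ↔ rnk f ≤ rnk (tmul (tmul a g) a)) ∧
    -- (ii)
    (∀ f : X → X, ∀ g ∈ P, dLe a f g ↔ rnk f ≤ rnk g) ∧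
    -- the regular 𝒟^a-classes form a chain D_1^a < ⋯ < D_r^a,
    -- where D_m^a = {f ∈ P : rank f = m}: the 𝒟^a-class of f ∈ P is
    -- {g ∈ P : rank g = rank f}, and the order on these classes is by rank
    (∀ f ∈ P, {g : X → X | dLe a g f ∧ dLe a f g} = {g : X → X | g ∈ P ∧ rnk g = rnk f}) ∧
    (∀ f ∈ P, ∀ g ∈ P, dLe a f g ↔ rnk f ≤ rnk g) ∧
    (∀ f ∈ P, rnk f ≤ r) :=
  stmt_8_general a r hr P hP
end

section
/- Let X be a finite set with |X| = n, and a ∈ T_X an idempotent with rank(a) = r < n, image A with |A| = r, and kernel classes A₁,…,A_r with λ_i = |A_i| and Λ = λ₁⋯λ_r. Then the number of transformations f ∈ T_X satisfying rank(afa) = r < rank(f) equals (n^{n−r} − r^{n−r})·r!·Λ. (These f are exactly those whose singleton maximal 𝒟^a-classes lie above the top regular 𝒟^a-class D_r^a of T_X^a.) -/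
open Finset Function

lemma count_pi {X Y : Type*} [Fintype X] [Fintype Y] [DecidableEq X]
    (p : X → Y → Prop) [∀ x, DecidablePred (p x)] :
    (Finset.univ.filter fun f : X → Y => ∀ x, p x (f x)).card
      = ∏ x, (Finset.univ.filter (p x)).card := by
  classical
  rw [← Fintype.card_subtype]
  rw [Fintype.card_congr (Equiv.subtypePiEquivPi (p := p))]
  rw [Fintype.card_pi]
  exact Finset.prod_congr rfl fun x _ => Fintype.card_subtype _

lemma prodIteMemHelper {X : Type*} [Fintype X] [DecidableEq X] (A : Finset X) (m : ℕ) :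
    (∏ x : X, (if x ∈ A then 1 else m)) = m ^ (Fintype.card X - A.card) := by
  rw [Finset.prod_ite, Finset.prod_const_one, one_mul, Finset.prod_const]
  congr 1
  have h : Finset.univ.filter (fun x => x ∉ A) = Finset.univ \ A := by ext x; simp
  rw [h, Finset.card_sdiff_of_subset (Finset.subset_univ _), Finset.card_univ]

theorem stmt_9 {X : Type*} [Fintype X] [DecidableEq X]
    (n : ℕ) (hn : n = Fintype.card X)
    (a : X → X) (ha : tmul a a = a) (r : ℕ) (hr : rnk a = r) (hrn : r < n)
    (Λ : ℕ)
    (hΛ : Λ = ∏ y ∈ Finset.univ.image a, (Finset.univ.filter fun x => a x = y).card) :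
    {f : X → X | rnk (tmul (tmul a f) a) = r ∧ r < rnk f}.ncard =
      (n ^ (n - r) - r ^ (n - r)) * Nat.factorial r * Λ := by
  classical
  set A : Finset X := Finset.univ.image a with hAdef
  have haa : ∀ x, a (a x) = a x := fun x => congrFun ha x
  have hA : A.card = r := hr
  have hmemA : ∀ x, a x ∈ A := fun x => Finset.mem_image_of_mem a (Finset.mem_univ x)
  have hP : ∀ f : X → X,
      (rnk (tmul (tmul a f) a) = r ∧ r < rnk f) ↔
      (Set.InjOn (fun x => a (f x)) ↑A ∧ ∃ x, x ∉ A ∧ f x ∉ A.image f) := by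
    intro f
    have h1 : rnk (tmul (tmul a f) a) = (A.image fun x => a (f x)).card := by
      show (Finset.univ.image fun x => a (f (a x))).card = _
      rw [hAdef, Finset.image_image]
      rfl
    have hiff1 : rnk (tmul (tmul a f) a) = r ↔ Set.InjOn (fun x => a (f x)) ↑A := by
      rw [h1, ← hA, Finset.card_image_iff]
    constructor
    · rintro ⟨h2, h3⟩
      have hinj := hiff1.mp h2
      refine ⟨hinj, ?_⟩
      by_contra hcon
      push_neg at hcon
      have hsub : Finset.univ.image f ⊆ A.image f := by
        intro y hy
        obtain ⟨x, -, rfl⟩ := Finset.mem_image.mp hy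
        by_cases hx : x ∈ A
        · exact Finset.mem_image_of_mem f hx
        · exact hcon x hx
      have hle : rnk f ≤ r := by
        calc rnk f ≤ (A.image f).card := Finset.card_le_card hsub
          _ ≤ A.card := Finset.card_image_le
          _ = r := hA
      omega
    · rintro ⟨hinj, x, hx, hfx⟩
      refine ⟨hiff1.mpr hinj, ?_⟩
      have hinjf : Set.InjOn f ↑A := by
        intro u hu v hv huv
        exact hinj hu hv (by simp only [huv])
      have hcard : (A.image f).card = r := by
        rw [Finset.card_image_of_injOn hinjf, hA]
      have hsub : insert (f x) (A.image f) ⊆ Finset.univ.image f := by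
        intro y hy
        rcases Finset.mem_insert.mp hy with rfl | hy
        · exact Finset.mem_image_of_mem f (Finset.mem_univ x)
        · obtain ⟨u, -, rfl⟩ := Finset.mem_image.mp hy
          exact Finset.mem_image_of_mem f (Finset.mem_univ u)
      have hcle := Finset.card_le_card hsub
      rw [Finset.card_insert_of_notMem hfx, hcard] at hcle
      exact lt_of_lt_of_le (Nat.lt_succ_self r) hcle
  have hncard : {f : X → X | rnk (tmul (tmul a f) a) = r ∧ r < rnk f}.ncard
      = (Finset.univ.filter fun f : X → X =>
          Set.InjOn (fun x => a (f x)) ↑A ∧ ∃ x, x ∉ A ∧ f x ∉ A.image f).card := by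
    rw [Set.ncard_eq_toFinset_card', Set.toFinset_setOf]
    congr 1
    apply Finset.filter_congr
    intro f _
    simpa using hP f
  rw [hncard]
  set S := Finset.univ.filter fun f : X → X =>
      Set.InjOn (fun x => a (f x)) ↑A ∧ ∃ x, x ∉ A ∧ f x ∉ A.image f with hS
  set T := Finset.univ.filter fun g : ↥A → X =>
      Function.Injective fun i => a (g i) with hT
  have hρmem : ∀ f ∈ S, (fun i : ↥A => f i.1) ∈ T := by
    intro f hf
    rw [hS, Finset.mem_filter] at hf
    rw [hT, Finset.mem_filter]
    refine ⟨Finset.mem_univ _, ?_⟩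
    intro i j hij
    exact Subtype.ext (hf.2.1 (Finset.mem_coe.mpr i.2) (Finset.mem_coe.mpr j.2) hij)
  have hsplit := Finset.card_eq_sum_card_fiberwise hρmem
  -- fiber count
  have hfiber : ∀ g ∈ T,
      (S.filter fun f => (fun i : ↥A => f i.1) = g).card = n ^ (n - r) - r ^ (n - r) := by
    intro g hg
    rw [hT, Finset.mem_filter] at hg
    have hg1 : Function.Injective fun i : ↥A => a (g i) := hg.2
    have hginj : Function.Injective g := by
      intro i j hij
      exact hg1 (by simp only [hij])
    set Sg : Finset X := Finset.univ.image g with hSgdef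
    have hSg : Sg.card = r := by
      rw [hSgdef, Finset.card_image_of_injective _ hginj, Finset.card_univ,
        Fintype.card_coe, hA]
    have himg : ∀ f : X → X, (∀ x (hx : x ∈ A), f x = g ⟨x, hx⟩) → A.image f = Sg := by
      intro f hpt
      ext y
      simp only [hSgdef, Finset.mem_image, Finset.mem_univ, true_and]
      constructor
      · rintro ⟨x, hx, rfl⟩
        exact ⟨⟨x, hx⟩, (hpt x hx).symm⟩
      · rintro ⟨i, rfl⟩
        exact ⟨i.1, i.2, hpt i.1 i.2⟩
    have hfeq : (S.filter fun f => (fun i : ↥A => f i.1) = g)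
        = Finset.univ.filter fun f : X → X =>
            (∀ x, ∀ hx : x ∈ A, f x = g ⟨x, hx⟩) ∧ ∃ x, x ∉ A ∧ f x ∉ Sg := by
      ext f
      rw [Finset.mem_filter, hS, Finset.mem_filter, Finset.mem_filter]
      simp only [Finset.mem_univ, true_and]
      constructor
      · rintro ⟨⟨hinj, x, hx, hfx⟩, hρ⟩
        have hpt : ∀ x (hxA : x ∈ A), f x = g ⟨x, hxA⟩ := by
          intro x hxA
          exact (congrFun hρ ⟨x, hxA⟩)
        refine ⟨hpt, x, hx, ?_⟩
        rwa [himg f hpt] at hfx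
      · rintro ⟨hpt, x, hx, hfx⟩
        have hρ : (fun i : ↥A => f i.1) = g := funext fun i => hpt i.1 i.2
        refine ⟨⟨?_, x, hx, by rwa [himg f hpt]⟩, hρ⟩
        intro u hu v hv huv
        have hu' : u ∈ A := Finset.mem_coe.mp hu
        have hv' : v ∈ A := Finset.mem_coe.mp hv
        simp only [hpt u hu', hpt v hv'] at huv
        have := hg1 huv
        exact congrArg Subtype.val this
    rw [hfeq]
    have hm1 : (Finset.univ.filter fun f : X → X =>
        ∀ x, ∀ hx : x ∈ A, f x = g ⟨x, hx⟩).card = n ^ (n - r) := by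
      rw [count_pi (p := fun x y => ∀ hx : x ∈ A, y = g ⟨x, hx⟩)]
      have hc : ∀ x : X, (Finset.univ.filter fun y => ∀ hx : x ∈ A, y = g ⟨x, hx⟩).card
          = if x ∈ A then 1 else n := by
        intro x
        by_cases hx : x ∈ A
        · rw [if_pos hx]
          have he : (Finset.univ.filter fun y => ∀ hx : x ∈ A, y = g ⟨x, hx⟩)
              = {g ⟨x, hx⟩} := by
            ext y
            simp only [Finset.mem_filter, Finset.mem_univ, true_and, Finset.mem_singleton]
            exact ⟨fun H => H hx, fun H _ => H⟩
          rw [he, Finset.card_singleton]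
        · rw [if_neg hx]
          have he : (Finset.univ.filter fun y => ∀ hx : x ∈ A, y = g ⟨x, hx⟩)
              = Finset.univ := by
            ext y
            simp only [Finset.mem_filter, Finset.mem_univ, true_and, iff_true]
            intro h
            exact absurd h hx
          rw [he, Finset.card_univ, hn]
      rw [Finset.prod_congr rfl fun x _ => hc x, prodIteMemHelper, hA, ← hn]
    have hm2 : (Finset.univ.filter fun f : X → X =>
        ∀ x, (∀ hx : x ∈ A, f x = g ⟨x, hx⟩) ∧ (x ∉ A → f x ∈ Sg)).card = r ^ (n - r) := by
      rw [count_pi (p := fun x y => (∀ hx : x ∈ A, y = g ⟨x, hx⟩) ∧ (x ∉ A → y ∈ Sg))]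
      have hc : ∀ x : X, (Finset.univ.filter fun y =>
          (∀ hx : x ∈ A, y = g ⟨x, hx⟩) ∧ (x ∉ A → y ∈ Sg)).card
          = if x ∈ A then 1 else r := by
        intro x
        by_cases hx : x ∈ A
        · rw [if_pos hx]
          have he : (Finset.univ.filter fun y =>
              (∀ hx : x ∈ A, y = g ⟨x, hx⟩) ∧ (x ∉ A → y ∈ Sg)) = {g ⟨x, hx⟩} := by
            ext y
            simp only [Finset.mem_filter, Finset.mem_univ, true_and, Finset.mem_singleton]
            exact ⟨fun H => H.1 hx, fun H => ⟨fun _ => H, fun h => absurd hx h⟩⟩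
          rw [he, Finset.card_singleton]
        · rw [if_neg hx]
          have he : (Finset.univ.filter fun y =>
              (∀ hx : x ∈ A, y = g ⟨x, hx⟩) ∧ (x ∉ A → y ∈ Sg)) = Sg := by
            ext y
            simp only [Finset.mem_filter, Finset.mem_univ, true_and]
            exact ⟨fun H => H.2 hx, fun H => ⟨fun h => absurd h hx, fun _ => H⟩⟩
          rw [he, hSg]
      rw [Finset.prod_congr rfl fun x _ => hc x, prodIteMemHelper, hA, ← hn]
    have hdiff : (Finset.univ.filter fun f : X → X =>
        (∀ x, ∀ hx : x ∈ A, f x = g ⟨x, hx⟩) ∧ ∃ x, x ∉ A ∧ f x ∉ Sg)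
        = (Finset.univ.filter fun f : X → X => ∀ x, ∀ hx : x ∈ A, f x = g ⟨x, hx⟩)
          \ (Finset.univ.filter fun f : X → X =>
              ∀ x, (∀ hx : x ∈ A, f x = g ⟨x, hx⟩) ∧ (x ∉ A → f x ∈ Sg)) := by
      ext f
      simp only [Finset.mem_filter, Finset.mem_univ, true_and, Finset.mem_sdiff]
      constructor
      · rintro ⟨h1, x, hx, hfx⟩
        exact ⟨h1, fun H => hfx ((H x).2 hx)⟩
      · rintro ⟨h1, h2⟩
        refine ⟨h1, ?_⟩
        by_contra hc
        push_neg at hc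
        exact h2 fun x => ⟨h1 x, fun hx => hc x hx⟩
    have hsub2 : (Finset.univ.filter fun f : X → X =>
        ∀ x, (∀ hx : x ∈ A, f x = g ⟨x, hx⟩) ∧ (x ∉ A → f x ∈ Sg))
        ⊆ (Finset.univ.filter fun f : X → X => ∀ x, ∀ hx : x ∈ A, f x = g ⟨x, hx⟩) := by
      intro f hf
      rw [Finset.mem_filter] at hf ⊢
      exact ⟨hf.1, fun x => (hf.2 x).1⟩
    rw [hdiff, Finset.card_sdiff_of_subset hsub2, hm1, hm2]
  have hTcard : T.card = Nat.factorial r * Λ := by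
    set F : (↥A → X) → Equiv.Perm ↥A := fun g =>
      if h : Function.Bijective (fun i : ↥A => (⟨a (g i), hmemA _⟩ : ↥A)) then
        Equiv.ofBijective _ h else 1 with hF
    have hTsplit := Finset.card_eq_sum_card_fiberwise
      (f := F) (s := T) (t := Finset.univ) (fun g _ => Finset.mem_univ _)
    have hfib : ∀ σ : Equiv.Perm ↥A,
        (T.filter fun g => F g = σ) = Finset.univ.filter fun g : ↥A → X =>
          ∀ i, a (g i) = (σ i : X) := by
      intro σ
      ext g
      rw [Finset.mem_filter, hT, Finset.mem_filter, Finset.mem_filter]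
      simp only [Finset.mem_univ, true_and]
      constructor
      · rintro ⟨hq, hFg⟩
        intro i
        have hinjτ : Function.Injective (fun i : ↥A => (⟨a (g i), hmemA _⟩ : ↥A)) := by
          intro i j hij
          exact hq (congrArg Subtype.val hij)
        have hbij := Finite.injective_iff_bijective.mp hinjτ
        simp only [hF] at hFg
        rw [dif_pos hbij] at hFg
        rw [← hFg]
        rfl
      · intro h
        have hq : Function.Injective fun i : ↥A => a (g i) := by
          intro i j hij
          apply σ.injective
          apply Subtype.ext
          rw [← h i, ← h j]
          exact hij
        have hinjτ : Function.Injective (fun i : ↥A => (⟨a (g i), hmemA _⟩ : ↥A)) := by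
          intro i j hij
          exact hq (congrArg Subtype.val hij)
        have hbij := Finite.injective_iff_bijective.mp hinjτ
        refine ⟨hq, ?_⟩
        simp only [hF]
        rw [dif_pos hbij]
        exact Equiv.ext fun i => Subtype.ext (h i)
    have hinner : ∀ σ : Equiv.Perm ↥A,
        (Finset.univ.filter fun g : ↥A → X => ∀ i, a (g i) = (σ i : X)).card = Λ := by
      intro σ
      rw [count_pi (p := fun (i : ↥A) (y : X) => a y = (σ i : X))]
      rw [Equiv.prod_comp σ (fun i : ↥A => (Finset.univ.filter fun x => a x = (i : X)).card)]
      rw [Finset.prod_coe_sort A (fun y => (Finset.univ.filter fun x => a x = y).card)]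
      exact hΛ.symm
    rw [hTsplit]
    rw [Finset.sum_congr rfl fun σ _ => by rw [hfib σ, hinner σ]]
    rw [Finset.sum_const, smul_eq_mul, Finset.card_univ, Fintype.card_perm,
      Fintype.card_coe, hA]
  rw [hsplit, Finset.sum_congr rfl hfiber, Finset.sum_const, smul_eq_mul, hTcard]
  ring
end

section
/- Let X be a finite set with |X| = n and a ∈ T_X an idempotent with rank(a) = r, 1 < r < n, image A and kernel α. Let P = Reg(T_X^a) (with operation ⋆), and let Reg(T(X,A)) and Reg(T(X,α)) denote the sets of regular elements of the subsemigroups T(X,A) = {f ∈ T_X : im(f) ⊆ A} and T(X,α) = {f ∈ T_X : ker(f) ⊇ α} of T_X (under composition). Then the map ψ : P → Reg(T(X,A)) × Reg(T(X,α)), f ↦ (fa, af), is an injective semigroup homomorphism, and its image is exactly {(g,h) : rank(g) = rank(h) and g|_A = (ha)|_A}. In particular, P is isomorphic to a subdirect product of Reg(T(X,A)) and Reg(T(X,α)). -/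
section helpers
variable {X : Type*} [Fintype X] [DecidableEq X]

lemma image_tmul (f g : X → X) :
    Finset.univ.image (tmul f g) = (Finset.univ.image f).image g := by
  ext y
  simp only [Finset.mem_image, Finset.mem_univ, true_and, tmul]
  constructor
  · rintro ⟨x, rfl⟩; exact ⟨f x, ⟨x, rfl⟩, rfl⟩
  · rintro ⟨z, ⟨x, rfl⟩, rfl⟩; exact ⟨x, rfl⟩

lemma rnk_tmul_le_left (f g : X → X) : rnk (tmul f g) ≤ rnk f := by
  rw [rnk, image_tmul]; exact Finset.card_image_le

lemma rnk_tmul_le_right (f g : X → X) : rnk (tmul f g) ≤ rnk g := by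
  apply Finset.card_le_card
  intro y hy
  simp only [Finset.mem_image, Finset.mem_univ, true_and, tmul] at *
  obtain ⟨x, hx⟩ := hy
  exact ⟨f x, hx⟩

/-- If `rnk (f then a) = rnk f` then `a` is injective on the image of `f`. -/
lemma inj_of_rnk_eq (a f : X → X) (h : rnk (tmul f a) = rnk f) :
    ∀ y1 y2, (∃ x, f x = y1) → (∃ x, f x = y2) → a y1 = a y2 → y1 = y2 := by
  intro y1 y2 hy1 hy2 hay
  have hcard : ((Finset.univ.image f).image a).card = (Finset.univ.image f).card := by
    rw [← image_tmul f a]; exact h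
  have hinj := Finset.card_image_iff.mp hcard
  refine hinj ?_ ?_ hay <;>
    simp only [Finset.coe_image, Finset.coe_univ, Set.image_univ, Set.mem_range] <;>
    assumption

/-- Conversely, injectivity of `a` on the image of `f` gives rank equality. -/
lemma rnk_eq_of_inj (a f : X → X)
    (hinj : ∀ y1 y2, (∃ x, f x = y1) → (∃ x, f x = y2) → a y1 = a y2 → y1 = y2) :
    rnk (tmul f a) = rnk f := by
  rw [rnk, image_tmul, rnk]
  apply Finset.card_image_iff.mpr
  intro y1 hy1 y2 hy2 hay
  simp only [Finset.coe_image, Finset.coe_univ, Set.image_univ, Set.mem_range] at hy1 hy2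
  exact hinj y1 y2 hy1 hy2 hay

/-- If `rnk (a then f) = rnk f` then every value of `f` is attained on the range of `a`. -/
lemma surj_of_rnk_eq (a f : X → X) (h : rnk (tmul a f) = rnk f) :
    ∀ x, ∃ z, f (a z) = f x := by
  intro x
  have hsub : Finset.univ.image (tmul a f) ⊆ Finset.univ.image f := by
    intro y hy
    simp only [Finset.mem_image, Finset.mem_univ, true_and, tmul] at *
    obtain ⟨z, hz⟩ := hy
    exact ⟨a z, hz⟩
  have heq := Finset.eq_of_subset_of_card_le hsub (le_of_eq h.symm)
  have hm : f x ∈ Finset.univ.image f := Finset.mem_image_of_mem f (Finset.mem_univ x)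
  rw [← heq] at hm
  simpa only [Finset.mem_image, Finset.mem_univ, true_and, tmul] using hm

/-- Regularity of `h` with inner inverse constant on `a`-classes forces `a` to be
injective on the image of `h`. -/
lemma inj_of_reg (a h h' : X → X) (hc : ∀ x y, a x = a y → h' x = h' y)
    (hreg : tmul (tmul h h') h = h) :
    ∀ y1 y2, (∃ x, h x = y1) → (∃ x, h x = y2) → a y1 = a y2 → y1 = y2 := by
  rintro y1 y2 ⟨x1, rfl⟩ ⟨x2, rfl⟩ hay
  have hstep : h' (h x1) = h' (h x2) := hc _ _ hay
  calc h x1 = h (h' (h x1)) := (congrFun hreg x1).symm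
    _ = h (h' (h x2)) := by rw [hstep]
    _ = h x2 := congrFun hreg x2

end helpers

theorem stmt_10 {X : Type*} [Fintype X] [DecidableEq X]
    (n : ℕ) (hn : n = Fintype.card X)
    (a : X → X) (ha : tmul a a = a) (r : ℕ) (hr : rnk a = r)
    (h1r : 1 < r) (hrn : r < n)
    (P RegTXA RegTXα : Set (X → X))
    (hP : P = {f : X → X | rnk (tmul (tmul a f) a) = rnk f})
    -- Reg(T(X,A)): regular elements of {f : im f ⊆ A} under (left-to-right) composition
    (hRegTXA : RegTXA = {g : X → X | Set.range g ⊆ Set.range a ∧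
      ∃ h : X → X, Set.range h ⊆ Set.range a ∧ tmul (tmul g h) g = g})
    -- Reg(T(X,α)): regular elements of {f : ker f ⊇ ker a} under composition
    (hRegTXα : RegTXα = {g : X → X | (∀ x y : X, a x = a y → g x = g y) ∧
      ∃ h : X → X, (∀ x y : X, a x = a y → h x = h y) ∧ tmul (tmul g h) g = g}) :
    -- ψ : f ↦ (fa, af) maps P into Reg(T(X,A)) × Reg(T(X,α))
    (∀ f ∈ P, tmul f a ∈ RegTXA ∧ tmul a f ∈ RegTXα) ∧
    -- ψ is a semigroup homomorphism (from (P,⋆) to the direct product)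
    (∀ f ∈ P, ∀ g ∈ P,
      tmul (vmul a f g) a = tmul (tmul f a) (tmul g a) ∧
      tmul a (vmul a f g) = tmul (tmul a f) (tmul a g)) ∧
    -- ψ is injective on P
    (∀ f ∈ P, ∀ g ∈ P, tmul f a = tmul g a → tmul a f = tmul a g → f = g) ∧
    -- the image of ψ is {(g,h) : rank g = rank h and g|_A = (ha)|_A}
    (∀ g h : X → X,
      (∃ f ∈ P, tmul f a = g ∧ tmul a f = h) ↔
      (g ∈ RegTXA ∧ h ∈ RegTXα ∧ rnk g = rnk h ∧
        ∀ x ∈ Set.range a, g x = a (h x))) ∧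
    -- both projections are surjective (subdirect product)
    (∀ g ∈ RegTXA, ∃ f ∈ P, tmul f a = g) ∧
    (∀ h ∈ RegTXα, ∃ f ∈ P, tmul a f = h) := by
  classical
  subst hP hRegTXA hRegTXα
  have haa : ∀ x, a (a x) = a x := fun x => congrFun ha x
  have hfix : ∀ y, (∃ w, a w = y) → a y = y := by rintro y ⟨w, rfl⟩; exact haa w
  -- rank chain : for f ∈ P, rnk (f·a) = rnk (a·f) = rnk f
  have hchain : ∀ f : X → X, rnk (tmul (tmul a f) a) = rnk f →
      rnk (tmul f a) = rnk f ∧ rnk (tmul a f) = rnk f := by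
    intro f hf
    have e : tmul (tmul a f) a = tmul a (tmul f a) := rfl
    constructor
    · have h1 := rnk_tmul_le_left f a
      have h2 : rnk (tmul (tmul a f) a) ≤ rnk (tmul f a) := by
        rw [e]; exact rnk_tmul_le_right a (tmul f a)
      omega
    · have h1 := rnk_tmul_le_right a f
      have h2 := rnk_tmul_le_left (tmul a f) a
      omega
  -- for f ∈ P : every value of a∘f is attained as a value of a∘f∘a
  have hEx : ∀ f : X → X, rnk (tmul (tmul a f) a) = rnk f →
      ∀ x, ∃ z, a (f (a z)) = a (f x) := by
    intro f hf x
    have hfa := (hchain f hf).1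
    have hsub : Finset.univ.image (tmul (tmul a f) a) ⊆ Finset.univ.image (tmul f a) := by
      intro y hy
      simp only [Finset.mem_image, Finset.mem_univ, true_and, tmul] at *
      obtain ⟨z, hz⟩ := hy
      exact ⟨a z, hz⟩
    have heq := Finset.eq_of_subset_of_card_le hsub (le_of_eq (hfa.trans hf.symm))
    have hm : tmul f a x ∈ Finset.univ.image (tmul f a) :=
      Finset.mem_image_of_mem _ (Finset.mem_univ x)
    rw [← heq] at hm
    simpa only [Finset.mem_image, Finset.mem_univ, true_and, tmul] using hm
  -- for f ∈ P : a is injective on the image of f∘a = tmul a f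
  have hInjP : ∀ f : X → X, rnk (tmul (tmul a f) a) = rnk f →
      ∀ y1 y2, (∃ x, f (a x) = y1) → (∃ x, f (a x) = y2) → a y1 = a y2 → y1 = y2 := by
    intro f hf
    exact inj_of_rnk_eq a (tmul a f) (hf.trans (hchain f hf).2.symm)
  -- regularity of g in T(X,A) gives g(A) = im g
  have hGA : ∀ g g' : X → X, Set.range g' ⊆ Set.range a → tmul (tmul g g') g = g →
      ∀ x, ∃ z, g (a z) = g x := by
    intro g g' hr' hreg x
    obtain ⟨w, hw⟩ := hr' (Set.mem_range_self (g x))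
    exact ⟨w, by rw [hw]; exact congrFun hreg x⟩
  -- Part 1
  have part1 : ∀ f ∈ {f : X → X | rnk (tmul (tmul a f) a) = rnk f},
      tmul f a ∈ {g : X → X | Set.range g ⊆ Set.range a ∧
        ∃ h : X → X, Set.range h ⊆ Set.range a ∧ tmul (tmul g h) g = g} ∧
      tmul a f ∈ {g : X → X | (∀ x y : X, a x = a y → g x = g y) ∧
        ∃ h : X → X, (∀ x y : X, a x = a y → h x = h y) ∧ tmul (tmul g h) g = g} := by
    intro f hf
    simp only [Set.mem_setOf_eq] at hf
    constructor
    · refine ⟨?_, ?_⟩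
      · rintro y ⟨x, rfl⟩; exact ⟨f x, rfl⟩
      · refine ⟨fun y => if hy : ∃ z, a (f (a z)) = y then a hy.choose else a y, ?_, ?_⟩
        · rintro y ⟨x, rfl⟩
          dsimp only
          split <;> exact ⟨_, rfl⟩
        · funext x
          show a (f (if hy : ∃ z, a (f (a z)) = a (f x) then a hy.choose else a (a (f x)))) = a (f x)
          have hex := hEx f hf x
          rw [dif_pos hex]
          exact hex.choose_spec
    · constructor
      · intro x y hxy; exact congrArg f hxy
      · refine ⟨fun y => (fun w => if hw : ∃ z, a (f (a z)) = w then a hw.choose else w) (a y),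
          fun x y hxy => by dsimp only; rw [hxy], ?_⟩
        funext x
        show f (a ((fun w => if hw : ∃ z, a (f (a z)) = w then a hw.choose else w) (a (f (a x))))) = f (a x)
        dsimp only
        have hex : ∃ z, a (f (a z)) = a (f (a x)) := ⟨x, rfl⟩
        rw [dif_pos hex, haa]
        exact hInjP f hf _ _ ⟨hex.choose, rfl⟩ ⟨x, rfl⟩ hex.choose_spec
  refine ⟨part1, fun f _ g _ => ⟨rfl, rfl⟩, ?_, ?_, ?_, ?_⟩
  -- Part 3 : injectivity
  · intro f hf g hg h1 h2
    simp only [Set.mem_setOf_eq] at hf hg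
    funext x
    obtain ⟨z, hz⟩ := surj_of_rnk_eq a g (hchain g hg).2 x
    exact inj_of_rnk_eq a f (hchain f hf).1 (f x) (g x) ⟨x, rfl⟩
      ⟨a z, (congrFun h2 z).trans hz⟩ (congrFun h1 x)
  -- Part 4 : image description
  · intro g h
    constructor
    · rintro ⟨f, hf, rfl, rfl⟩
      have hf' : rnk (tmul (tmul a f) a) = rnk f := hf
      refine ⟨(part1 f hf).1, (part1 f hf).2, ?_, ?_⟩
      · exact (hchain f hf').1.trans (hchain f hf').2.symm
      · rintro x ⟨w, rfl⟩
        show a (f (a w)) = a (f (a (a w)))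
        rw [haa]
    · rintro ⟨⟨hgr, g', hg'r, hg'⟩, ⟨hhc, h', hh'c, hh'⟩, hrk, hcomp⟩
      have hgA : ∀ x, ∃ z, g (a z) = g x := hGA g g' hg'r hg'
      set F : X → X := fun x => if hx : ∃ w, a w = x then h x else h (hgA x).choose with hF
      have haf : tmul a F = h := by
        funext x
        show (if hx : ∃ w, a w = a x then h (a x) else h (hgA (a x)).choose) = h x
        rw [dif_pos ⟨x, rfl⟩]
        exact hhc (a x) x (haa x)
      have hfa : tmul F a = g := by
        funext x
        show a (if hx : ∃ w, a w = x then h x else h (hgA x).choose) = g x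
        by_cases hx : ∃ w, a w = x
        · rw [dif_pos hx]
          exact (hcomp x hx).symm
        · rw [dif_neg hx]
          have h1 : h ((hgA x).choose) = h (a ((hgA x).choose)) := (hhc _ _ (haa _)).symm
          rw [h1, ← hcomp (a ((hgA x).choose)) ⟨_, rfl⟩]
          exact (hgA x).choose_spec
      have hinjh := inj_of_reg a h h' hh'c hh'
      have r1 : rnk (tmul h a) = rnk h := rnk_eq_of_inj a h hinjh
      have rimg : Finset.univ.image F = Finset.univ.image h := by
        ext y
        simp only [Finset.mem_image, Finset.mem_univ, true_and]
        constructor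
        · rintro ⟨x, rfl⟩
          show ∃ x', h x' = (if hx : ∃ w, a w = x then h x else h (hgA x).choose)
          by_cases hx : ∃ w, a w = x
          · rw [dif_pos hx]; exact ⟨x, rfl⟩
          · rw [dif_neg hx]; exact ⟨_, rfl⟩
        · rintro ⟨x, rfl⟩
          exact ⟨a x, congrFun haf x⟩
      refine ⟨F, ?_, hfa, haf⟩
      show rnk (tmul (tmul a F) a) = rnk F
      rw [haf, r1]
      simp only [rnk]
      rw [rimg]
  -- Part 5a
  · rintro g ⟨hgr, g', hg'r, hg'⟩
    have hgA : ∀ x, ∃ z, g (a z) = g x := hGA g g' hg'r hg'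
    have hfixg : ∀ x, a (g x) = g x := fun x => hfix (g x) (hgr (Set.mem_range_self x))
    refine ⟨g, ?_, funext fun x => hfixg x⟩
    show rnk (tmul (tmul a g) a) = rnk g
    have e : tmul (tmul a g) a = tmul a g := funext fun x => hfixg (a x)
    rw [e]
    have himg : Finset.univ.image (tmul a g) = Finset.univ.image g := by
      ext y
      simp only [Finset.mem_image, Finset.mem_univ, true_and, tmul]
      constructor
      · rintro ⟨x, rfl⟩; exact ⟨a x, rfl⟩
      · rintro ⟨x, rfl⟩; exact hgA x
    simp only [rnk]
    rw [himg]
  -- Part 5b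
  · rintro h ⟨hhc, h', hh'c, hh'⟩
    have hah : tmul a h = h := funext fun x => hhc (a x) x (haa x)
    refine ⟨h, ?_, hah⟩
    show rnk (tmul (tmul a h) a) = rnk h
    rw [hah]
    exact rnk_eq_of_inj a h (inj_of_reg a h h' hh'c hh')
end

section
/- Let X be a finite set with |X| = n and a ∈ T_X an idempotent with rank(a) = r, 1 < r < n, image A and kernel α. Then the maps φ₁ : Reg(T(X,A)) → T_A, g ↦ g|_A, and φ₂ : Reg(T(X,α)) → T_A, g ↦ (ga)|_A, are surjective semigroup homomorphisms onto the full transformation semigroup T_A on A; the compositions P → Reg(T(X,A)) → T_A (f ↦ (fa)|_A) and P → Reg(T(X,α)) → T_A (f ↦ (afa)|_A) agree; and the resulting map φ : P → T_A, f ↦ (fa)|_A, is a surjective semigroup homomorphism from P = Reg(T_X^a) onto T_A. -/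
/-- The map `T_X → T_A`, `g ↦ (ga)|_A`, where `A = im a`.  When `im g ⊆ A` and `a` is
idempotent this is just the restriction `g|_A`. -/
def restr {X : Type*} (a g : X → X) : ↥(Set.range a) → ↥(Set.range a) :=
  fun x => ⟨a (g ↑x), ⟨g ↑x, rfl⟩⟩

theorem stmt_11 {X : Type*} [Fintype X] [DecidableEq X]
    (n : ℕ) (hn : n = Fintype.card X)
    (a : X → X) (ha : tmul a a = a) (r : ℕ) (hr : rnk a = r)
    (h1r : 1 < r) (hrn : r < n)
    (P RegTXA RegTXα : Set (X → X))
    (hP : P = {f : X → X | rnk (tmul (tmul a f) a) = rnk f})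
    (hRegTXA : RegTXA = {g : X → X | Set.range g ⊆ Set.range a ∧
      ∃ h : X → X, Set.range h ⊆ Set.range a ∧ tmul (tmul g h) g = g})
    (hRegTXα : RegTXα = {g : X → X | (∀ x y : X, a x = a y → g x = g y) ∧
      ∃ h : X → X, (∀ x y : X, a x = a y → h x = h y) ∧ tmul (tmul g h) g = g}) :
    -- on Reg(T(X,A)) the map φ₁ = restr is genuinely g ↦ g|_A
    (∀ g ∈ RegTXA, ∀ x : ↥(Set.range a), (restr a g x : X) = g ↑x) ∧
    -- φ₁ : Reg(T(X,A)) → T_A is a homomorphism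
    (∀ g ∈ RegTXA, ∀ h ∈ RegTXA, restr a (tmul g h) = tmul (restr a g) (restr a h)) ∧
    -- φ₁ is surjective onto T_A
    (∀ q : ↥(Set.range a) → ↥(Set.range a), ∃ g ∈ RegTXA, restr a g = q) ∧
    -- φ₂ : Reg(T(X,α)) → T_A, g ↦ (ga)|_A, is a homomorphism
    (∀ g ∈ RegTXα, ∀ h ∈ RegTXα, restr a (tmul g h) = tmul (restr a g) (restr a h)) ∧
    -- φ₂ is surjective onto T_A
    (∀ q : ↥(Set.range a) → ↥(Set.range a), ∃ g ∈ RegTXα, restr a g = q) ∧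
    -- the two compositions P → T_A agree: φ₁(fa) = φ₂(af), both equal to f ↦ (fa)|_A
    (∀ f ∈ P, restr a (tmul f a) = restr a (tmul a f) ∧ restr a (tmul f a) = restr a f) ∧
    -- the resulting map φ : P → T_A, f ↦ (fa)|_A, is a homomorphism
    (∀ f ∈ P, ∀ g ∈ P, restr a (vmul a f g) = tmul (restr a f) (restr a g)) ∧
    -- φ is surjective onto T_A
    (∀ q : ↥(Set.range a) → ↥(Set.range a), ∃ f ∈ P, restr a f = q) := by

  have haa : ∀ x, a (a x) = a x := fun x => congrFun ha x
  have hne : Nonempty X := by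
    have : 0 < Fintype.card X := by omega
    exact Fintype.card_pos_iff.mp this
  have hfix : ∀ y ∈ Set.range a, a y = y := by
    rintro y ⟨w, rfl⟩; exact haa w
  -- the canonical lift of q : T_A to X → X
  have key : ∀ q : ↥(Set.range a) → ↥(Set.range a),
      ∃ g : X → X, (Set.range g ⊆ Set.range a) ∧ (∀ x y, a x = a y → g x = g y) ∧
        (∀ x, g (a x) = g x) ∧ restr a g = q ∧
        (∃ h : X → X, Set.range h ⊆ Set.range a ∧ (∀ x y, a x = a y → h x = h y) ∧
          tmul (tmul g h) g = g) := by
    intro q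
    refine ⟨fun x => ↑(q ⟨a x, ⟨x, rfl⟩⟩), ?_, ?_, ?_, ?_, ?_⟩
    · rintro y ⟨x, rfl⟩; exact (q ⟨a x, ⟨x, rfl⟩⟩).2
    · intro x y hxy
      exact congrArg _ (congrArg q (Subtype.ext hxy))
    · intro x
      exact congrArg _ (congrArg q (Subtype.ext (haa x)))
    · funext x
      apply Subtype.ext
      show a ↑(q ⟨a ↑x, ⟨↑x, rfl⟩⟩) = ↑(q x)
      rw [hfix _ (q ⟨a ↑x, ⟨↑x, rfl⟩⟩).2]
      exact congrArg _ (congrArg q (Subtype.ext (hfix _ x.2)))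
    · set g : X → X := fun x => ↑(q ⟨a x, ⟨x, rfl⟩⟩) with hg
      have hga : ∀ x, g (a x) = g x := fun x =>
        congrArg (Subtype.val) (congrArg q (Subtype.ext (haa x)))
      have hgr : ∀ x, a (g x) = g x := fun x => hfix _ (q ⟨a x, ⟨x, rfl⟩⟩).2
      refine ⟨fun y => a (Function.invFun g (a y)), ?_, ?_, ?_⟩
      · rintro z ⟨y, rfl⟩; exact ⟨_, rfl⟩
      · intro x y hxy
        show a (Function.invFun g (a x)) = a (Function.invFun g (a y))
        rw [hxy]
      · funext x
        show g (a (Function.invFun g (a (g x)))) = g x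
        rw [hgr x, hga]
        exact Function.invFun_eq ⟨x, rfl⟩
  refine ⟨?_, ?_, ?_, ?_, ?_, ?_, ?_, ?_⟩
  · rintro g hg x
    rw [hRegTXA] at hg
    exact hfix _ (hg.1 ⟨↑x, rfl⟩)
  · rintro g hg h hh
    rw [hRegTXA] at hg
    funext x
    apply Subtype.ext
    show a (h (g ↑x)) = a (h (a (g ↑x)))
    rw [hfix _ (hg.1 ⟨↑x, rfl⟩)]
  · intro q
    obtain ⟨g, h1, h2, h3, h4, h5, h6, h7, h8⟩ := key q
    exact ⟨g, by rw [hRegTXA]; exact ⟨h1, h5, h6, h8⟩, h4⟩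
  · rintro g hg h hh
    rw [hRegTXα] at hh
    funext x
    apply Subtype.ext
    show a (h (g ↑x)) = a (h (a (g ↑x)))
    rw [hh.1 (g ↑x) (a (g ↑x)) (haa _).symm]
  · intro q
    obtain ⟨g, h1, h2, h3, h4, h5, h6, h7, h8⟩ := key q
    exact ⟨g, by rw [hRegTXα]; exact ⟨h2, h5, h7, h8⟩, h4⟩
  · intro f hf
    constructor
    · funext x
      apply Subtype.ext
      show a (a (f ↑x)) = a (f (a ↑x))
      rw [haa, hfix _ x.2]
    · funext x
      apply Subtype.ext
      show a (a (f ↑x)) = a (f ↑x)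
      exact haa _
  · intro f hf g hg
    funext x
    rfl
  · intro q
    obtain ⟨g, h1, h2, h3, h4, h5⟩ := key q
    refine ⟨g, ?_, h4⟩
    rw [hP]
    show rnk (tmul (tmul a g) a) = rnk g
    have : tmul (tmul a g) a = g := by
      funext x
      show a (g (a x)) = g x
      rw [h3, hfix _ (h1 ⟨x, rfl⟩)]
    rw [this]
end

section
/- Let X be a finite set with |X| = n and a ∈ T_X an idempotent with rank(a) = r, 1 < r < n, image A = {a₁,…,a_r} and kernel classes A₁,…,A_r with a_i ∈ A_i and λ_i = |A_i|. Let φ : P → T_A, f ↦ f̄ = (fa)|_A, and let f ∈ P with rank(f) = m, whose image values f₁,…,f_m satisfy f_i ∈ A_{k_i}, and put I = {k₁,…,k_m}. If the ℋ-class H_{f̄} of f̄ in T_A is a group ℋ-class, then every ℋ^a-class of P contained in Ĥ_f = φ^{-1}(H_{f̄}) is a group isomorphic to the symmetric group S_m, and Ĥ_f is a rectangular group: it is isomorphic to the direct product of an m^{n−r} × Λ_I rectangular band with S_m, where Λ_I = ∏_{i∈I} λ_i. -/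
/-- ℛ-preorder (`x ∈ yQ¹`) within the subset `Q` of a semigroup with operation `op`. -/
def rPreOn {T : Type*} (Q : Set T) (op : T → T → T) (x y : T) : Prop :=
  x = y ∨ ∃ u ∈ Q, op y u = x

/-- ℒ-preorder (`x ∈ Q¹y`) within the subset `Q`. -/
def lPreOn {T : Type*} (Q : Set T) (op : T → T → T) (x y : T) : Prop :=
  x = y ∨ ∃ u ∈ Q, op u y = x

/-- Green's ℋ relation on the semigroup `(Q, op)`. -/
def hRelOn {T : Type*} (Q : Set T) (op : T → T → T) (x y : T) : Prop :=
  rPreOn Q op x y ∧ rPreOn Q op y x ∧ lPreOn Q op x y ∧ lPreOn Q op y x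

theorem stmt_12 {X : Type*} [Fintype X] [DecidableEq X]
    (n : ℕ) (hn : n = Fintype.card X)
    (a : X → X) (ha : tmul a a = a) (r : ℕ) (hr : rnk a = r)
    (h1r : 1 < r) (hrn : r < n)
    (P : Set (X → X)) (hP : P = {f : X → X | rnk (tmul (tmul a f) a) = rnk f})
    (f : X → X) (hf : f ∈ P) (m : ℕ) (hm : m = rnk f)
    -- the ℋ-class of f̄ in T_A is a group ℋ-class (it contains an idempotent)
    (hgrp : ∃ q : ↥(Set.range a) → ↥(Set.range a),
      hRelOn Set.univ tmul q (restr a f) ∧ tmul q q = q)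
    -- Ĥ_f = φ⁻¹(H_f̄)
    (Hhat : Set (X → X))
    (hHhat : Hhat = {g : X → X | g ∈ P ∧ hRelOn Set.univ tmul (restr a g) (restr a f)})
    -- Λ_I = ∏_{i ∈ I} λ_i, the product of the sizes of the kernel classes of a
    -- meeting the image of f (equivalently indexed by im (fa) ⊆ A)
    (ΛI : ℕ)
    (hΛI : ΛI = ∏ y ∈ Finset.univ.image (fun x => a (f x)),
      (Finset.univ.filter fun x => a x = y).card) :
    -- every ℋ^a-class of P contained in Ĥ_f is a group isomorphic to S_m
    (∀ g ∈ Hhat, ∃ i : Equiv.Perm (Fin m) → (X → X),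
      Function.Injective i ∧
      Set.range i = {h : X → X | h ∈ P ∧ hRelOn P (vmul a) h g} ∧
      ∀ p q : Equiv.Perm (Fin m), i (p * q) = vmul a (i p) (i q)) ∧
    -- Ĥ_f is a rectangular group: it is isomorphic to the direct product of an
    -- m^(n-r) × Λ_I rectangular band with S_m
    (∃ j : (Fin (m ^ (n - r)) × Fin ΛI) × Equiv.Perm (Fin m) → (X → X),
      Function.Injective j ∧
      Set.range j = Hhat ∧
      ∀ p q : (Fin (m ^ (n - r)) × Fin ΛI) × Equiv.Perm (Fin m),
        j ((p.1.1, q.1.2), p.2 * q.2) = vmul a (j p) (j q)) := by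
  classical
  -- basic facts about the idempotent a
  have haa : ∀ x, a (a x) = a x := fun x => congrFun ha x
  have haA : ∀ x ∈ Set.range a, a x = x := by rintro x ⟨y, rfl⟩; exact haa y
  -- B = image of a∘f
  set Bf : Finset X := Finset.univ.image (fun x => a (f x)) with hBf
  have hfP : rnk (tmul (tmul a f) a) = rnk f := by
    have := hf; rw [hP] at this; exact this
  have hBsub : ∀ x, a (f x) ∈ Bf := fun x => Finset.mem_image_of_mem _ (Finset.mem_univ x)
  have hBA : ∀ b ∈ Bf, b ∈ Set.range a := by
    intro b hb
    obtain ⟨x, -, rfl⟩ := Finset.mem_image.1 hb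
    exact ⟨f x, rfl⟩
  have haB : ∀ b ∈ Bf, a b = b := fun b hb => haA b (hBA b hb)
  -- Cf = image of afa equals Bf, with card m
  set Cf : Finset X := Finset.univ.image (fun x => a (f (a x))) with hCf
  have hCB : Cf ⊆ Bf := by
    intro y hy
    obtain ⟨x, -, rfl⟩ := Finset.mem_image.1 hy
    exact hBsub (a x)
  have hCf_card : Cf.card = rnk f := hfP
  have hBf_le : Bf.card ≤ rnk f := by
    have : Bf = (Finset.univ.image f).image a := by
      rw [Finset.image_image]; rfl
    rw [this]; exact Finset.card_image_le
  have hCB_eq : Cf = Bf :=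
    Finset.eq_of_subset_of_card_le hCB (hCf_card ▸ hBf_le)
  have hBcard : Bf.card = m := by rw [← hCB_eq, hCf_card, ← hm]
  -- a is injective on the image of f
  have hainjf : Set.InjOn a (Finset.univ.image f) := by
    apply Finset.injOn_of_card_image_eq
    have h2 : (Finset.univ.image f).image a = Bf := by
      rw [Finset.image_image]; rfl
    rw [h2, hBcard, hm]; rfl
  -- extractor: consequences of hRelOn univ tmul on T_A
  have hHnec : ∀ u v : ↥(Set.range a) → ↥(Set.range a),
      hRelOn Set.univ tmul u v →
      (∀ z w, (v z = v w ↔ u z = u w)) ∧ Set.range u = Set.range v := by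
    intro u v ⟨r1, r2, l1, l2⟩
    constructor
    · intro z w
      constructor
      · intro hvw
        rcases r1 with h | ⟨w1, -, hw1⟩
        · rw [h]; exact hvw
        · rw [← hw1]; simp only [tmul]; rw [hvw]
      · intro huw
        rcases r2 with h | ⟨w1, -, hw1⟩
        · rw [h]; exact huw
        · rw [← hw1]; simp only [tmul]; rw [huw]
    · apply Set.Subset.antisymm
      · rcases l1 with h | ⟨w1, -, hw1⟩
        · rw [h]
        · rw [← hw1]; rintro y ⟨z, rfl⟩; exact ⟨w1 z, rfl⟩
      · rcases l2 with h | ⟨w1, -, hw1⟩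
        · rw [h]
        · rw [← hw1]; rintro y ⟨z, rfl⟩; exact ⟨w1 z, rfl⟩
  -- sufficient condition for hRelOn univ tmul on T_A
  have hHsuff : ∀ u v : ↥(Set.range a) → ↥(Set.range a),
      (∀ z w, (v z = v w ↔ u z = u w)) → Set.range u = Set.range v →
      hRelOn Set.univ tmul u v := by
    intro u v hker hrange
    have mk : ∀ (u v : ↥(Set.range a) → ↥(Set.range a)),
        (∀ z w, v z = v w → u z = u w) → rPreOn Set.univ tmul u v := by
      intro u v h
      right
      refine ⟨fun z => if hz : z ∈ Set.range v then u hz.choose else z, Set.mem_univ _, ?_⟩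
      funext z
      simp only [tmul]
      have hz : v z ∈ Set.range v := ⟨z, rfl⟩
      rw [dif_pos hz]
      exact h _ _ hz.choose_spec
    have ml : ∀ (u v : ↥(Set.range a) → ↥(Set.range a)),
        Set.range u ⊆ Set.range v → lPreOn Set.univ tmul u v := by
      intro u v h
      right
      refine ⟨fun z => (h ⟨z, rfl⟩).choose, Set.mem_univ _, ?_⟩
      funext z
      simp only [tmul]
      exact (h (⟨z, rfl⟩ : u z ∈ Set.range u)).choose_spec
    exact ⟨mk u v (fun z w h => (hker z w).1 h), mk v u (fun z w h => (hker z w).2 h),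
      ml u v hrange.le, ml v u hrange.ge⟩
  -- facts from the idempotent q in the H-class of f̄
  obtain ⟨q, hqH, hqq⟩ := hgrp
  have hqq' : ∀ z, q (q z) = q z := fun z => congrFun hqq z
  obtain ⟨hqker, hqrange⟩ := hHnec q (restr a f) hqH
  -- injectivity of b ↦ a (f b) on Bf
  have hFinj : ∀ b1 ∈ Bf, ∀ b2 ∈ Bf, a (f b1) = a (f b2) → b1 = b2 := by
    intro b1 hb1 b2 hb2 hab
    have h1 : ∀ b (hb : b ∈ Bf), (⟨b, hBA b hb⟩ : ↥(Set.range a)) ∈ Set.range (restr a f) := by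
      intro b hb
      have hb' : b ∈ Cf := hCB_eq ▸ hb
      obtain ⟨x, -, rfl⟩ := Finset.mem_image.1 hb'
      exact ⟨⟨a x, ⟨x, rfl⟩⟩, rfl⟩
    obtain ⟨z1, hz1⟩ := hqrange ▸ h1 b1 hb1
    obtain ⟨z2, hz2⟩ := hqrange ▸ h1 b2 hb2
    have hf12 : restr a f ⟨b1, hBA b1 hb1⟩ = restr a f ⟨b2, hBA b2 hb2⟩ := Subtype.ext hab
    have hq12 : q ⟨b1, hBA b1 hb1⟩ = q ⟨b2, hBA b2 hb2⟩ := (hqker _ _).1 hf12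
    rw [← hz1, ← hz2] at hq12
    rw [hqq', hqq'] at hq12
    rw [hz1, hz2] at hq12
    exact congrArg Subtype.val hq12
  -- every kernel class of f̄ meets Bf
  have hFex : ∀ x, ∃ b ∈ Bf, a (f b) = a (f (a x)) := by
    intro x
    have hx : (⟨a x, ⟨x, rfl⟩⟩ : ↥(Set.range a)) ∈ Set.univ := Set.mem_univ _
    set x' : ↥(Set.range a) := ⟨a x, ⟨x, rfl⟩⟩ with hx'
    have hy : q x' ∈ Set.range (restr a f) := hqrange ▸ ⟨x', rfl⟩
    obtain ⟨w, hw⟩ := hy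
    have hmem : (q x' : X) ∈ Bf := by
      rw [← hw]; exact hBsub _
    refine ⟨q x', hmem, ?_⟩
    have : restr a f (q x') = restr a f x' := (hqker _ _).2 (hqq' x')
    exact congrArg Subtype.val this
  -- the canonical projection ρ : X → Bf onto kernel classes of f̄
  have hErho : ∀ x : X, ∃! b, b ∈ Bf ∧ a (f b) = a (f (a x)) := by
    intro x
    obtain ⟨b, hb, hab⟩ := hFex x
    exact ⟨b, ⟨hb, hab⟩, fun c ⟨hc, hac⟩ => hFinj c hc b hb (by rw [hac, hab])⟩
  set ρ : X → X := fun x => (hErho x).choose with hρ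
  have hρmem : ∀ x, ρ x ∈ Bf := fun x => (hErho x).choose_spec.1.1
  have hρf : ∀ x, a (f (ρ x)) = a (f (a x)) := fun x => (hErho x).choose_spec.1.2
  have hρuniq : ∀ x b, b ∈ Bf → a (f b) = a (f (a x)) → b = ρ x :=
    fun x b hb hab => (hErho x).choose_spec.2 b ⟨hb, hab⟩
  have hρfix : ∀ b ∈ Bf, ρ b = b := by
    intro b hb
    exact (hρuniq b b hb (by rw [haB b hb])).symm
  have hρa : ∀ x, ρ (a x) = ρ x := by
    intro x
    exact hρuniq x (ρ (a x)) (hρmem _) (by rw [hρf, haa])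
  have hρker : ∀ x y, a (f (a x)) = a (f (a y)) → ρ x = ρ y := by
    intro x y h
    exact hρuniq y (ρ x) (hρmem x) (by rw [hρf, h])
  have hρker' : ∀ x y, ρ x = ρ y → a (f (a x)) = a (f (a y)) := by
    intro x y h
    rw [← hρf x, h, hρf]
  -- permutation machinery
  have hBcoe : Fintype.card ↥Bf = m := by rw [Fintype.card_coe]; exact hBcard
  let ε : Fin m ≃ ↥Bf := (Finset.equivFinOfCardEq hBcard).symm
  let Θ : Equiv.Perm (Fin m) → (↥Bf ≃ ↥Bf) := fun p =>
    (ε.symm.trans ((p⁻¹ : Equiv.Perm (Fin m)).trans ε))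
  have hΘapp : ∀ p x, Θ p x = ε (p⁻¹ (ε.symm x)) := fun p x => rfl
  have hΘmul : ∀ p q x, Θ (p * q) x = Θ q (Θ p x) := by
    intro p q x
    simp only [hΘapp, mul_inv_rev, Equiv.Perm.mul_apply, Equiv.symm_apply_apply]
  have hΘinj : Function.Injective Θ := by
    intro p q h
    have h1 : ∀ y, p⁻¹ y = q⁻¹ y := by
      intro y
      have h2 : Θ p (ε y) = Θ q (ε y) := by rw [h]
      rw [hΘapp, hΘapp, Equiv.symm_apply_apply] at h2
      exact ε.injective h2
    have : p⁻¹ = q⁻¹ := Equiv.ext h1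
    exact inv_injective this
  have hΘsurj : ∀ σ : ↥Bf ≃ ↥Bf, ∃ p, ∀ x, Θ p x = σ x := by
    intro σ
    refine ⟨((ε.trans σ).trans ε.symm)⁻¹, fun x => ?_⟩
    rw [hΘapp, inv_inv]
    simp only [Equiv.trans_apply, Equiv.apply_symm_apply]
  -- the parametrization map J
  let base : ({x : X // x ∉ Set.range a} → ↥Bf) → X → ↥Bf := fun e x =>
    if hx : x ∈ Set.range a then ⟨ρ x, hρmem x⟩ else e ⟨x, hx⟩
  let J : ({x : X // x ∉ Set.range a} → ↥Bf) × (∀ b : ↥Bf, {y : X // a y = ↑b}) ×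
      Equiv.Perm (Fin m) → (X → X) := fun etp x =>
    ↑(etp.2.1 (Θ etp.2.2 (base etp.1 x)))
  have hta : ∀ (t : ∀ b : ↥Bf, {y : X // a y = ↑b}) (b : ↥Bf), a ↑(t b) = ↑b :=
    fun t b => (t b).2
  have htinj : ∀ (t : ∀ b : ↥Bf, {y : X // a y = ↑b}) (b1 b2 : ↥Bf),
      (t b1 : X) = ↑(t b2) → b1 = b2 := by
    intro t b1 b2 h
    have := hta t b1
    rw [h, hta t b2] at this
    exact (Subtype.ext this).symm
  have hbaseA : ∀ e x, x ∈ Set.range a → base e x = ⟨ρ x, hρmem x⟩ := by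
    intro e x hx; simp only [base, dif_pos hx]
  have hbaseB : ∀ e (b : ↥Bf), base e ↑b = b := by
    intro e b
    rw [hbaseA e ↑b (hBA _ b.2)]
    exact Subtype.ext (hρfix ↑b b.2)
  have hbaseO : ∀ e x (hx : x ∉ Set.range a), base e x = e ⟨x, hx⟩ := by
    intro e x hx; simp only [base, dif_neg hx]
  have hJdef : ∀ e t p x, J (e, t, p) x = ↑(t (Θ p (base e x))) := fun e t p x => rfl
  have hJa : ∀ e t p x, a (J (e, t, p) x) = ↑(Θ p (base e x)) := by
    intro e t p x; rw [hJdef]; exact hta t _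
  have hJmul : ∀ e t p e' t' p',
      vmul a (J (e, t, p)) (J (e', t', p')) = J (e, t', p * p') := by
    intro e t p e' t' p'
    funext x
    show J (e', t', p') (a (J (e, t, p) x)) = _
    rw [hJa, hJdef, hJdef, hbaseB e' ((Θ p) (base e x)), hΘmul p p' (base e x)]
  have hJinj : Function.Injective J := by
    rintro ⟨e, t, p⟩ ⟨e', t', p'⟩ h
    have hB : ∀ b : ↥Bf, (t (Θ p b) : X) = ↑(t' (Θ p' b)) := by
      intro b
      have h1 := congrFun h (↑b : X)
      rwa [hJdef, hJdef, hbaseB, hbaseB] at h1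
    have hpp : p = p' := by
      apply hΘinj
      apply Equiv.ext
      intro b
      have h1 := hB b
      have h2 := congrArg a h1
      rw [hta, hta] at h2
      exact Subtype.ext h2
    subst hpp
    have htt : t = t' := by
      funext b
      obtain ⟨c, rfl⟩ := (Θ p).surjective b
      exact Subtype.ext (hB c)
    subst htt
    have hee : e = e' := by
      funext o
      have h1 := congrFun h (↑o : X)
      rw [hJdef, hJdef, hbaseO e _ o.2, hbaseO e' _ o.2] at h1
      have h2 := htinj t _ _ h1
      have h3 := (Θ p).injective h2
      simpa using h3
    subst hee
    rfl
  -- characterization of the range of restr a f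
  have hrangef : ∀ y : ↥(Set.range a), y ∈ Set.range (restr a f) ↔ (y : X) ∈ Bf := by
    intro y
    constructor
    · rintro ⟨z, rfl⟩; exact hBsub ↑z
    · intro hy
      have hy' : (y : X) ∈ Cf := hCB_eq ▸ hy
      obtain ⟨x, -, hx⟩ := Finset.mem_image.1 hy'
      exact ⟨⟨a x, ⟨x, rfl⟩⟩, Subtype.ext hx⟩
  -- (a) the image of J lands in Hhat
  have himJ : ∀ e t p, Finset.univ.image (J (e, t, p)) =
      Finset.univ.image (fun b : ↥Bf => (t b : X)) := by
    intro e t p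
    apply Finset.Subset.antisymm
    · intro y hy
      obtain ⟨x, -, rfl⟩ := Finset.mem_image.1 hy
      rw [hJdef]
      exact Finset.mem_image_of_mem _ (Finset.mem_univ _)
    · intro y hy
      obtain ⟨b, -, rfl⟩ := Finset.mem_image.1 hy
      refine Finset.mem_image.2 ⟨↑((Θ p).symm b), Finset.mem_univ _, ?_⟩
      rw [hJdef, hbaseB, Equiv.apply_symm_apply]
  have hrnkJ : ∀ e t p, rnk (J (e, t, p)) = m := by
    intro e t p
    show (Finset.univ.image (J (e, t, p))).card = m
    rw [himJ]
    rw [Finset.card_image_of_injective _ (fun b1 b2 h => htinj t b1 b2 h)]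
    rw [Finset.card_univ, hBcoe]
  have himJa : ∀ e t p, Finset.univ.image (fun x => a (J (e, t, p) (a x))) = Bf := by
    intro e t p
    apply Finset.Subset.antisymm
    · intro y hy
      obtain ⟨x, -, rfl⟩ := Finset.mem_image.1 hy
      rw [hJa]; exact (Θ p (base e (a x))).2
    · intro b hb
      refine Finset.mem_image.2 ⟨↑((Θ p).symm ⟨b, hb⟩), Finset.mem_univ _, ?_⟩
      rw [haA _ (hBA _ ((Θ p).symm ⟨b, hb⟩).2), hJa, hbaseB, Equiv.apply_symm_apply]
  have hJP : ∀ e t p, J (e, t, p) ∈ P := by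
    intro e t p
    rw [hP]
    show rnk (tmul (tmul a (J (e, t, p))) a) = rnk (J (e, t, p))
    have h4 : rnk (tmul (tmul a (J (e, t, p))) a) = m := by
      show (Finset.univ.image (fun x => a (J (e, t, p) (a x)))).card = m
      rw [himJa, hBcard]
    rw [h4, hrnkJ]
  have hJH : ∀ e t p, hRelOn Set.univ tmul (restr a (J (e, t, p))) (restr a f) := by
    intro e t p
    apply hHsuff
    · intro z w
      have key : restr a f z = restr a f w ↔ ρ ↑z = ρ ↑w := by
        rw [Subtype.ext_iff]
        show a (f ↑z) = a (f ↑w) ↔ _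
        constructor
        · intro h; exact hρker _ _ (by rw [haA _ z.2, haA _ w.2, h])
        · intro h
          have h2 := hρker' _ _ h
          rwa [haA _ z.2, haA _ w.2] at h2
      have keyJ : restr a (J (e, t, p)) z = restr a (J (e, t, p)) w ↔ ρ ↑z = ρ ↑w := by
        rw [Subtype.ext_iff]
        show a (J (e, t, p) ↑z) = a (J (e, t, p) ↑w) ↔ _
        rw [hJa, hJa, hbaseA e ↑z z.2, hbaseA e ↑w w.2]
        constructor
        · intro h
          have h2 := (Θ p).injective (Subtype.ext h)
          exact congrArg Subtype.val h2
        · intro h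
          have h2 : (⟨ρ ↑z, hρmem _⟩ : ↥Bf) = ⟨ρ ↑w, hρmem _⟩ := Subtype.ext h
          rw [h2]
      exact key.trans keyJ.symm
    · have hrangeJ : ∀ y : ↥(Set.range a),
          y ∈ Set.range (restr a (J (e, t, p))) ↔ (y : X) ∈ Bf := by
        intro y
        constructor
        · rintro ⟨z, rfl⟩
          show a (J (e, t, p) ↑z) ∈ Bf
          rw [hJa]; exact (Θ p (base e ↑z)).2
        · intro hy
          refine ⟨⟨↑((Θ p).symm ⟨↑y, hy⟩), hBA _ ((Θ p).symm ⟨↑y, hy⟩).2⟩, ?_⟩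
          apply Subtype.ext
          show a (J (e, t, p) ↑((Θ p).symm ⟨↑y, hy⟩)) = ↑y
          rw [hJa, hbaseB, Equiv.apply_symm_apply]
      exact Set.ext fun y => (hrangeJ y).trans (hrangef y).symm
  have hJHhat : ∀ e t p, J (e, t, p) ∈ Hhat := by
    intro e t p
    rw [hHhat]
    exact ⟨hJP e t p, hJH e t p⟩
  -- (b) every element of Hhat is in the range of J, and a is injective on its image
  have hsurjJ : ∀ g ∈ Hhat, (∃ e t p, J (e, t, p) = g) ∧
      (∀ u v : X, (∃ x, g x = u) → (∃ x, g x = v) → a u = a v → u = v) := by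
    intro g hg
    rw [hHhat] at hg
    obtain ⟨hgP, hgH⟩ := hg
    obtain ⟨hker, hrange⟩ := hHnec _ _ hgH
    have hcgA : ∀ x, a (g (a x)) ∈ Bf := by
      intro x
      have h1 : restr a g ⟨a x, ⟨x, rfl⟩⟩ ∈ Set.range (restr a f) :=
        hrange ▸ ⟨⟨a x, ⟨x, rfl⟩⟩, rfl⟩
      obtain ⟨z, hz⟩ := h1
      have h2 : a (f ↑z) = a (g (a x)) := congrArg Subtype.val hz
      rw [← h2]; exact hBsub _
    have h2 : Finset.univ.image (fun x => a (g (a x))) = Bf := by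
      apply Finset.Subset.antisymm
      · intro y hy
        obtain ⟨x, -, rfl⟩ := Finset.mem_image.1 hy
        exact hcgA x
      · intro b hb
        have h3 : (⟨b, hBA b hb⟩ : ↥(Set.range a)) ∈ Set.range (restr a g) := by
          rw [hrange]; exact (hrangef _).2 hb
        obtain ⟨z, hz⟩ := h3
        obtain ⟨x, hx⟩ := z.2
        refine Finset.mem_image.2 ⟨x, Finset.mem_univ _, ?_⟩
        have h4 := congrArg Subtype.val hz
        show a (g (a x)) = b
        rw [hx]; exact h4
    have hgrnk : rnk g = m := by
      have h1 : rnk (tmul (tmul a g) a) = rnk g := by rw [hP] at hgP; exact hgP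
      have h4 : rnk (tmul (tmul a g) a) = m := by
        show (Finset.univ.image (fun x => a (g (a x)))).card = m
        rw [h2, hBcard]
      rw [← h1, h4]
    have hGA : (Finset.univ.image a).image g = Finset.univ.image g := by
      apply Finset.eq_of_subset_of_card_le
      · rw [Finset.image_image]
        intro y hy
        obtain ⟨x, -, rfl⟩ := Finset.mem_image.1 hy
        exact Finset.mem_image_of_mem _ (Finset.mem_univ _)
      · have e1 : ((Finset.univ.image a).image g).image a =
            Finset.univ.image (fun x => a (g (a x))) := by
          rw [Finset.image_image, Finset.image_image]; rfl
        have e2 : (((Finset.univ.image a).image g).image a).card ≤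
            ((Finset.univ.image a).image g).card := Finset.card_image_le
        rw [e1, h2, hBcard] at e2
        have e3 : (Finset.univ.image g).card = m := hgrnk ▸ hgrnk.symm ▸ hgrnk
        calc (Finset.univ.image g).card = rnk g := rfl
          _ = m := hgrnk
          _ ≤ _ := e2
    have haginj : Set.InjOn a ↑(Finset.univ.image g) := by
      apply Finset.injOn_of_card_image_eq
      have e1 : (Finset.univ.image g).image a = Finset.univ.image (fun x => a (g (a x))) := by
        rw [← hGA, Finset.image_image, Finset.image_image]; rfl
      rw [e1, h2, hBcard]
      show m = rnk g
      rw [hgrnk]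
    have hmemim : ∀ x, g x ∈ Finset.univ.image g :=
      fun x => Finset.mem_image_of_mem _ (Finset.mem_univ x)
    have hcg : ∀ x, a (g x) ∈ Bf := by
      intro x
      have h3 : g x ∈ (Finset.univ.image a).image g := hGA ▸ hmemim x
      obtain ⟨y, hy, hyx⟩ := Finset.mem_image.1 h3
      obtain ⟨x', -, rfl⟩ := Finset.mem_image.1 hy
      rw [← hyx]
      exact hcgA x'
    have hσinj : ∀ b1 b2 : ↥Bf, a (g ↑b1) = a (g ↑b2) → b1 = b2 := by
      intro b1 b2 h
      have k1 : restr a g ⟨↑b1, hBA _ b1.2⟩ = restr a g ⟨↑b2, hBA _ b2.2⟩ := Subtype.ext h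
      have k2 := (hker _ _).2 k1
      have k3 := congrArg Subtype.val k2
      exact Subtype.ext (hFinj _ b1.2 _ b2.2 k3)
    let σ : ↥Bf → ↥Bf := fun b => ⟨a (g ↑b), hcg ↑b⟩
    have hσi : Function.Injective σ := fun b1 b2 h => hσinj b1 b2 (congrArg Subtype.val h)
    have hσbij : Function.Bijective σ := Finite.injective_iff_bijective.1 hσi
    let σe : ↥Bf ≃ ↥Bf := Equiv.ofBijective σ hσbij
    obtain ⟨p, hp⟩ := hΘsurj σe
    have hσe : ∀ b, a (g ↑(σe.symm b)) = ↑b := by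
      intro b
      have h3 : σ (σe.symm b) = b := σe.apply_symm_apply b
      exact congrArg Subtype.val h3
    let e0 : {x : X // x ∉ Set.range a} → ↥Bf := fun o => σe.symm ⟨a (g ↑o), hcg ↑o⟩
    refine ⟨⟨e0, fun b => ⟨g ↑(σe.symm b), hσe b⟩, p, ?_⟩, ?_⟩
    · funext x
      rw [hJdef, hp]
      show (g ↑(σe.symm (σe (base e0 x))) : X) = g x
      rw [Equiv.symm_apply_apply]
      by_cases hx : x ∈ Set.range a
      · rw [hbaseA e0 x hx]
        show g (ρ x) = g x
        have hav : a (g (ρ x)) = a (g x) := by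
          have k0 : restr a f ⟨ρ x, hBA _ (hρmem x)⟩ = restr a f ⟨x, hx⟩ := by
            apply Subtype.ext
            show a (f (ρ x)) = a (f x)
            rw [hρf x, haA x hx]
          have k1 := (hker _ _).1 k0
          exact congrArg Subtype.val k1
        exact haginj (Finset.mem_coe.2 (hmemim (ρ x))) (Finset.mem_coe.2 (hmemim x)) hav
      · rw [hbaseO e0 x hx]
        show g ↑(σe.symm ⟨a (g x), hcg x⟩) = g x
        exact haginj (Finset.mem_coe.2 (hmemim _)) (Finset.mem_coe.2 (hmemim x)) (hσe _)
    · rintro u v ⟨xu, rfl⟩ ⟨xv, rfl⟩ hauv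
      exact haginj (Finset.mem_coe.2 (hmemim xu)) (Finset.mem_coe.2 (hmemim xv)) hauv
  -- Part 1: each H^a-class inside Hhat is a group isomorphic to S_m
  have part1 : ∀ g ∈ Hhat, ∃ i : Equiv.Perm (Fin m) → (X → X),
      Function.Injective i ∧
      Set.range i = {h : X → X | h ∈ P ∧ hRelOn P (vmul a) h g} ∧
      ∀ p q : Equiv.Perm (Fin m), i (p * q) = vmul a (i p) (i q) := by
    intro g hg
    obtain ⟨⟨e0, t0, p0, hJg⟩, hainj⟩ := hsurjJ g hg
    have hgHhat := hg
    rw [hHhat] at hgHhat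
    obtain ⟨hgP, hgH⟩ := hgHhat
    obtain ⟨hkerg, hrangeg⟩ := hHnec _ _ hgH
    refine ⟨fun p => J (e0, t0, p), ?_, ?_, ?_⟩
    · intro p1 p2 h
      have h2 := hJinj h
      simpa using congrArg (fun z => z.2.2) h2
    · apply Set.eq_of_subset_of_subset
      · rintro y ⟨p, rfl⟩
        refine ⟨hJP e0 t0 p, ?_, ?_, ?_, ?_⟩
        · exact Or.inr ⟨J (e0, t0, p0⁻¹ * p), hJP _ _ _, by
            rw [← hJg, hJmul, mul_inv_cancel_left]⟩
        · exact Or.inr ⟨J (e0, t0, p⁻¹ * p0), hJP _ _ _, by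
            rw [hJmul, mul_inv_cancel_left, hJg]⟩
        · exact Or.inr ⟨J (e0, t0, p * p0⁻¹), hJP _ _ _, by
            rw [← hJg, hJmul, inv_mul_cancel_right]⟩
        · exact Or.inr ⟨J (e0, t0, p0 * p⁻¹), hJP _ _ _, by
            rw [hJmul, inv_mul_cancel_right, hJg]⟩
      · rintro h ⟨hhP, hr1, hr2, hl1, hl2⟩
        by_cases hhg : h = g
        · refine ⟨p0, ?_⟩
          show J (e0, t0, p0) = h
          rw [hJg, hhg]
        rcases hr1 with heq | ⟨u1, hu1P, hu1⟩; · exact absurd heq hhg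
        rcases hr2 with heq | ⟨u2, hu2P, hu2⟩; · exact absurd heq.symm hhg
        rcases hl1 with heq | ⟨u3, hu3P, hu3⟩; · exact absurd heq hhg
        rcases hl2 with heq | ⟨u4, hu4P, hu4⟩; · exact absurd heq.symm hhg
        -- h is in Hhat
        have hval1 : ∀ x, h x = u1 (a (g x)) := fun x => (congrFun hu1 x).symm
        have hval2 : ∀ x, g x = u2 (a (h x)) := fun x => (congrFun hu2 x).symm
        have hval3 : ∀ x, h x = g (a (u3 x)) := fun x => (congrFun hu3 x).symm
        have hval4 : ∀ x, g x = h (a (u4 x)) := fun x => (congrFun hu4 x).symm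
        have hhHhat : h ∈ Hhat := by
          rw [hHhat]
          refine ⟨hhP, ?_⟩
          apply hHsuff
          · intro z w
            have kgh : restr a g z = restr a g w ↔ restr a h z = restr a h w := by
              constructor
              · intro hzw
                apply Subtype.ext
                show a (h ↑z) = a (h ↑w)
                have hv : a (g ↑z) = a (g ↑w) := congrArg Subtype.val hzw
                rw [hval1, hval1, hv]
              · intro hzw
                apply Subtype.ext
                show a (g ↑z) = a (g ↑w)
                have hv : a (h ↑z) = a (h ↑w) := congrArg Subtype.val hzw
                rw [hval2, hval2, hv]
            exact (hkerg z w).trans kgh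
          · have hsub1 : Set.range (restr a h) ⊆ Set.range (restr a g) := by
              rintro y ⟨z, rfl⟩
              refine ⟨⟨a (u3 ↑z), ⟨u3 ↑z, rfl⟩⟩, ?_⟩
              apply Subtype.ext
              show a (g (a (u3 ↑z))) = a (h ↑z)
              rw [hval3]
            have hsub2 : Set.range (restr a g) ⊆ Set.range (restr a h) := by
              rintro y ⟨z, rfl⟩
              refine ⟨⟨a (u4 ↑z), ⟨u4 ↑z, rfl⟩⟩, ?_⟩
              apply Subtype.ext
              show a (h (a (u4 ↑z))) = a (g ↑z)
              rw [hval4]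
            rw [Set.Subset.antisymm hsub1 hsub2, hrangeg]
        obtain ⟨⟨e, t, p', hJh⟩, -⟩ := hsurjJ h hhHhat
        -- image of h equals image of g
        have him : Finset.univ.image h = Finset.univ.image g := by
          apply Finset.Subset.antisymm
          · intro y hy
            obtain ⟨x, -, rfl⟩ := Finset.mem_image.1 hy
            rw [hval3]
            exact Finset.mem_image_of_mem _ (Finset.mem_univ _)
          · intro y hy
            obtain ⟨x, -, rfl⟩ := Finset.mem_image.1 hy
            rw [hval4]
            exact Finset.mem_image_of_mem _ (Finset.mem_univ _)
        -- t-values lie in the image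
        have htmem : ∀ (e' : {x : X // x ∉ Set.range a} → ↥Bf)
            (t' : ∀ b : ↥Bf, {y : X // a y = ↑b}) (p'' : Equiv.Perm (Fin m)) (b : ↥Bf),
            J (e', t', p'') ↑((Θ p'').symm b) = ↑(t' b) := by
          intro e' t' p'' b
          rw [hJdef, hbaseB, Equiv.apply_symm_apply]
        have htt : t = t0 := by
          funext b
          apply Subtype.ext
          have m1 : (t b : X) ∈ Finset.univ.image g := by
            rw [← him, ← htmem e t p' b, hJh]
            exact Finset.mem_image_of_mem _ (Finset.mem_univ _)
          have m2 : (t0 b : X) ∈ Finset.univ.image g := by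
            rw [← htmem e0 t0 p0 b, hJg]
            exact Finset.mem_image_of_mem _ (Finset.mem_univ _)
          obtain ⟨x1, -, hx1⟩ := Finset.mem_image.1 m1
          obtain ⟨x2, -, hx2⟩ := Finset.mem_image.1 m2
          refine hainj _ _ ⟨x1, hx1⟩ ⟨x2, hx2⟩ ?_
          rw [hta, hta]
        have hee : e = e0 := by
          funext o
          -- key pointwise relation
          have hw : ∀ b : ↥Bf, a (u1 ↑(Θ p0 b)) = ↑(Θ p' b) := by
            intro b
            have k1 : a (h ↑b) = ↑(Θ p' b) := by
              rw [← hJh, hJa, hbaseB]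
            have k2 : a (g ↑b) = ↑(Θ p0 b) := by
              rw [← hJg, hJa, hbaseB]
            rw [← k1, hval1, k2]
          have k3 : a (h ↑o) = ↑(Θ p' (e o)) := by
            rw [← hJh, hJa, hbaseO e ↑o o.2]
          have k4 : a (g ↑o) = ↑(Θ p0 (e0 o)) := by
            rw [← hJg, hJa, hbaseO e0 ↑o o.2]
          have k5 : a (h ↑o) = ↑(Θ p' (e0 o)) := by
            rw [hval1, k4, hw (e0 o)]
          rw [k5] at k3
          exact (Θ p').injective (Subtype.ext k3.symm)
        refine ⟨p', ?_⟩
        show J (e0, t0, p') = h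
        rw [← hJh, htt, hee]
    · intro p1 p2
      exact (hJmul e0 t0 p1 e0 t0 p2).symm
  -- Part 2: cardinalities and the global parametrization
  have cardA : Fintype.card {x : X // x ∈ Set.range a} = r := by
    have e1 : ∀ x : X, x ∈ Set.range a ↔ x ∈ Finset.univ.image a := by
      intro x
      simp [Set.mem_range, Finset.mem_image]
    rw [Fintype.card_congr (Equiv.subtypeEquivRight e1), Fintype.card_coe]
    exact hr
  have cardO : Fintype.card {x : X // x ∉ Set.range a} = n - r := by
    rw [Fintype.card_subtype_compl, cardA, ← hn]
  have cardE : Fintype.card ({x : X // x ∉ Set.range a} → ↥Bf) = m ^ (n - r) := by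
    rw [Fintype.card_fun, hBcoe, cardO]
  have cardT : Fintype.card (∀ b : ↥Bf, {y : X // a y = ↑b}) = ΛI := by
    rw [Fintype.card_pi, hΛI]
    rw [← Finset.prod_coe_sort Bf (fun y => (Finset.univ.filter fun x => a x = y).card)]
    apply Finset.prod_congr rfl
    intro b _
    rw [Fintype.card_subtype]
  let eE : Fin (m ^ (n - r)) ≃ ({x : X // x ∉ Set.range a} → ↥Bf) :=
    (Fintype.equivFinOfCardEq cardE).symm
  let eT : Fin ΛI ≃ (∀ b : ↥Bf, {y : X // a y = ↑b}) :=
    (Fintype.equivFinOfCardEq cardT).symm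
  refine ⟨part1, ⟨fun pq => J (eE pq.1.1, eT pq.1.2, pq.2), ?_, ?_, ?_⟩⟩
  · rintro ⟨⟨u1, u2⟩, u3⟩ ⟨⟨v1, v2⟩, v3⟩ h
    have h1 := hJinj h
    simp only [Prod.mk.injEq] at h1 ⊢
    exact ⟨⟨eE.injective h1.1, eT.injective h1.2.1⟩, h1.2.2⟩
  · apply Set.eq_of_subset_of_subset
    · rintro y ⟨pq, rfl⟩
      exact hJHhat _ _ _
    · intro h hh
      obtain ⟨⟨e, t, p, hJh⟩, -⟩ := hsurjJ h hh
      refine ⟨((eE.symm e, eT.symm t), p), ?_⟩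
      show J (eE (eE.symm e), eT (eT.symm t), p) = h
      rw [Equiv.apply_symm_apply, Equiv.apply_symm_apply]
      exact hJh
  · intro pq qr
    exact (hJmul (eE pq.1.1) (eT pq.1.2) pq.2 (eE qr.1.1) (eT qr.1.2) qr.2).symm
end

section
/- Let X be a finite set with |X| = n and a ∈ T_X an idempotent with rank(a) = r, 1 < r < n, with kernel classes A₁,…,A_r and λ_i = |A_i|. Then the number of regular elements of the variant T_X^a is |Reg(T_X^a)| = Σ_{m=1}^{r} m!·m^{n−r}·S(r,m)·Σ_{I ⊆ {1,…,r}, |I| = m} Λ_I, where Λ_I = ∏_{i∈I} λ_i and S(r,m) is the Stirling number of the second kind, the number of partitions of an r-element set into m nonempty blocks. -/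
/-- Stirling numbers of the second kind: `stirl r m` is the number of partitions of an
`r`-element set into `m` nonempty blocks (standard recurrence). -/
def stirl : ℕ → ℕ → ℕ
  | 0, 0 => 1
  | 0, _ + 1 => 0
  | _ + 1, 0 => 0
  | r + 1, m + 1 => (m + 1) * stirl r (m + 1) + stirl r m

open Finset Function
lemma card_surj_fin (r m : ℕ) :
    (univ.filter fun g : Fin r → Fin m => Surjective g).card =
      Nat.factorial m * stirl r m := by
  induction r generalizing m with
  | zero =>
    cases m with
    | zero =>
      rw [filter_true_of_mem, card_univ]
      · simp [stirl]
      · intro g _ y; exact absurd y.2 (by omega)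
    | succ m =>
      rw [filter_false_of_mem, card_empty]
      · simp [stirl]
      · intro g _ hg
        obtain ⟨x, -⟩ := hg 0
        exact absurd x.2 (by omega)
  | succ r ih =>
    cases m with
    | zero =>
      rw [filter_false_of_mem, card_empty]
      · simp [stirl]
      · intro g _ _
        exact absurd (g 0).2 (by omega)
    | succ m =>
      -- fiberwise over g (Fin.last r)
      have step1 : (univ.filter fun g : Fin (r+1) → Fin (m+1) => Surjective g).card
          = ∑ v : Fin (m+1), ((univ.filter fun g : Fin (r+1) → Fin (m+1) => Surjective g).filter
              fun g => g (Fin.last r) = v).card := by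
        exact card_eq_sum_card_fiberwise (fun g _ => mem_univ _)
      have step2 : ∀ v : Fin (m+1),
          ((univ.filter fun g : Fin (r+1) → Fin (m+1) => Surjective g).filter
              fun g => g (Fin.last r) = v).card
          = (univ.filter fun p : Fin r → Fin (m+1) => ∀ w, w ≠ v → w ∈ Set.range p).card := by
        intro v
        apply card_bij (fun g _ => Fin.init g)
        · intro g hg
          simp only [mem_filter, mem_univ, true_and] at hg ⊢
          intro w hw
          obtain ⟨x, hx⟩ := hg.1 w
          rcases Fin.eq_castSucc_or_eq_last x with ⟨y, rfl⟩ | rfl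
          · exact ⟨y, hx⟩
          · exact absurd (hx.symm.trans hg.2) hw
        · intro g1 hg1 g2 hg2 h
          simp only [mem_filter, mem_univ, true_and] at hg1 hg2
          funext x
          rcases Fin.eq_castSucc_or_eq_last x with ⟨y, rfl⟩ | rfl
          · exact congrFun h y
          · rw [hg1.2, hg2.2]
        · intro p hp
          simp only [mem_filter, mem_univ, true_and] at hp
          refine ⟨Fin.snoc p v, ?_, ?_⟩
          · simp only [mem_filter, mem_univ, true_and, Fin.snoc_last, and_true]
            intro w
            by_cases hw : w = v
            · exact ⟨Fin.last r, by simp [hw]⟩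
            · obtain ⟨x, hx⟩ := hp w hw
              exact ⟨Fin.castSucc x, by simp [hx]⟩
          · funext x; simp [Fin.init]
      have step3 : ∀ v : Fin (m+1),
          (univ.filter fun p : Fin r → Fin (m+1) => ∀ w, w ≠ v → w ∈ Set.range p).card
          = (univ.filter fun p : Fin r → Fin (m+1) => Surjective p).card
            + (univ.filter fun p : Fin r → Fin (m+1) =>
                (∀ w, w ≠ v → w ∈ Set.range p) ∧ v ∉ Set.range p).card := by
        intro v
        have hiff : ∀ p : Fin r → Fin (m+1),
            (∀ w, w ≠ v → w ∈ Set.range p) ↔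
              (Surjective p ∨ ((∀ w, w ≠ v → w ∈ Set.range p) ∧ v ∉ Set.range p)) := by
          intro p
          constructor
          · intro h
            by_cases hv : v ∈ Set.range p
            · left; intro w
              by_cases hw : w = v
              · exact hw ▸ hv
              · exact h w hw
            · right; exact ⟨h, hv⟩
          · rintro (h | h) w hw
            · exact h w
            · exact h.1 w hw
        rw [filter_congr (fun p _ => by rw [hiff p]), filter_or]
        rw [card_union_of_disjoint]
        rw [disjoint_filter]
        intro p _ hp hcon
        exact hcon.2 (hp v)
      have step4 : ∀ v : Fin (m+1),
          (univ.filter fun p : Fin r → Fin (m+1) =>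
              (∀ w, w ≠ v → w ∈ Set.range p) ∧ v ∉ Set.range p).card
          = (univ.filter fun q : Fin r → Fin m => Surjective q).card := by
        intro v
        symm
        apply card_bij (fun q _ => v.succAbove ∘ q)
        · intro q hq
          simp only [mem_filter, mem_univ, true_and] at hq ⊢
          constructor
          · intro w hw
            have : w ∈ Set.range v.succAbove := by rw [Fin.range_succAbove]; exact hw
            obtain ⟨u, rfl⟩ := this
            obtain ⟨x, hx⟩ := hq u
            exact ⟨x, by simp [hx]⟩
          · rintro ⟨x, hx⟩
            exact Fin.succAbove_ne v (q x) hx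
        · intro q1 _ q2 _ h
          funext x
          exact Fin.succAbove_right_injective (congrFun h x)
        · intro p hp
          simp only [mem_filter, mem_univ, true_and] at hp
          have hmem : ∀ x, p x ∈ Set.range v.succAbove := by
            intro x
            rw [Fin.range_succAbove]
            intro hc
            exact hp.2 ⟨x, hc⟩
          refine ⟨fun x => (hmem x).choose, ?_, ?_⟩
          · simp only [mem_filter, mem_univ, true_and]
            intro u
            have hu : v.succAbove u ∈ Set.range p :=
              hp.1 _ (Fin.succAbove_ne v u)
            obtain ⟨x, hx⟩ := hu
            refine ⟨x, @Fin.succAbove_right_injective _ v _ _ ?_⟩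
            rw [(hmem x).choose_spec, hx]
          · funext x; exact (hmem x).choose_spec
      rw [step1]
      calc ∑ v : Fin (m+1), ((univ.filter fun g : Fin (r+1) → Fin (m+1) => Surjective g).filter
              fun g => g (Fin.last r) = v).card
          = ∑ _v : Fin (m+1), (Nat.factorial (m+1) * stirl r (m+1) + Nat.factorial m * stirl r m) := by
            apply Finset.sum_congr rfl
            intro v _
            rw [step2 v, step3 v, step4 v, ih (m+1), ih m]
        _ = Nat.factorial (m+1) * stirl (r+1) (m+1) := by
            rw [Finset.sum_const, card_univ, Fintype.card_fin]
            simp only [stirl, Nat.factorial_succ, smul_eq_mul]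
            ring

lemma card_surj_congr {α β α' β' : Type*} [Fintype α] [Fintype β] [Fintype α'] [Fintype β']
    [DecidableEq α] [DecidableEq β] [DecidableEq α'] [DecidableEq β']
    (e1 : α ≃ α') (e2 : β ≃ β') :
    (univ.filter fun g : α → β => Surjective g).card =
      (univ.filter fun g : α' → β' => Surjective g).card := by
  rw [← Fintype.card_subtype, ← Fintype.card_subtype]
  apply Fintype.card_congr
  exact (Equiv.arrowCongr e1 e2).subtypeEquiv (fun g => by
    simp [Equiv.arrowCongr, Equiv.surjective_comp, Equiv.comp_surjective])

lemma card_surj (α β : Type*) [Fintype α] [Fintype β] [DecidableEq α] [DecidableEq β] :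
    (univ.filter fun g : α → β => Surjective g).card =
      Nat.factorial (Fintype.card β) * stirl (Fintype.card α) (Fintype.card β) := by
  classical
  rw [card_surj_congr (Fintype.equivFin α) (Fintype.equivFin β), card_surj_fin]

lemma card_sdr {X : Type*} [Fintype X] [DecidableEq X] (a : X → X) (I : Finset X) :
    ((univ : Finset (Finset X)).filter fun B => B.image a = I ∧ B.card = I.card).card
      = ∏ y ∈ I, (univ.filter fun x => a x = y).card := by
  rw [← Finset.card_pi]
  symm
  apply card_bij (fun c _ => I.attach.image (fun y => c y.1 y.2))
  · intro c hc
    rw [Finset.mem_pi] at hc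
    have key : ∀ y : {y // y ∈ I}, a (c y.1 y.2) = y.1 := by
      intro y
      have := hc y.1 y.2
      simp only [mem_filter] at this
      exact this.2
    have hinj : Set.InjOn (fun y : {y // y ∈ I} => c y.1 y.2) I.attach := by
      intro y1 _ y2 _ h
      apply Subtype.ext
      rw [← key y1, ← key y2]
      simp only at h
      rw [h]
    simp only [mem_filter, mem_univ, true_and]
    constructor
    · rw [Finset.image_image]
      have : ((fun x => a x) ∘ fun y : {y // y ∈ I} => c y.1 y.2) = fun y => y.1 := by
        funext y; exact key y
      rw [this, Finset.attach_image_val]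
    · rw [Finset.card_image_of_injOn hinj, Finset.card_attach]
  · intro c1 hc1 c2 hc2 h
    rw [Finset.mem_pi] at hc1 hc2
    funext y hy
    have h1 : c1 y hy ∈ I.attach.image (fun z : {z // z ∈ I} => c1 z.1 z.2) :=
      mem_image.mpr ⟨⟨y, hy⟩, mem_attach _ _, rfl⟩
    rw [h] at h1
    obtain ⟨z, -, hz⟩ := mem_image.mp h1
    have ha1 : a (c1 y hy) = y := by
      have := hc1 y hy; simp only [mem_filter] at this; exact this.2
    have ha2 : a (c2 z.1 z.2) = z.1 := by
      have := hc2 z.1 z.2; simp only [mem_filter] at this; exact this.2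
    have : z.1 = y := by rw [← ha2, hz, ha1]
    subst this
    exact hz.symm
  · intro B hB
    simp only [mem_filter, mem_univ, true_and] at hB
    obtain ⟨hI, hcard⟩ := hB
    have hinj : Set.InjOn a B := by
      rw [← Finset.card_image_iff, hI, hcard]
    have hex : ∀ y ∈ I, ∃ x, x ∈ B ∧ a x = y := by
      intro y hy
      rw [← hI] at hy
      obtain ⟨x, hx, hax⟩ := mem_image.mp hy
      exact ⟨x, hx, hax⟩
    refine ⟨fun y hy => (hex y hy).choose, ?_, ?_⟩
    · rw [Finset.mem_pi]
      intro y hy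
      simp only [mem_filter, mem_univ, true_and]
      exact (hex y hy).choose_spec.2
    · apply Finset.Subset.antisymm
      · intro x hx
        obtain ⟨y, -, hy⟩ := mem_image.mp hx
        rw [← hy]
        exact (hex y.1 y.2).choose_spec.1
      · intro x hx
        have hy : a x ∈ I := hI ▸ mem_image_of_mem a hx
        have hspec := (hex (a x) hy).choose_spec
        have : (hex (a x) hy).choose = x :=
          hinj hspec.1 hx hspec.2
        apply mem_image.mpr
        exact ⟨⟨a x, hy⟩, mem_attach _ _, this⟩

lemma count_fiber {X : Type*} [Fintype X] [DecidableEq X] (Y B : Finset X) :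
    (univ.filter fun f : X → X => (∀ x, f x ∈ B) ∧ Y.image f = B).card
      = Nat.factorial B.card * stirl Y.card B.card
          * B.card ^ (Fintype.card X - Y.card) := by
  classical
  have key : (univ.filter fun f : X → X => (∀ x, f x ∈ B) ∧ Y.image f = B).card
      = ((univ.filter fun g : {x // x ∈ Y} → {x // x ∈ B} => Surjective g) ×ˢ
          (univ : Finset ({x // x ∉ Y} → {x // x ∈ B}))).card := by
    refine card_bij' (fun f hf => (fun y => ⟨f y.1, (mem_filter.mp hf).2.1 y.1⟩,
        fun c => ⟨f c.1, (mem_filter.mp hf).2.1 c.1⟩))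
      (fun p _ => fun x => if hx : x ∈ Y then (p.1 ⟨x, hx⟩).1 else (p.2 ⟨x, hx⟩).1)
      ?hi ?hj ?li ?ri
    case hi =>
      intro f hf
      obtain ⟨-, hfB, hfY⟩ := mem_filter.mp hf
      rw [Finset.mem_product]
      refine ⟨mem_filter.mpr ⟨mem_univ _, ?_⟩, mem_univ _⟩
      rintro ⟨b, hb⟩
      rw [← hfY] at hb
      obtain ⟨y, hy, hfy⟩ := mem_image.mp hb
      exact ⟨⟨y, hy⟩, Subtype.ext hfy⟩
    case hj =>
      intro p hp
      rw [Finset.mem_product] at hp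
      have hsurj : Surjective p.1 := (mem_filter.mp hp.1).2
      refine mem_filter.mpr ⟨mem_univ _, ?_, ?_⟩
      · intro x
        by_cases hx : x ∈ Y
        · simp only [dif_pos hx]; exact (p.1 ⟨x, hx⟩).2
        · simp only [dif_neg hx]; exact (p.2 ⟨x, hx⟩).2
      · apply Finset.Subset.antisymm
        · intro b hb
          obtain ⟨y, hy, hfy⟩ := mem_image.mp hb
          rw [← hfy]
          simp only [dif_pos hy]
          exact (p.1 ⟨y, hy⟩).2
        · intro b hb
          obtain ⟨y, hy⟩ := hsurj ⟨b, hb⟩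
          apply mem_image.mpr
          refine ⟨y.1, y.2, ?_⟩
          simp only [dif_pos y.2, Subtype.coe_eta, hy]
    case li =>
      intro f hf
      funext x
      by_cases hx : x ∈ Y
      · simp only [dif_pos hx]
      · simp only [dif_neg hx]
    case ri =>
      intro p hp
      apply Prod.ext
      · funext y
        apply Subtype.ext
        simp only [dif_pos y.2]
      · funext c
        apply Subtype.ext
        simp only [dif_neg c.2]
  rw [key, Finset.card_product, card_surj, card_univ, Fintype.card_fun]
  have h1 : Fintype.card {x // x ∈ B} = B.card := Fintype.card_coe B
  have h2 : Fintype.card {x // x ∈ Y} = Y.card := Fintype.card_coe Y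
  have h3 : Fintype.card {x // x ∉ Y} = Fintype.card X - Y.card := by
    rw [Fintype.card_subtype_compl, h2]
  rw [h1, h2, h3]


theorem stmt_13 {X : Type*} [Fintype X] [DecidableEq X]
    (n : ℕ) (hn : n = Fintype.card X)
    (a : X → X) (ha : tmul a a = a) (r : ℕ) (hr : rnk a = r)
    (h1r : 1 < r) (hrn : r < n) :
    -- |Reg(T_X^a)| = Σ_{m=1}^{r} m!·m^{n−r}·S(r,m)·Σ_{|I|=m} Λ_I
    {f : X → X | rnk (tmul (tmul a f) a) = rnk f}.ncard =
      ∑ m ∈ Finset.Icc 1 r,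
        Nat.factorial m * m ^ (n - r) * stirl r m *
          ∑ I ∈ Finset.powersetCard m (Finset.univ.image a),
            ∏ y ∈ I, (Finset.univ.filter fun x => a x = y).card := by
  classical
  set Y : Finset X := Finset.univ.image a with hYdef
  have hYcard : Y.card = r := hr
  have hXne : Nonempty X := by
    have : 0 < Fintype.card X := by omega
    exact Fintype.card_pos_iff.mp this
  -- image of a f a
  have himg : ∀ f : X → X, Finset.univ.image (tmul (tmul a f) a) = (Y.image f).image a := by
    intro f
    show Finset.univ.image (fun x => a (f (a x))) = _
    rw [hYdef, Finset.image_image, Finset.image_image]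
    rfl
  -- characterization of regularity
  have hchar : ∀ f : X → X, (rnk (tmul (tmul a f) a) = rnk f) ↔
      (Y.image f = Finset.univ.image f ∧
        ((Finset.univ.image f).image a).card = (Finset.univ.image f).card) := by
    intro f
    have h1 : ((Y.image f).image a).card ≤ (Y.image f).card := Finset.card_image_le
    have h2 : (Y.image f).card ≤ (Finset.univ.image f).card :=
      Finset.card_le_card (Finset.image_subset_image (Finset.subset_univ Y))
    simp only [rnk, himg f]
    constructor
    · intro h
      have hYf : Y.image f = Finset.univ.image f :=
        Finset.eq_of_subset_of_card_le (Finset.image_subset_image (Finset.subset_univ Y))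
          (by omega)
      refine ⟨hYf, ?_⟩
      rw [← hYf]
      omega
    · rintro ⟨hYf, hc⟩
      rw [hYf, hc]
  -- set of good images
  set T : Finset (Finset X) :=
    Finset.univ.filter (fun B => B.Nonempty ∧ (B.image a).card = B.card) with hTdef
  have hTmem : ∀ B : Finset X, B ∈ T ↔ (B.Nonempty ∧ (B.image a).card = B.card) := by
    intro B; simp [hTdef]
  -- step 1: ncard to filter
  rw [show {f : X → X | rnk (tmul (tmul a f) a) = rnk f}.ncard
      = (Finset.univ.filter fun f : X → X => rnk (tmul (tmul a f) a) = rnk f).card by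
    rw [Set.ncard_eq_toFinset_card']
    simp [Set.toFinset_setOf]]
  rw [Finset.filter_congr (fun f _ => by rw [hchar f])]
  -- step 2: fiberwise over image
  have hmaps : ∀ f ∈ Finset.univ.filter (fun f : X → X =>
      Y.image f = Finset.univ.image f ∧
        ((Finset.univ.image f).image a).card = (Finset.univ.image f).card),
      Finset.univ.image f ∈ T := by
    intro f hf
    rw [Finset.mem_filter] at hf
    rw [hTmem]
    exact ⟨Finset.image_nonempty.mpr Finset.univ_nonempty, hf.2.2⟩
  rw [Finset.card_eq_sum_card_fiberwise hmaps]
  -- step 3: each fiber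
  have hfiber : ∀ B ∈ T,
      ((Finset.univ.filter (fun f : X → X =>
        Y.image f = Finset.univ.image f ∧
          ((Finset.univ.image f).image a).card = (Finset.univ.image f).card)).filter
            fun f => Finset.univ.image f = B).card
      = Nat.factorial B.card * stirl r B.card * B.card ^ (n - r) := by
    intro B hB
    rw [hTmem] at hB
    have heq : (Finset.univ.filter (fun f : X → X =>
        Y.image f = Finset.univ.image f ∧
          ((Finset.univ.image f).image a).card = (Finset.univ.image f).card)).filter
            (fun f => Finset.univ.image f = B)
        = Finset.univ.filter fun f : X → X => (∀ x, f x ∈ B) ∧ Y.image f = B := by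
      ext f
      simp only [Finset.mem_filter, Finset.mem_univ, true_and]
      constructor
      · rintro ⟨⟨h1, h2⟩, h3⟩
        exact ⟨fun x => h3 ▸ Finset.mem_image_of_mem f (Finset.mem_univ x), h1.trans h3⟩
      · rintro ⟨h1, h2⟩
        have hsub : Finset.univ.image f ⊆ B := by
          intro y hy
          obtain ⟨x, -, rfl⟩ := Finset.mem_image.mp hy
          exact h1 x
        have hsup : B ⊆ Finset.univ.image f :=
          h2 ▸ Finset.image_subset_image (Finset.subset_univ Y)
        have himgB := Finset.Subset.antisymm hsub hsup
        exact ⟨⟨h2.trans himgB.symm, by rw [himgB, hB.2]⟩, himgB⟩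
    rw [heq, count_fiber Y B, hYcard, ← hn]
  rw [Finset.sum_congr rfl hfiber]
  -- step 4: group by cardinality
  have hmaps2 : ∀ B ∈ T, B.card ∈ Finset.Icc 1 r := by
    intro B hB
    rw [hTmem] at hB
    rw [Finset.mem_Icc]
    have h1 : 0 < B.card := Finset.card_pos.mpr hB.1
    have h2 : (B.image a).card ≤ Y.card := by
      apply Finset.card_le_card
      intro y hy
      obtain ⟨x, -, rfl⟩ := Finset.mem_image.mp hy
      exact Finset.mem_image_of_mem a (Finset.mem_univ x)
    omega
  rw [← Finset.sum_fiberwise_of_maps_to hmaps2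
    (fun B => Nat.factorial B.card * stirl r B.card * B.card ^ (n - r))]
  apply Finset.sum_congr rfl
  intro m hm
  have hm1 : 1 ≤ m := (Finset.mem_Icc.mp hm).1
  have hcardT : (T.filter fun B => B.card = m).card
      = ∑ I ∈ Finset.powersetCard m Y, ∏ y ∈ I, (Finset.univ.filter fun x => a x = y).card := by
    have hmaps3 : ∀ B ∈ T.filter (fun B => B.card = m), B.image a ∈ Finset.powersetCard m Y := by
      intro B hB
      rw [Finset.mem_filter, hTmem] at hB
      rw [Finset.mem_powersetCard]
      constructor
      · intro y hy
        obtain ⟨x, -, rfl⟩ := Finset.mem_image.mp hy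
        exact Finset.mem_image_of_mem a (Finset.mem_univ x)
      · rw [hB.1.2, hB.2]
    rw [Finset.card_eq_sum_card_fiberwise hmaps3]
    apply Finset.sum_congr rfl
    intro I hI
    have hIm : I.card = m := (Finset.mem_powersetCard.mp hI).2
    rw [← card_sdr a I]
    congr 1
    ext B
    simp only [Finset.mem_filter, Finset.mem_univ, true_and, hTmem]
    constructor
    · rintro ⟨⟨⟨hne, hc⟩, hcm⟩, hia⟩
      exact ⟨hia, hcm.trans hIm.symm⟩
    · rintro ⟨hia, hc⟩
      have hBm : B.card = m := hc.trans hIm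
      refine ⟨⟨⟨Finset.card_pos.mp (by omega), ?_⟩, hBm⟩, hia⟩
      rw [hia, hc]
  calc ∑ B ∈ T.filter (fun B => B.card = m),
        Nat.factorial B.card * stirl r B.card * B.card ^ (n - r)
      = ∑ _B ∈ T.filter (fun B => B.card = m),
        Nat.factorial m * stirl r m * m ^ (n - r) := by
        apply Finset.sum_congr rfl
        intro B hB
        rw [(Finset.mem_filter.mp hB).2]
    _ = (T.filter (fun B => B.card = m)).card * (Nat.factorial m * stirl r m * m ^ (n - r)) := by
        rw [Finset.sum_const, smul_eq_mul]
    _ = Nat.factorial m * m ^ (n - r) * stirl r m *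
          ∑ I ∈ Finset.powersetCard m Y, ∏ y ∈ I, (Finset.univ.filter fun x => a x = y).card := by
        rw [hcardT]
        ring
end

section
/- Let X be a finite set with |X| = n and a ∈ T_X an idempotent with rank(a) = r, 1 < r < n. Let P = Reg(T_X^a) and let D = {f ∈ P : rank(f) = r} be its top 𝒟^a-class. Then D equals the set RP(P) of regularity preserving elements of P; that is, for b ∈ P, the variant semigroup P^b (underlying set P, operation x ∘_b y = x⋆b⋆y = x·a·b·a·y) is regular if and only if rank(b) = r. -/
open Finset

/-- The rank of a composite through `b` is at most the rank of `b`. -/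
lemma rnk_pre {X : Type*} [Fintype X] [DecidableEq X] (F k : X → X) :
    rnk (fun z => F (k z)) ≤ rnk F := by
  simp only [rnk]
  apply Finset.card_le_card
  intro w hw
  obtain ⟨z, -, rfl⟩ := mem_image.mp hw
  exact mem_image_of_mem F (mem_univ _)

lemma rnk_post {X : Type*} [Fintype X] [DecidableEq X] (h F : X → X) :
    rnk (fun z => h (F z)) ≤ rnk F := by
  simp only [rnk]
  calc (univ.image fun z => h (F z)).card
      = ((univ.image F).image h).card := by rw [Finset.image_image]; rfl
    _ ≤ (univ.image F).card := Finset.card_image_le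

lemma rnk_mid {X : Type*} [Fintype X] [DecidableEq X] (h b k : X → X) :
    rnk (fun z => h (b (k z))) ≤ rnk b := by
  simp only [rnk]
  calc (univ.image fun z => h (b (k z))).card
      = ((univ.image fun z => b (k z)).image h).card := by
        rw [Finset.image_image]; rfl
    _ ≤ (univ.image fun z => b (k z)).card := Finset.card_image_le
    _ = ((univ.image k).image b).card := by rw [Finset.image_image]; rfl
    _ ≤ (univ.image b).card :=
        Finset.card_le_card (Finset.image_subset_image (Finset.subset_univ _))

theorem stmt_14 {X : Type*} [Fintype X] [DecidableEq X]
    (n : ℕ) (hn : n = Fintype.card X)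
    (a : X → X) (ha : tmul a a = a) (r : ℕ) (hr : rnk a = r)
    (h1r : 1 < r) (hrn : r < n)
    (P D : Set (X → X))
    (hP : P = {f : X → X | rnk (tmul (tmul a f) a) = rnk f})
    (hD : D = {f : X → X | f ∈ P ∧ rnk f = r}) :
    -- D = RP(P): for b ∈ P the variant P^b (operation x ∘_b y = x ⋆ b ⋆ y)
    -- is regular iff rank b = r
    ∀ b ∈ P,
      ((∀ x ∈ P, ∃ y ∈ P,
          vmul a (vmul a (vmul a (vmul a x b) y) b) x = x) ↔ b ∈ D) := by
  classical
  subst hP hD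
  intro b hbP
  have hb : rnk (fun z => a (b (a z))) = rnk b := hbP
  have haa : ∀ z, a (a z) = a z := fun z => congrFun ha z
  have hbr_le : rnk b ≤ rnk a := by
    calc rnk b = rnk (fun z => a (b (a z))) := hb.symm
      _ ≤ rnk a := rnk_pre a (fun z => b (a z))
  constructor
  · -- regularity of the variant implies rnk b = r
    intro hreg
    have haP : a ∈ {f : X → X | rnk (tmul (tmul a f) a) = rnk f} := by
      simp only [Set.mem_setOf_eq, ha]
    obtain ⟨y, hy, heq⟩ := hreg a haP
    have h1 : rnk a ≤ rnk b := by
      conv_lhs => rw [← heq]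
      exact rnk_mid (fun w => a (a (b (a (y (a w)))))) b (fun z => a (a z))
    exact ⟨hbP, le_antisymm (hr ▸ hbr_le) (hr ▸ h1)⟩
  · -- rnk b = r implies regularity of the variant
    rintro ⟨-, hbr⟩
    intro x hxP
    have hx : rnk (fun z => a (x (a z))) = rnk x := hxP
    set A : Finset X := Finset.univ.image a with hA
    have hAmem : ∀ z : X, a z ∈ A := fun z => mem_image_of_mem a (mem_univ z)
    have hafix : ∀ w ∈ A, a w = w := by
      intro w hw
      obtain ⟨z, -, rfl⟩ := mem_image.mp hw
      exact haa z
    -- the map φ = b then a is a bijection of A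
    have himg1 : A.image (fun w => a (b w)) = univ.image (fun z => a (b (a z))) := by
      rw [hA, Finset.image_image]; rfl
    have hcardφ : (A.image (fun w => a (b w))).card = A.card := by
      rw [himg1]
      have h2 : (univ.image fun z => a (b (a z))).card = rnk b := hb
      rw [h2, hbr, ← hr]; rfl
    have hinjφ : Set.InjOn (fun w => a (b w)) ↑A := Finset.card_image_iff.mp hcardφ
    have hsurjφ : A.image (fun w => a (b w)) = A := by
      apply Finset.eq_of_subset_of_card_le
      · intro w hw
        obtain ⟨v, -, rfl⟩ := mem_image.mp hw
        exact hAmem _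
      · exact le_of_eq hcardφ.symm
    -- inverse q of φ on A
    have hqex : ∀ w : X, ∃ v : X, w ∈ A → v ∈ A ∧ a (b v) = w := by
      intro w
      by_cases h : w ∈ A
      · have hw' : w ∈ A.image (fun w => a (b w)) := by rw [hsurjφ]; exact h
        obtain ⟨v, hv, hφ⟩ := mem_image.mp hw'
        exact ⟨v, fun _ => ⟨hv, hφ⟩⟩
      · exact ⟨w, fun h' => absurd h' h⟩
    choose q hq using hqex
    have hq2 : ∀ v ∈ A, q (a (b v)) = v := by
      intro v hv
      have h1 := hq (a (b v)) (hAmem _)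
      exact hinjφ h1.1 hv h1.2
    -- facts about x : x(A) = im x, and a is injective on im x
    set Ix : Finset X := Finset.univ.image x with hIx
    have hxA : A.image x = Ix := by
      apply Finset.eq_of_subset_of_card_le
      · rw [hIx, hA]
        exact Finset.image_subset_image (Finset.subset_univ _)
      · have h1 : rnk (fun z => a (x (a z))) ≤ rnk (fun z => x (a z)) :=
          rnk_post a (fun z => x (a z))
        have h2 : (A.image x).card = rnk (fun z => x (a z)) := by
          rw [hA, Finset.image_image]; rfl
        rw [h2]
        calc Ix.card = rnk x := rfl
          _ = rnk (fun z => a (x (a z))) := hx.symm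
          _ ≤ rnk (fun z => x (a z)) := h1
    have hinja : Set.InjOn a ↑Ix := by
      apply Finset.card_image_iff.mp
      apply le_antisymm Finset.card_image_le
      have h1 : rnk (fun z => a (x (a z))) ≤ rnk (fun z => a (x z)) :=
        rnk_pre (fun z => a (x z)) a
      have h2 : (Ix.image a).card = rnk (fun z => a (x z)) := by
        rw [hIx, Finset.image_image]; rfl
      rw [h2]
      calc Ix.card = rnk x := rfl
        _ = rnk (fun z => a (x (a z))) := hx.symm
        _ ≤ rnk (fun z => a (x z)) := h1
    -- the "inverse" g : for u in im x, g(a u) lies in A and x(g(a u)) = u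
    have hgex : ∀ w : X, ∃ t : X, ∀ u, u ∈ Ix → a u = w → t ∈ A ∧ x t = u := by
      intro w
      by_cases h : ∃ u, u ∈ Ix ∧ a u = w
      · obtain ⟨u, hu, hau⟩ := h
        have hu' : u ∈ A.image x := by rw [hxA]; exact hu
        obtain ⟨t, ht, hxt⟩ := mem_image.mp hu'
        refine ⟨t, fun u' hu' hau' => ?_⟩
        have huu : u = u' := hinja hu hu' (by rw [hau, hau'])
        exact ⟨ht, huu ▸ hxt⟩
      · exact ⟨w, fun u hu hau => absurd ⟨u, hu, hau⟩ h⟩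
    choose g hg using hgex
    have hg' : ∀ u ∈ Ix, g (a u) ∈ A ∧ x (g (a u)) = u :=
      fun u hu => hg (a u) u hu rfl
    -- the witness y
    refine ⟨fun w => q (a (g (q (a w)))), ?_, ?_⟩
    · -- y ∈ P
      have hyfix : tmul (tmul a (fun w => q (a (g (q (a w)))))) a
          = (fun w => q (a (g (q (a w))))) := by
        funext z
        show a (q (a (g (q (a (a z)))))) = q (a (g (q (a z))))
        rw [haa z]
        exact hafix _ (hq _ (hAmem _)).1
      simp only [Set.mem_setOf_eq]
      rw [hyfix]
    · -- the regularity equation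
      funext z
      show x (a (b (a (q (a (g (q (a (a (b (a (x z))))))))))))  = x z
      set u : X := x z with hu
      have huIx : u ∈ Ix := mem_image_of_mem x (mem_univ z)
      rw [haa (b (a u))]
      rw [hq2 (a u) (hAmem u)]
      obtain ⟨hgA, hgx⟩ := hg' u huIx
      rw [hafix _ hgA]
      rw [hafix _ (hq (g (a u)) hgA).1]
      rw [(hq (g (a u)) hgA).2, hgx]
end

section
/- Let n, r, m be integers with 1 < r < n and 2 ≤ m ≤ r, and let λ₁,…,λ_r be positive integers with λ₁ + ⋯ + λ_r = n. Then: (i) for every subset I ⊆ {1,…,r} with |I| = m, one has ∏_{i∈I} λ_i ≤ m^{n−r}; and (ii) Σ_{I ⊆ {1,…,r}, |I| = m} ∏_{i∈I} λ_i ≤ m^{n−r}·S(r,m), where S(r,m) is the Stirling number of the second kind (the number of partitions of an r-element set into m nonempty blocks). In particular (the case m = r), λ₁⋯λ_r ≤ r^{n−r}. -/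
theorem stirl_eq_stirlingSecond : stirl = Nat.stirlingSecond := by
  funext r m
  induction r generalizing m with
  | zero => cases m <;> rfl
  | succ r ih => cases m <;> simp [stirl, Nat.stirlingSecond_succ_succ, ih]

namespace Nat

theorem le_stirlingSecond_succ_two (n : ℕ) : n ≤ stirlingSecond (n + 1) 2 := by
  induction n with
  | zero => exact Nat.zero_le _
  | succ n ih =>
    have : stirlingSecond (n + 1 + 1) 2 = 2 * stirlingSecond (n + 1) 2 + 1 := by
      rw [stirlingSecond_succ_succ (n + 1) 1, stirlingSecond_one_right]
    omega

theorem choose_le_stirlingSecond {n k : ℕ} (hk : 2 ≤ k) :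
    n.choose k ≤ stirlingSecond n k := by
  induction n generalizing k with
  | zero => simp [choose_eq_zero_of_lt (show 0 < k by omega)]
  | succ n ih =>
    obtain ⟨j, rfl⟩ : ∃ j, k = j + 1 := ⟨k - 1, by omega⟩
    rw [choose_succ_succ', stirlingSecond_succ_succ]
    have hsucc : n.choose (j + 1) ≤ (j + 1) * stirlingSecond n (j + 1) :=
      (ih hk).trans (Nat.le_mul_of_pos_left _ (succ_pos j))
    obtain hj | rfl : 2 ≤ j ∨ j = 1 := by omega
    · have := ih hj
      omega
    -- `C(n, 1) = n` is not bounded by `S(n, 1) = 1`; the spare copy of `S(n, 2)` pays for it.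
    obtain _ | p := n
    · simp
    · have := ih le_rfl
      have := le_stirlingSecond_succ_two p
      rw [choose_one_right, stirlingSecond_one_right]
      simp only [one_add_one_eq_two] at hsucc ⊢
      omega

theorem le_pow_sub_one {k : ℕ} (hk : 2 ≤ k) (a : ℕ) : a ≤ k ^ (a - 1) := by
  have := Nat.lt_pow_self (n := a - 1) hk
  omega

end Nat

theorem Finset.prod_le_pow_sum_sub_one {ι : Type*} (s : Finset ι) (f : ι → ℕ) {k : ℕ}
    (hk : 2 ≤ k) : ∏ i ∈ s, f i ≤ k ^ ∑ i ∈ s, (f i - 1) :=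
  calc ∏ i ∈ s, f i ≤ ∏ i ∈ s, k ^ (f i - 1) :=
        prod_le_prod (fun _ _ => Nat.zero_le _) fun i _ => Nat.le_pow_sub_one hk (f i)
    _ = k ^ ∑ i ∈ s, (f i - 1) := prod_pow_eq_pow_sum _ _ _

theorem Finset.prod_le_pow_sum_sub_card {ι : Type*} [Fintype ι] (s : Finset ι) {f : ι → ℕ}
    (hf : ∀ i, 1 ≤ f i) {k : ℕ} (hk : 2 ≤ k) :
    ∏ i ∈ s, f i ≤ k ^ (∑ i, f i - Fintype.card ι) := by
  have hexcess : ∑ i, (f i - 1) = ∑ i, f i - Fintype.card ι := by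
    rw [sum_tsub_distrib _ fun i _ => hf i, sum_const, card_univ, smul_eq_mul, mul_one]
  calc ∏ i ∈ s, f i ≤ k ^ ∑ i ∈ s, (f i - 1) := s.prod_le_pow_sum_sub_one f hk
    _ ≤ k ^ (∑ i, f i - Fintype.card ι) :=
        hexcess ▸ Nat.pow_le_pow_right (by omega) (sum_le_sum_of_subset (subset_univ s))

theorem stmt_15_general (n r m : ℕ) (h1r : 1 < r) (h2m : 2 ≤ m)
    (lam : Fin r → ℕ) (hpos : ∀ i, 1 ≤ lam i) (hsum : ∑ i, lam i = n) :
    -- (i)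
    (∀ I : Finset (Fin r), I.card = m → ∏ i ∈ I, lam i ≤ m ^ (n - r)) ∧
    -- (ii)
    (∑ I ∈ Finset.powersetCard m (Finset.univ : Finset (Fin r)), ∏ i ∈ I, lam i ≤
      m ^ (n - r) * stirl r m) ∧
    -- the case m = r
    (∏ i, lam i ≤ r ^ (n - r)) := by
  subst hsum
  have hbound (k : ℕ) (hk : 2 ≤ k) (I : Finset (Fin r)) :
      ∏ i ∈ I, lam i ≤ k ^ (∑ i, lam i - r) := by
    simpa using I.prod_le_pow_sum_sub_card hpos hk
  refine ⟨fun I _ => hbound m h2m I, ?_, hbound r h1r Finset.univ⟩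
  calc ∑ I ∈ Finset.powersetCard m Finset.univ, ∏ i ∈ I, lam i
      ≤ (Finset.powersetCard m (Finset.univ : Finset (Fin r))).card • m ^ (∑ i, lam i - r) :=
        Finset.sum_le_card_nsmul _ _ _ fun I _ => hbound m h2m I
    _ = r.choose m * m ^ (∑ i, lam i - r) := by simp
    _ ≤ m ^ (∑ i, lam i - r) * stirl r m := by
        rw [mul_comm, stirl_eq_stirlingSecond]
        exact Nat.mul_le_mul_left _ (Nat.choose_le_stirlingSecond h2m)

theorem stmt_15 (n r m : ℕ) (h1r : 1 < r) (hrn : r < n) (h2m : 2 ≤ m) (hmr : m ≤ r)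
    (lam : Fin r → ℕ) (hpos : ∀ i, 1 ≤ lam i) (hsum : ∑ i, lam i = n) :
    -- (i)
    (∀ I : Finset (Fin r), I.card = m → ∏ i ∈ I, lam i ≤ m ^ (n - r)) ∧
    -- (ii)
    (∑ I ∈ Finset.powersetCard m (Finset.univ : Finset (Fin r)), ∏ i ∈ I, lam i ≤
      m ^ (n - r) * stirl r m) ∧
    -- the case m = r
    (∏ i, lam i ≤ r ^ (n - r)) :=
  stmt_15_general n r m h1r h2m lam hpos hsum
end

section
/- Let X be a finite set with |X| = n and a ∈ T_X an idempotent with rank(a) = r, where 1 < r < n. Then the rank of the semigroup Reg(T_X^a) of regular elements of the variant T_X^a (under the operation ⋆) is r^{n−r} + 1. -/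
/-!
Write `A` for the fixed points of the idempotent `a`, so `|A| = r`. A regular `f` satisfies
`f(A) = f(X)` with `a` injective on `f(X)`. The regular elements of rank `r` form a Rees matrix
semigroup over `Sym(A)` with trivial sandwich matrix: they are the maps `d ∘ π ∘ τ` with `τ` one
of the `r^(n-r)` retractions of `X` onto `A`, `π ∈ Sym(A)`, and `d` one of the sections of `a`,
of which there are at most `r^(n-r)` when `r ≥ 2`. Such a semigroup is generated by one element
per retraction as soon as every section occurs and the group parts generate `Sym(A)`; the
transpositions through a fixed point do, and there are enough retractions for them since `r < n`.

Every regular `f` equals `ρ ⋆ (a f a) ⋆ d` for a retraction `ρ` and a section `d`, and on maps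
of the form `a f a` the product `⋆` is composition, a copy of the full transformation monoid of
`A`. There a map of rank `k < r` is a map of rank `k + 1` followed by a collapse of one point of
`A` onto another, and all such collapses are conjugate under `Sym(A)`. So the `r^(n-r)` elements
of rank `r` and a single collapse generate.

Conversely, a product `f ⋆ g` of rank `r` has the kernel of `f`, so each of the `r^(n-r)`
kernels of retractions needs its own generator of rank `r`; since elements of rank `r` are closed
under `⋆` while constant maps are regular, one more generator is needed.
-/

open Function Set Equiv

namespace VariantRank

section GenBy

variable {T : Type*} {op : T → T → T} {M N : Set T}

theorem subset_genBy : M ⊆ genBy op M :=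
  fun _ hx => mem_sInter.2 fun _ hN => hN.1 hx

theorem op_mem_genBy {x y : T} (hx : x ∈ genBy op M) (hy : y ∈ genBy op M) :
    op x y ∈ genBy op M :=
  mem_sInter.2 fun N hN => hN.2 x (mem_sInter.1 hx N hN) y (mem_sInter.1 hy N hN)

theorem genBy_subset (hM : M ⊆ N) (hN : ∀ x ∈ N, ∀ y ∈ N, op x y ∈ N) : genBy op M ⊆ N :=
  fun _ hx => mem_sInter.1 hx N ⟨hM, hN⟩

theorem genBy_mono (h : M ⊆ N) : genBy op M ⊆ genBy op N :=
  genBy_subset (h.trans subset_genBy) fun _ hx _ hy => op_mem_genBy hx hy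

theorem image_genBy_subset {S : Type*} {op' : S → S → S} {Φ : T → S}
    (hΦ : ∀ x y, Φ (op x y) = op' (Φ x) (Φ y)) : Φ '' genBy op M ⊆ genBy op' (Φ '' M) := by
  rw [image_subset_iff]
  refine genBy_subset (fun x hx => subset_genBy (mem_image_of_mem Φ hx)) fun x hx y hy => ?_
  rw [mem_preimage, hΦ]
  exact op_mem_genBy hx hy

end GenBy

section Rees

variable {I J G : Type*} [Group G]

/-- The Rees matrix semigroup over `G` with trivial sandwich matrix; the group coordinates
multiply in reverse order, to match left-to-right composition of transformations. -/
def reesMul (x y : I × J × G) : I × J × G := (x.1, y.2.1, y.2.2 * x.2.2)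

theorem genBy_reesMul_eq_univ {s : I → J} (hs : Surjective s) {g : I → G}
    (hg : Submonoid.closure (range g) = ⊤) :
    genBy reesMul (range fun i => (i, s i, g i)) = univ := by
  set R := genBy reesMul (range fun i => (i, s i, g i))
  have hgen : ∀ i, (i, s i, g i) ∈ R := fun i => subset_genBy ⟨i, rfl⟩
  have hmid : ∀ w ∈ Submonoid.closure (range g), ∀ i i', (i, s i', g i' * w * g i) ∈ R := by
    intro w hw
    induction hw using Submonoid.closure_induction_left with
    | one => exact fun i i' => by simpa [reesMul] using op_mem_genBy (hgen i) (hgen i')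
    | mul_left x hx w _ ih =>
      obtain ⟨j, rfl⟩ := hx
      exact fun i i' => by simpa [reesMul, mul_assoc] using op_mem_genBy (ih i j) (hgen i')
  refine eq_univ_of_forall fun ⟨i, j, x⟩ => ?_
  obtain ⟨i', rfl⟩ := hs j
  simpa [mul_assoc] using hmid ((g i')⁻¹ * x * (g i)⁻¹) (hg ▸ Submonoid.mem_top _) i i'

end Rees

theorem mclosure_range_swap {α : Type*} [DecidableEq α] [Finite α] (x₀ : α) :
    Submonoid.closure (range (swap x₀)) = ⊤ := by
  rw [eq_top_iff, ← Perm.mclosure_isSwap, Submonoid.closure_le]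
  rintro _ ⟨x, y, -, rfl⟩
  have hx : swap x x₀ ∈ Submonoid.closure (range (swap x₀)) :=
    swap_comm x₀ x ▸ Submonoid.subset_closure ⟨x, rfl⟩
  exact SubmonoidClass.swap_mem_trans _ hx (Submonoid.subset_closure ⟨y, rfl⟩)

theorem exists_perm_apply_eq_apply_eq {α : Type*} [DecidableEq α] {p q x y : α} (hpq : p ≠ q)
    (hxy : x ≠ y) : ∃ σ : Perm α, σ p = x ∧ σ q = y := by
  have hq : swap p x q ≠ x := fun h =>
    hpq.symm <| (swap p x).injective (h.trans (swap_apply_left p x).symm)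
  refine ⟨swap (swap p x q) y * swap p x, ?_, ?_⟩
  · rw [Perm.mul_apply, swap_apply_left, swap_apply_of_ne_of_ne hq.symm hxy]
  · rw [Perm.mul_apply, swap_apply_left]

theorem exists_surjective_of_card_le {α β : Type*} [Finite α] [Finite β] [Nonempty β]
    (h : Nat.card β ≤ Nat.card α) : ∃ f : α → β, Surjective f := by
  cases nonempty_fintype α
  cases nonempty_fintype β
  rw [Nat.card_eq_fintype_card, Nat.card_eq_fintype_card] at h
  obtain ⟨e⟩ := Function.Embedding.nonempty_of_card_le h
  exact ⟨invFun e, invFun_surjective e.injective⟩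

theorem prod_le_pow_sum_tsub_one {ι : Type*} (s : Finset ι) (m : ι → ℕ) {r : ℕ} (hr : 2 ≤ r) :
    ∏ i ∈ s, m i ≤ r ^ ∑ i ∈ s, (m i - 1) := by
  rw [← Finset.prod_pow_eq_pow_sum]
  refine Finset.prod_le_prod' fun i _ => ?_
  cases m i with
  | zero => exact Nat.zero_le _
  | succ k =>
    calc k + 1 ≤ 2 ^ k := Nat.lt_two_pow_self
      _ ≤ r ^ (k + 1 - 1) := by simpa using Nat.pow_le_pow_left hr k

section Transformations

variable {X : Type*}

def retractions (a : X → X) : Set (X → X) :=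
  {τ | (∀ x, a (τ x) = τ x) ∧ ∀ x, τ (a x) = a x}

def sections (a : X → X) : Set (X → X) :=
  {d | (∀ x, a (d x) = a x) ∧ ∀ x, d (a x) = d x}

/-- The maps `a f a`. On them the variant product is plain composition, so they form a copy of
the full transformation monoid of the fixed points of `a`. -/
def localMonoid (a : X → X) : Set (X → X) :=
  {f | (∀ x, f (a x) = f x) ∧ ∀ x, a (f x) = f x}

def collapse [DecidableEq X] (a : X → X) (p q : fixedPoints a) : X → X :=
  fun x => if a x = p then q else a x

/-- Rees coordinates of the regular elements of maximal rank: `x ↦ d (π (τ x))` has the kernel of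
the retraction `τ` and the image of the section `d`. -/
def reesMap (a : X → X) (x : retractions a × sections a × Perm (fixedPoints a)) : X → X :=
  fun y => x.2.1.1 (x.2.2 ⟨x.1.1 y, x.1.2.1 y⟩)

variable {a f : X → X}

def selfRetraction (ha : ∀ x, a (a x) = a x) : retractions a := ⟨a, ha, ha⟩

def selfSection (ha : ∀ x, a (a x) = a x) : sections a := ⟨a, ha, ha⟩

theorem range_eq_fixedPoints (ha : ∀ x, a (a x) = a x) : range a = fixedPoints a :=
  Subset.antisymm (by rintro _ ⟨x, rfl⟩; exact ha x) fun y hy => ⟨y, hy⟩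

theorem range_eq_image_fixedPoints (ha : ∀ x, a (a x) = a x) (hf : ∀ x, f (a x) = f x) :
    range f = f '' fixedPoints a := by
  rw [← range_eq_fixedPoints ha, ← range_comp]
  exact congrArg range (funext hf).symm

theorem apply_eq_self_of_mem_retractions {τ : X → X} (hτ : τ ∈ retractions a) {y : X}
    (hy : y ∈ fixedPoints a) : τ y = y := by
  rw [← hy]
  exact hτ.2 y

theorem injOn_ker_retractions : InjOn Setoid.ker (retractions a) := by
  intro τ hτ τ' hτ' h
  funext x
  have hx : Setoid.ker τ' (τ x) x := h ▸ apply_eq_self_of_mem_retractions hτ (hτ.1 x)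
  rwa [Setoid.ker_def, apply_eq_self_of_mem_retractions hτ' (hτ.1 x)] at hx

theorem range_vmul (f g : X → X) : range (vmul a f g) = (g ∘ a) '' range f :=
  range_comp (g ∘ a) f

theorem reesMap_reesMul (x y : retractions a × sections a × Perm (fixedPoints a)) :
    reesMap a (reesMul x y) = vmul a (reesMap a x) (reesMap a y) := by
  obtain ⟨τ, d, π⟩ := x
  obtain ⟨τ', d', π'⟩ := y
  funext x
  set z := π ⟨τ.1 x, τ.2.1 x⟩
  have hz : a (d.1 z) = z := (d.2.1 z).trans z.2
  have hτ' : (⟨τ'.1 (a (d.1 z)), τ'.2.1 _⟩ : fixedPoints a) = z := by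
    ext
    rw [hz]
    exact apply_eq_self_of_mem_retractions τ'.2 z.2
  simp only [vmul, reesMap, reesMul, hτ', Perm.mul_apply, z]

theorem reesMap_selfSection (ha : ∀ x, a (a x) = a x) (τ : retractions a) :
    reesMap a (τ, selfSection ha, 1) = τ.1 :=
  funext τ.2.1

theorem reesMap_selfRetraction (ha : ∀ x, a (a x) = a x) (d : sections a) :
    reesMap a (selfRetraction ha, d, 1) = d.1 :=
  funext d.2.2

theorem reesMap_self_apply (ha : ∀ x, a (a x) = a x) (σ : Perm (fixedPoints a)) (x : X) :
    reesMap a (selfRetraction ha, selfSection ha, σ) x = σ ⟨a x, ha x⟩ :=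
  (σ _).2

theorem comp_mem_localMonoid (ha : ∀ x, a (a x) = a x) (f : X → X) :
    (fun x => a (f (a x))) ∈ localMonoid a :=
  ⟨fun x => by simp only [ha], fun x => ha _⟩

theorem collapse_mem_localMonoid [DecidableEq X] (ha : ∀ x, a (a x) = a x)
    (p q : fixedPoints a) : collapse a p q ∈ localMonoid a :=
  ⟨fun x => by simp only [collapse, ha], fun x => by simp only [collapse, apply_ite a, ha, q.2.eq]⟩

theorem collapse_eq_vmul [DecidableEq X] (ha : ∀ x, a (a x) = a x) {p q p₀ q₀ : fixedPoints a}
    {σ : Perm (fixedPoints a)} (hp : σ p = p₀) (hq : σ q = q₀) :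
    collapse a p q = vmul a (vmul a (reesMap a (selfRetraction ha, selfSection ha, σ))
      (collapse a p₀ q₀)) (reesMap a (selfRetraction ha, selfSection ha, σ⁻¹)) := by
  funext x
  have hfix : ∀ y : fixedPoints a, a y = y := fun y => y.2
  simp only [vmul, reesMap_self_apply, collapse, hfix, Perm.inv_def]
  by_cases h : a x = p
  · have hσ : σ ⟨a x, ha x⟩ = p₀ := (congrArg σ (Subtype.ext h)).trans hp
    rw [if_pos h]
    simp only [hσ, if_true, hfix, Subtype.coe_eta, ← hq, Equiv.symm_apply_apply]
  · have hσ : (σ ⟨a x, ha x⟩ : X) ≠ p₀ := by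
      rw [← hp, Ne, Subtype.coe_inj]
      exact fun e => h (congrArg Subtype.val (σ.injective e))
    simp only [h, if_false, hσ, hfix, Subtype.coe_eta, Equiv.symm_apply_apply]

theorem eq_vmul_vmul_of_retraction_of_section (ha : ∀ x, a (a x) = a x) {ρ d : X → X}
    (hρ : ρ ∈ retractions a) (hfρ : ∀ x, f (ρ x) = f x) (hdf : ∀ x, d (a (f x)) = f x) :
    f = vmul a (vmul a ρ fun x => a (f (a x))) d := by
  funext x
  simp only [vmul, ha, hρ.1 x, hfρ, hdf]

end Transformations

section Regular

variable {X : Type*} [Fintype X] [DecidableEq X] {a f g : X → X}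

variable (a) in
def variantReg : Set (X → X) := {f | rnk (tmul (tmul a f) a) = rnk f}

theorem rnk_eq_ncard_range (f : X → X) : rnk f = (range f).ncard := by
  rw [rnk, ← ncard_coe_finset, Finset.coe_image, Finset.coe_univ, image_univ]

theorem ncard_fixedPoints (ha : ∀ x, a (a x) = a x) : (fixedPoints a).ncard = rnk a := by
  rw [rnk_eq_ncard_range, range_eq_fixedPoints ha]

theorem rnk_vmul_le (f g : X → X) : rnk (vmul a f g) ≤ rnk f := by
  rw [rnk_eq_ncard_range, rnk_eq_ncard_range, range_vmul]
  exact ncard_image_le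

theorem mem_variantReg_iff : f ∈ variantReg a ↔ range (f ∘ a) = range f ∧ InjOn a (range f) := by
  have hsub : range (f ∘ a) ⊆ range f := range_comp_subset_range a f
  change rnk (a ∘ (f ∘ a)) = rnk f ↔ _
  rw [rnk_eq_ncard_range, rnk_eq_ncard_range, range_comp]
  constructor
  · intro h
    have heq : range (f ∘ a) = range f :=
      eq_of_subset_of_ncard_le hsub (h.symm.trans_le ncard_image_le)
    rw [heq] at h
    exact ⟨heq, injOn_of_ncard_image_eq h⟩
  · rintro ⟨heq, hinj⟩
    rw [heq, hinj.ncard_image]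

theorem rnk_le_of_mem_variantReg (hf : f ∈ variantReg a) : rnk f ≤ rnk a := by
  rw [← (hf : rnk _ = rnk f), rnk_eq_ncard_range, rnk_eq_ncard_range]
  exact ncard_le_ncard (range_comp_subset_range (f ∘ a) a)

theorem vmul_mem_variantReg (hf : f ∈ variantReg a) (hg : g ∈ variantReg a) :
    vmul a f g ∈ variantReg a := by
  rw [mem_variantReg_iff] at hf hg ⊢
  refine ⟨?_, hg.2.mono (range_comp_subset_range (a ∘ f) g)⟩
  change range ((g ∘ a) ∘ (f ∘ a)) = range ((g ∘ a) ∘ f)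
  rw [range_comp (g ∘ a) (f ∘ a), range_comp (g ∘ a) f, hf.1]

theorem localMonoid_subset_variantReg : localMonoid a ⊆ variantReg a := by
  intro f hf
  refine mem_variantReg_iff.2 ⟨congrArg range (funext hf.1), ?_⟩
  rintro _ ⟨x, rfl⟩ _ ⟨y, rfl⟩ h
  rwa [hf.2, hf.2] at h

theorem reesMap_mem_variantReg (x : retractions a × sections a × Perm (fixedPoints a)) :
    reesMap a x ∈ variantReg a := by
  obtain ⟨τ, d, π⟩ := x
  refine mem_variantReg_iff.2 ⟨(range_comp_subset_range a _).antisymm ?_, ?_⟩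
  · rintro _ ⟨y, rfl⟩
    refine ⟨τ.1 y, ?_⟩
    have h : τ.1 (a (τ.1 y)) = τ.1 y := by
      rw [τ.2.1 y]
      exact apply_eq_self_of_mem_retractions τ.2 (τ.2.1 y)
    simp only [comp_apply, reesMap, h]
  · refine LeftInvOn.injOn (f₁' := d.1) ?_
    rintro _ ⟨y, rfl⟩
    change d.1 (a (d.1 _)) = d.1 _
    rw [d.2.1, (π _).2]

theorem mem_variantReg_of_mem_retractions (ha : ∀ x, a (a x) = a x) {τ : X → X}
    (hτ : τ ∈ retractions a) : τ ∈ variantReg a := by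
  simpa only [reesMap_selfSection] using reesMap_mem_variantReg (⟨τ, hτ⟩, selfSection ha, 1)

theorem rnk_of_mem_retractions (ha : ∀ x, a (a x) = a x) {τ : X → X}
    (hτ : τ ∈ retractions a) : rnk τ = rnk a := by
  rw [rnk_eq_ncard_range, ← ncard_fixedPoints ha]
  congr 1
  exact Subset.antisymm (by rintro _ ⟨x, rfl⟩; exact hτ.1 x)
    fun y hy => ⟨y, apply_eq_self_of_mem_retractions hτ hy⟩

end Regular

section Generation

variable {X : Type*} [Fintype X] [DecidableEq X] {a f : X → X}

theorem mem_range_reesMap_of_mem_localMonoid (ha : ∀ x, a (a x) = a x) (hf : f ∈ localMonoid a)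
    (hr : rnk f = rnk a) : f ∈ range (reesMap a) := by
  have hrange := range_eq_image_fixedPoints ha hf.1
  have hinj : InjOn f (fixedPoints a) := injOn_of_ncard_image_eq <| by
    rw [← hrange, ← rnk_eq_ncard_range, hr, ncard_fixedPoints ha]
  let g : fixedPoints a → fixedPoints a := fun y => ⟨f y, hf.2 y⟩
  have hg : Injective g := fun y z h => Subtype.ext (hinj y.2 z.2 (congrArg Subtype.val h))
  refine ⟨(selfRetraction ha, selfSection ha,
    Equiv.ofBijective g (Finite.injective_iff_bijective.1 hg)), funext fun x => ?_⟩
  rw [reesMap_self_apply]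
  exact hf.1 x

theorem exists_eq_vmul_collapse (ha : ∀ x, a (a x) = a x) (hf : f ∈ localMonoid a)
    (hr : rnk f < rnk a) :
    ∃ f₁ ∈ localMonoid a, rnk f₁ = rnk f + 1 ∧
      ∃ p q : fixedPoints a, p ≠ q ∧ f = vmul a f₁ (collapse a p q) := by
  have hrange := range_eq_image_fixedPoints ha hf.1
  obtain ⟨α, hα, β, hβ, hfαβ, hαβ⟩ :
      ∃ α ∈ fixedPoints a, ∃ β ∈ fixedPoints a, f α = f β ∧ α ≠ β := by
    by_contra! hinj
    rw [rnk_eq_ncard_range, hrange, InjOn.ncard_image hinj, ncard_fixedPoints ha] at hr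
    exact lt_irrefl _ hr
  obtain ⟨p, hp, hpf⟩ : ∃ p ∈ fixedPoints a, p ∉ range f :=
    exists_mem_notMem_of_ncard_lt_ncard (by rwa [ncard_fixedPoints ha, ← rnk_eq_ncard_range])
  have hα' : a α = α := hα
  have hp' : a p = p := hp
  let f₁ : X → X := fun x => if a x = β then p else f x
  have hf₁ : f₁ ∈ localMonoid a :=
    ⟨fun x => by simp only [f₁, ha, hf.1], fun x => by simp only [f₁, apply_ite a, hp', hf.2]⟩
  have hrange₁ : range f₁ = insert p (range f) := by
    refine Subset.antisymm ?_ ?_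
    · rintro _ ⟨x, rfl⟩
      by_cases hx : a x = β <;> simp [f₁, hx]
    · rintro _ (rfl | ⟨x, rfl⟩)
      · exact ⟨β, by simp [f₁, show a β = β from hβ]⟩
      · by_cases hx : a x = β
        · refine ⟨α, ?_⟩
          rw [show f₁ α = f α from if_neg (by rwa [hα']), hfαβ, ← hx, hf.1]
        · exact ⟨x, by simp [f₁, hx]⟩
  refine ⟨f₁, hf₁, ?_, ⟨p, hp⟩, ⟨f α, hf.2 α⟩, ?_, funext fun x => ?_⟩
  · rw [rnk_eq_ncard_range, hrange₁, ncard_insert_of_notMem hpf, ← rnk_eq_ncard_range]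
  · exact fun h => hpf ⟨α, (congrArg Subtype.val h).symm⟩
  · by_cases hx : a x = β
    · simp [vmul, collapse, f₁, hx, hp', hfαβ, ← hf.1 x]
    · have hfx : f x ≠ p := fun h => hpf ⟨x, h⟩
      simp [vmul, collapse, f₁, hx, hf.2, hfx]

theorem exists_retraction_comp_eq (ha : ∀ x, a (a x) = a x) (hf : f ∈ variantReg a) :
    ∃ ρ ∈ retractions a, ∀ x, f (ρ x) = f x := by
  have h : ∀ x, ∃ y, f (a y) = f x := fun x =>
    mem_range.1 ((mem_variantReg_iff.1 hf).1 ▸ mem_range_self x)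
  choose g hg using h
  refine ⟨fun x => if a x = x then x else a (g x), ⟨fun x => ?_, fun x => ?_⟩, fun x => ?_⟩
  · dsimp only
    split_ifs with hx
    exacts [hx, ha _]
  · simp only [ha, if_true]
  · dsimp only
    split_ifs
    exacts [rfl, hg x]

theorem exists_section_comp_eq (ha : ∀ x, a (a x) = a x) (hf : f ∈ variantReg a) :
    ∃ d ∈ sections a, ∀ x, d (a (f x)) = f x := by
  classical
  have hinj := (mem_variantReg_iff.1 hf).2
  refine ⟨fun x => if h : ∃ y, a (f y) = a x then f h.choose else a x,
    ⟨fun x => ?_, fun x => by simp only [ha]⟩, fun x => ?_⟩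
  · dsimp only
    split_ifs with h
    exacts [h.choose_spec, ha x]
  · have h : ∃ y, a (f y) = a (a (f x)) := ⟨x, (ha _).symm⟩
    dsimp only
    rw [dif_pos h]
    exact hinj (mem_range_self _) (mem_range_self _) (h.choose_spec.trans (ha _))

theorem range_reesMap_subset_genBy {s : retractions a → sections a} (hs : Surjective s)
    {t : retractions a → fixedPoints a} (ht : Surjective t) (p₀ : fixedPoints a) :
    range (reesMap a) ⊆ genBy (vmul a) (range fun τ => reesMap a (τ, s τ, swap p₀ (t τ))) := by
  have hR := genBy_reesMul_eq_univ hs (g := swap p₀ ∘ t) <| by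
    rw [ht.range_comp]
    exact mclosure_range_swap p₀
  rw [← image_univ, ← hR]
  exact (image_genBy_subset reesMap_reesMul).trans (by rw [← range_comp]; rfl)

theorem variantReg_subset_genBy (ha : ∀ x, a (a x) = a x) {U : Set (X → X)}
    (hD : range (reesMap a) ⊆ genBy (vmul a) U) {p₀ q₀ : fixedPoints a} (hpq₀ : p₀ ≠ q₀)
    (hw : collapse a p₀ q₀ ∈ genBy (vmul a) U) : variantReg a ⊆ genBy (vmul a) U := by
  have hcollapse : ∀ p q : fixedPoints a, p ≠ q → collapse a p q ∈ genBy (vmul a) U := by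
    intro p q hpq
    obtain ⟨σ, hp, hq⟩ := exists_perm_apply_eq_apply_eq hpq hpq₀
    rw [collapse_eq_vmul ha hp hq]
    exact op_mem_genBy (op_mem_genBy (hD (mem_range_self _)) hw) (hD (mem_range_self _))
  have hlocal : ∀ f ∈ localMonoid a, f ∈ genBy (vmul a) U := by
    intro f hf
    induction h : rnk a - rnk f generalizing f with
    | zero =>
      have := rnk_le_of_mem_variantReg (localMonoid_subset_variantReg hf)
      exact hD (mem_range_reesMap_of_mem_localMonoid ha hf (by omega))
    | succ k ih =>
      obtain ⟨f₁, hf₁, hr₁, p, q, hpq, rfl⟩ := exists_eq_vmul_collapse ha hf (by omega)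
      exact op_mem_genBy (ih f₁ hf₁ (by omega)) (hcollapse p q hpq)
  intro f hf
  obtain ⟨ρ, hρ, hfρ⟩ := exists_retraction_comp_eq ha hf
  obtain ⟨d, hd, hdf⟩ := exists_section_comp_eq ha hf
  rw [eq_vmul_vmul_of_retraction_of_section ha hρ hfρ hdf]
  refine op_mem_genBy (op_mem_genBy ?_ (hlocal _ (comp_mem_localMonoid ha f))) ?_
  · exact hD ⟨(⟨ρ, hρ⟩, selfSection ha, 1), reesMap_selfSection ha _⟩
  · exact hD ⟨(selfRetraction ha, ⟨d, hd⟩, 1), reesMap_selfRetraction ha _⟩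

end Generation

section Count

variable {X : Type*} [Fintype X] [DecidableEq X] {a : X → X}

def retractionsEquiv (ha : ∀ x, a (a x) = a x) :
    retractions a ≃ (((fixedPoints a)ᶜ : Set X) → fixedPoints a) where
  toFun τ x := ⟨τ.1 x, τ.2.1 x⟩
  invFun F := ⟨fun x => if h : a x = x then x else F ⟨x, h⟩,
    fun x => by dsimp only; split_ifs with h; exacts [h, (F _).2], fun x => by simp [ha]⟩
  left_inv τ := Subtype.ext <| funext fun x => by
    dsimp only
    split_ifs with h
    exacts [(apply_eq_self_of_mem_retractions τ.2 h).symm, rfl]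
  right_inv F := funext fun x => Subtype.ext (dif_neg x.2)

def sectionsEquiv (ha : ∀ x, a (a x) = a x) :
    sections a ≃ ∀ y : fixedPoints a, {x // (⟨a x, ha x⟩ : fixedPoints a) = y} where
  toFun d y := ⟨d.1 y, Subtype.ext ((d.2.1 y).trans y.2)⟩
  invFun F := ⟨fun x => F ⟨a x, ha x⟩, fun _ => congrArg Subtype.val (F _).2,
    fun x => congrArg (fun z => (F z).1) (Subtype.ext (ha x))⟩
  left_inv d := Subtype.ext (funext d.2.2)
  right_inv F := funext fun y => Subtype.ext <|
    congrArg (fun z => (F z).1) (Subtype.ext y.2 : (⟨a y, ha y⟩ : fixedPoints a) = y)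

theorem ncard_retractions (ha : ∀ x, a (a x) = a x) :
    (retractions a).ncard = rnk a ^ (Fintype.card X - rnk a) := by
  rw [← Nat.card_coe_set_eq, Nat.card_congr (retractionsEquiv ha), Nat.card_fun,
    Nat.card_coe_set_eq, Nat.card_coe_set_eq, ncard_compl, ncard_fixedPoints ha,
    Nat.card_eq_fintype_card]

theorem ncard_sections_le (ha : ∀ x, a (a x) = a x) (h2 : 2 ≤ rnk a) :
    (sections a).ncard ≤ (retractions a).ncard := by
  have := Fintype.ofFinite (fixedPoints a)
  let g : X → fixedPoints a := fun x => ⟨a x, ha x⟩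
  let m : fixedPoints a → ℕ := fun y => Nat.card {x // g x = y}
  have hm : ∀ y, 1 ≤ m y := fun y => Nat.card_pos_iff.2 ⟨⟨⟨y, Subtype.ext y.2⟩⟩, inferInstance⟩
  have hsum : ∑ y, m y = Fintype.card X := by
    rw [← Nat.card_sigma, Nat.card_congr (Equiv.sigmaFiberEquiv g), Nat.card_eq_fintype_card]
  rw [← Nat.card_coe_set_eq, Nat.card_congr (sectionsEquiv ha), Nat.card_pi, ncard_retractions ha]
  -- a section picks a point in each fibre of `a`, and a fibre of size `m` has `m ≤ r ^ (m - 1)`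
  calc ∏ y, m y ≤ rnk a ^ ∑ y, (m y - 1) := prod_le_pow_sum_tsub_one _ _ h2
    _ = rnk a ^ (Fintype.card X - rnk a) := by
      rw [Finset.sum_tsub_distrib _ fun y _ => hm y, hsum, Finset.sum_const, smul_eq_mul,
        mul_one, Finset.card_univ, Fintype.card_eq_nat_card (α := fixedPoints a),
        Nat.card_coe_set_eq, ncard_fixedPoints ha]

end Count

section LowerBound

variable {X : Type*} [Fintype X] [DecidableEq X] {a f g : X → X}

theorem ker_vmul_of_rnk_eq (h : rnk (vmul a f g) = rnk f) :
    Setoid.ker (vmul a f g) = Setoid.ker f := by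
  rw [rnk_eq_ncard_range, rnk_eq_ncard_range, range_vmul] at h
  have hinj := injOn_of_ncard_image_eq h
  ext x y
  simp only [Setoid.ker_def]
  exact ⟨fun hxy => hinj (mem_range_self x) (mem_range_self y) hxy,
    fun hxy => by simp only [vmul, hxy]⟩

theorem rnk_vmul_eq_of_rnk_eq (hf : f ∈ variantReg a) (hg : g ∈ variantReg a)
    (hrf : rnk f = rnk a) (hrg : rnk g = rnk a) : rnk (vmul a f g) = rnk a := by
  rw [mem_variantReg_iff] at hf hg
  have himage : a '' range f = range a := eq_of_subset_of_ncard_le (image_subset_range a _) <| by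
    rw [hf.2.ncard_image, ← rnk_eq_ncard_range, ← rnk_eq_ncard_range, hrf]
  rw [rnk_eq_ncard_range, range_vmul, image_comp, himage, ← range_comp, hg.1,
    ← rnk_eq_ncard_range, hrg]

theorem exists_mem_ker_eq_of_mem_genBy {U : Set (X → X)} (hU : U ⊆ variantReg a)
    (hf : f ∈ genBy (vmul a) U) (hr : rnk f = rnk a) :
    ∃ u ∈ U, rnk u = rnk a ∧ Setoid.ker u = Setoid.ker f := by
  suffices genBy (vmul a) U ⊆ {f ∈ variantReg a | rnk f = rnk a →
      ∃ u ∈ U, rnk u = rnk a ∧ Setoid.ker u = Setoid.ker f} from (this hf).2 hr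
  refine genBy_subset (fun u hu => ⟨hU hu, fun hr => ⟨u, hu, hr, rfl⟩⟩) ?_
  rintro f ⟨hf, ihf⟩ g ⟨hg, -⟩
  refine ⟨vmul_mem_variantReg hf hg, fun hr => ?_⟩
  have hrf : rnk f = rnk a := le_antisymm (rnk_le_of_mem_variantReg hf) (hr ▸ rnk_vmul_le f g)
  obtain ⟨u, hu, hur, hker⟩ := ihf hrf
  exact ⟨u, hu, hur, hker.trans (ker_vmul_of_rnk_eq (hr.trans hrf.symm)).symm⟩

theorem exists_mem_rnk_ne (ha : ∀ x, a (a x) = a x) (h2 : 2 ≤ rnk a) {U : Set (X → X)}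
    (hU : U ⊆ variantReg a) (hgen : genBy (vmul a) U = variantReg a) :
    ∃ u ∈ U, rnk u ≠ rnk a := by
  by_contra! hall
  obtain ⟨y, hy⟩ : (fixedPoints a).Nonempty :=
    nonempty_of_ncard_ne_zero (by rw [ncard_fixedPoints ha]; omega)
  have : Nonempty X := ⟨y⟩
  have hc : (fun _ => y) ∈ localMonoid a := ⟨fun _ => rfl, fun _ => hy⟩
  have hsub : genBy (vmul a) U ⊆ {f ∈ variantReg a | rnk f = rnk a} :=
    genBy_subset (fun u hu => ⟨hU hu, hall u hu⟩) fun f hf g hg =>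
      ⟨vmul_mem_variantReg hf.1 hg.1, rnk_vmul_eq_of_rnk_eq hf.1 hg.1 hf.2 hg.2⟩
  have := (hsub (hgen ▸ localMonoid_subset_variantReg hc)).2
  rw [rnk_eq_ncard_range, range_const, ncard_singleton] at this
  omega

theorem ncard_retractions_lt_ncard (ha : ∀ x, a (a x) = a x) (h2 : 2 ≤ rnk a)
    {U : Set (X → X)} (hU : U ⊆ variantReg a) (hgen : genBy (vmul a) U = variantReg a) :
    (retractions a).ncard < U.ncard := by
  set Utop := {u ∈ U | rnk u = rnk a}
  have hker : Setoid.ker '' retractions a ⊆ Setoid.ker '' Utop := by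
    rintro _ ⟨τ, hτ, rfl⟩
    obtain ⟨u, hu, hur, hker⟩ := exists_mem_ker_eq_of_mem_genBy hU
      (hgen ▸ mem_variantReg_of_mem_retractions ha hτ) (rnk_of_mem_retractions ha hτ)
    exact ⟨u, ⟨hu, hur⟩, hker⟩
  have hlt : Utop ⊂ U := by
    refine (sep_subset _ _).ssubset_of_ne fun h => ?_
    obtain ⟨u, hu, hur⟩ := exists_mem_rnk_ne ha h2 hU hgen
    exact hur ((Set.ext_iff.1 h u).2 hu).2
  calc (retractions a).ncard = (Setoid.ker '' retractions a).ncard :=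
        injOn_ker_retractions.ncard_image.symm
    _ ≤ (Setoid.ker '' Utop).ncard := ncard_le_ncard hker ((toFinite Utop).image _)
    _ ≤ Utop.ncard := ncard_image_le
    _ < U.ncard := ncard_lt_ncard hlt

end LowerBound

theorem exists_genBy_eq_variantReg {X : Type*} [Fintype X] [DecidableEq X] {a : X → X}
    (ha : ∀ x, a (a x) = a x) (h2 : 2 ≤ rnk a) (hlt : rnk a < Fintype.card X) :
    ∃ U ⊆ variantReg a, U.ncard ≤ (retractions a).ncard + 1 ∧
      genBy (vmul a) U = variantReg a := by
  obtain ⟨p₀, q₀, hp₀, hq₀, hpq₀⟩ := (one_lt_ncard_iff (toFinite (fixedPoints a))).1 <| by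
    rw [ncard_fixedPoints ha]
    omega
  have : Nonempty (fixedPoints a) := ⟨⟨p₀, hp₀⟩⟩
  have : Nonempty (sections a) := ⟨selfSection ha⟩
  obtain ⟨s, hs⟩ := exists_surjective_of_card_le (α := retractions a) (β := sections a) <| by
    simpa only [Nat.card_coe_set_eq] using ncard_sections_le ha h2
  obtain ⟨t, ht⟩ := exists_surjective_of_card_le (α := retractions a) (β := fixedPoints a) <| by
    rw [Nat.card_coe_set_eq, Nat.card_coe_set_eq, ncard_retractions ha, ncard_fixedPoints ha]
    exact Nat.le_self_pow (by omega) _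
  let gens : retractions a → X → X := fun τ => reesMap a (τ, s τ, swap ⟨p₀, hp₀⟩ (t τ))
  let U := range gens ∪ {collapse a ⟨p₀, hp₀⟩ ⟨q₀, hq₀⟩}
  have hUreg : U ⊆ variantReg a :=
    union_subset (range_subset_iff.2 fun _ => reesMap_mem_variantReg _) <|
      singleton_subset_iff.2 (localMonoid_subset_variantReg (collapse_mem_localMonoid ha _ _))
  have hD : range (reesMap a) ⊆ genBy (vmul a) U :=
    (range_reesMap_subset_genBy hs ht _).trans (genBy_mono subset_union_left)
  refine ⟨U, hUreg, ?_, (genBy_subset hUreg fun _ hf _ hg => vmul_mem_variantReg hf hg).antisymm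
    (variantReg_subset_genBy ha hD (fun h => hpq₀ (congrArg Subtype.val h))
      (subset_genBy (mem_union_right _ rfl)))⟩
  calc U.ncard ≤ (range gens).ncard + 1 := (ncard_union_le _ _).trans_eq (by rw [ncard_singleton])
    _ ≤ (retractions a).ncard + 1 := by
      rw [← image_univ, ← Nat.card_coe_set_eq (retractions a), ← ncard_univ]
      exact Nat.add_le_add_right ncard_image_le 1

end VariantRank

open VariantRank in
theorem stmt_16 {X : Type*} [Fintype X] [DecidableEq X]
    (n : ℕ) (hn : n = Fintype.card X)
    (a : X → X) (ha : tmul a a = a) (r : ℕ) (hr : rnk a = r)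
    (h1r : 1 < r) (hrn : r < n)
    (P : Set (X → X))
    (hP : P = {f : X → X | rnk (tmul (tmul a f) a) = rnk f}) :
    -- rank(Reg(T_X^a)) = r^(n-r) + 1
    sInf {k : ℕ | ∃ U : Set (X → X),
        U ⊆ P ∧ U.Finite ∧ U.ncard = k ∧ genBy (vmul a) U = P} =
      r ^ (n - r) + 1 := by
  subst hn hr hP
  have ha : ∀ x, a (a x) = a x := congrFun ha
  obtain ⟨U₀, hU₀, hcard, hgen₀⟩ := exists_genBy_eq_variantReg ha h1r hrn
  rw [ncard_retractions ha] at hcard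
  have hmem : U₀.ncard ∈ {k : ℕ | ∃ U : Set (X → X), U ⊆ variantReg a ∧ U.Finite ∧
      U.ncard = k ∧ genBy (vmul a) U = variantReg a} := ⟨U₀, hU₀, toFinite _, rfl, hgen₀⟩
  refine le_antisymm ((Nat.sInf_le hmem).trans hcard) (le_csInf ⟨_, hmem⟩ ?_)
  rintro _ ⟨U, hU, -, rfl, hgen⟩
  have := ncard_retractions_lt_ncard ha h1r hU hgen
  rwa [ncard_retractions ha] at this
end
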